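/- arXiv:1903.06955 — 5 statements merged into one kernel-verified Lean document; each statement's English description precedes it below -/
import Mathlib

section
/- Let X ⊆ ℝ^d be a nonempty closed set with reach at least τ > 0 (i.e., every z ∈ ℝ^d with infDist(z, X) < τ has a unique nearest point in X). Let 𝒳 ⊆ ℝ^d be a set of points and let r : 𝒳 → ℝ assign to each x ∈ 𝒳 a radius r_x > 0 with r_x ≤ √(τ² + (τ − d_X(x))²), where d_X(x) := infDist(x, X). Then for every nonempty subcollection I ⊆ 𝒳, if the set S := X ∩ ⋂_{x ∈ I} {y ∈ ℝ^d : ‖y − x‖ < r_x} is nonempty, then S, equipped with the subspace topology, is a contractible topological space. -/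
open Metric Set
open scoped RealInnerProductSpace

namespace Stmt0Aux

variable {d : ℕ}

local notation "E" => EuclideanSpace ℝ (Fin d)

/-- Basic nearest-point inequality (no uniqueness needed). -/
theorem bineq {X : Set E} {π : E → E}
    (hπX : ∀ z, π z ∈ X) (hπd : ∀ z, dist z (π z) = infDist z X)
    (z p : E) (hp : p ∈ X) :
    ⟪z - π z, p - π z⟫ ≤ ‖p - π z‖ ^ 2 / 2 := by
  have h1 : dist z (π z) ≤ dist z p := by
    rw [hπd]; exact infDist_le_dist_of_mem hp
  have h2 : ‖z - π z‖ ≤ ‖z - p‖ := by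
    rwa [dist_eq_norm, dist_eq_norm] at h1
  have h3 : ‖z - p‖ ^ 2 = ‖z - π z‖ ^ 2 - 2 * ⟪z - π z, p - π z⟫ + ‖p - π z‖ ^ 2 := by
    have : z - p = (z - π z) - (p - π z) := by abel
    rw [this, norm_sub_sq_real]
  nlinarith [norm_nonneg (z - π z), norm_nonneg (z - p)]

/-- Continuity of the projection on the tube. -/
theorem proj_cont {X : Set E} (hXcl : IsClosed X) {τ : ℝ} {π : E → E}
    (hπX : ∀ z, π z ∈ X) (hπd : ∀ z, dist z (π z) = infDist z X)
    (huniq : ∀ z, infDist z X < τ → ∀ p ∈ X, dist z p = infDist z X → p = π z) :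
    ContinuousOn π {z : E | infDist z X < τ} := by
  intro z₀ hz₀
  rw [Metric.continuousWithinAt_iff]
  by_contra hcon
  push_neg at hcon
  obtain ⟨ε, hε, hδ⟩ := hcon
  have hseq : ∀ n : ℕ, ∃ z, z ∈ {z : E | infDist z X < τ} ∧
      dist z z₀ < 1 / (n + 1) ∧ ε ≤ dist (π z) (π z₀) := by
    intro n
    obtain ⟨z, hz1, hz2, hz3⟩ := hδ (1 / (n + 1)) (by positivity)
    exact ⟨z, hz1, hz2, hz3⟩
  choose zs hzs1 hzs2 hzs3 using hseq
  have hztend : Filter.Tendsto zs Filter.atTop (nhds z₀) := by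
    rw [tendsto_iff_dist_tendsto_zero]
    refine squeeze_zero (fun n => dist_nonneg) (fun n => (hzs2 n).le) ?_
    exact tendsto_one_div_add_atTop_nhds_zero_nat
  have hbdd : ∀ n, π (zs n) ∈ Metric.closedBall z₀ (infDist z₀ X + 2) := by
    intro n
    rw [Metric.mem_closedBall, dist_comm]
    calc dist z₀ (π (zs n)) ≤ dist z₀ (zs n) + dist (zs n) (π (zs n)) := dist_triangle _ _ _
      _ = dist z₀ (zs n) + infDist (zs n) X := by rw [hπd]
      _ ≤ dist z₀ (zs n) + (infDist z₀ X + dist (zs n) z₀) :=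
          add_le_add le_rfl (infDist_le_infDist_add_dist)
      _ ≤ 1 + (infDist z₀ X + 1) := by
          have h1 : dist z₀ (zs n) ≤ 1 := by
            rw [dist_comm]
            refine le_trans (hzs2 n).le ?_
            rw [div_le_one (by positivity)]
            linarith [Nat.cast_nonneg (α := ℝ) n]
          have h2 : dist (zs n) z₀ ≤ 1 := by rw [dist_comm] at h1; exact h1
          linarith
      _ = infDist z₀ X + 2 := by ring
  obtain ⟨qq, hqqmem, φ, hφ, hφtend⟩ :=
    (isCompact_closedBall z₀ (infDist z₀ X + 2)).tendsto_subseq hbdd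
  have hzφ : Filter.Tendsto (fun n => zs (φ n)) Filter.atTop (nhds z₀) :=
    hztend.comp hφ.tendsto_atTop
  have hqqX : qq ∈ X := hXcl.mem_of_tendsto hφtend (Filter.Eventually.of_forall fun n => hπX _)
  have hdist : dist z₀ qq = infDist z₀ X := by
    have h1 : Filter.Tendsto (fun n => dist (zs (φ n)) (π (zs (φ n)))) Filter.atTop
        (nhds (dist z₀ qq)) := hzφ.dist hφtend
    have h2 : Filter.Tendsto (fun n => dist (zs (φ n)) (π (zs (φ n)))) Filter.atTop
        (nhds (infDist z₀ X)) := by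
      have : ∀ n, dist (zs (φ n)) (π (zs (φ n))) = infDist (zs (φ n)) X := fun n => hπd _
      simp only [this]
      exact ((continuous_infDist_pt X).continuousAt.tendsto.comp hzφ)
    exact tendsto_nhds_unique h1 h2
  have hqqeq : qq = π z₀ := huniq z₀ hz₀ qq hqqX hdist
  have hlim : Filter.Tendsto (fun n => dist (π (zs (φ n))) (π z₀)) Filter.atTop
      (nhds 0) := by
    have := hφtend.dist (tendsto_const_nhds (x := π z₀))
    rw [hqqeq] at this
    simpa using this
  have : ε ≤ 0 := ge_of_tendsto hlim (Filter.Eventually.of_forall fun n => hzs3 _)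
  linarith

set_option maxHeartbeats 3000000 in
/-- Normal extension along the chain (key reach lemma). -/
theorem normal_ext {X : Set E} (hXcl : IsClosed X) {τ : ℝ} (hτ : 0 < τ) {π : E → E}
    (hπX : ∀ z, π z ∈ X) (hπd : ∀ z, dist z (π z) = infDist z X)
    (hπcont : ContinuousOn π {z : E | infDist z X < τ})
    (z₀ : E) (hρ0 : 0 < infDist z₀ X) (hρτ : infDist z₀ X < τ)
    (β : ℝ) (hβ1 : infDist z₀ X ≤ β) (hβ2 : β < τ) :
    infDist (π z₀ + (β / infDist z₀ X) • (z₀ - π z₀)) X = β := by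
  set ρ := infDist z₀ X with hρ
  set a := π z₀ with ha
  set n := z₀ - a with hn
  have hda : dist z₀ a = ρ := hπd z₀
  have hnn : ‖n‖ = ρ := by rw [hn, ← dist_eq_norm, hda]
  rcases eq_or_lt_of_le hβ1 with hβeq | hβlt
  · -- trivial case β = ρ
    have : a + (β / ρ) • n = z₀ := by
      rw [← hβeq, div_self (ne_of_gt hρ0), one_smul, hn]
      abel
    rw [this, ← hβeq]
  · -- main case ρ < β
    have hβpos : 0 < β := lt_trans hρ0 hβlt
    -- STEP A: approximate chains
    have stepA : ∀ ε : ℝ, 0 < ε → ∃ w : E, dist w z₀ ≤ β - ρ ∧ β - ε ≤ infDist w X := by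
      intro ε hε
      -- compact tube piece
      set C' : Set E := {w : E | dist w a ≤ β ∧ infDist w X ≤ β} with hC'
      have hC'sub : C' ⊆ {z : E | infDist z X < τ} := fun w hw => lt_of_le_of_lt hw.2 hβ2
      have hC'closed : IsClosed C' := by
        refine IsClosed.inter ?_ ?_
        · exact isClosed_le (continuous_id.dist continuous_const) continuous_const
        · exact isClosed_le (continuous_infDist_pt X) continuous_const
      have hC'cpt : IsCompact C' := by
        refine (isCompact_closedBall a β).of_isClosed_subset hC'closed ?_
        intro w hw
        exact Metric.mem_closedBall.2 hw.1
      have hπuc := uniformContinuousOn_iff.1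
        (hC'cpt.uniformContinuousOn_of_continuous (hπcont.mono hC'sub))
      -- choose modulus target ω
      set ω := min ρ (Real.sqrt (ε * ρ ^ 2 / (β - ρ + 1))) with hω
      have hω0 : 0 < ω := by
        refine lt_min hρ0 ?_
        apply Real.sqrt_pos.2
        have : 0 < β - ρ + 1 := by linarith
        positivity
      have hωρ : ω ≤ ρ := min_le_left _ _
      have hω2 : (β - ρ) * ω ^ 2 / ρ ^ 2 ≤ ε := by
        have h1 : ω ^ 2 ≤ ε * ρ ^ 2 / (β - ρ + 1) := by
          have h2 : ω ≤ Real.sqrt (ε * ρ ^ 2 / (β - ρ + 1)) := min_le_right _ _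
          have h3 : 0 ≤ ε * ρ ^ 2 / (β - ρ + 1) := by
            have : 0 < β - ρ + 1 := by linarith
            positivity
          have h4 := pow_le_pow_left₀ hω0.le h2 2
          rwa [Real.sq_sqrt h3] at h4
        rw [div_le_iff₀ (by positivity)]
        have h4 : 0 < β - ρ + 1 := by linarith
        have h5 : (β - ρ) * ω ^ 2 ≤ (β - ρ) * (ε * ρ ^ 2 / (β - ρ + 1)) :=
          mul_le_mul_of_nonneg_left h1 (by linarith)
        have h6 : (β - ρ) * (ε * ρ ^ 2 / (β - ρ + 1)) ≤ ε * ρ ^ 2 := by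
          rw [mul_div_assoc']
          rw [div_le_iff₀ h4]
          have t := mul_nonneg hε.le (sq_nonneg ρ)
          nlinarith only [t]
        linarith only [h5, h6]
      obtain ⟨δ, hδ0, hδ⟩ := hπuc ω hω0
      -- choose the number of steps
      obtain ⟨N, hN⟩ := exists_nat_gt ((β - ρ) / min δ ρ)
      have hminpos : 0 < min δ ρ := lt_min hδ0 hρ0
      have hNpos : 0 < (N:ℝ) := lt_trans (div_pos (by linarith) hminpos) hN
      set h := (β - ρ) / N with hh
      have hh0 : 0 < h := by
        rw [hh]; exact div_pos (by linarith) hNpos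
      have hkeyN := (div_lt_iff₀ hminpos).1 hN
      have hhlt : h < min δ ρ := by
        rw [hh, div_lt_iff₀ hNpos]
        linarith only [hkeyN]
      have hhδ : h < δ := lt_of_lt_of_le hhlt (min_le_left _ _)
      have hhρ : h ≤ ρ := le_of_lt (lt_of_lt_of_le hhlt (min_le_right _ _))
      have hNh : (N:ℝ) * h = β - ρ := by
        rw [hh]; field_simp
      -- the step map
      set F : E → E := fun w => w + (h / infDist w X) • (w - π w) with hF
      set q := ω ^ 2 / ρ ^ 2 with hq
      have hq0 : 0 ≤ q := by positivity
      have hq1 : q ≤ 1 := by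
        rw [hq, div_le_one (by positivity)]
        exact pow_le_pow_left₀ hω0.le hωρ 2
      have hdef : 0 ≤ h - h * q := by
        have t := mul_nonneg hh0.le (sub_nonneg.2 hq1)
        linarith only [t]
      -- main induction
      have main : ∀ k : ℕ, k ≤ N →
          dist (F^[k] z₀) z₀ ≤ k * h ∧ infDist (F^[k] z₀) X ≤ ρ + k * h ∧
          ρ + k * (h - h * q) ≤ infDist (F^[k] z₀) X := by
        intro k
        induction k with
        | zero => intro _; simp [hρ]
        | succ k ih =>
          intro hk1
          obtain ⟨i1, i2, i3⟩ := ih (le_of_lt (Nat.lt_of_succ_le hk1))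
          set w := F^[k] z₀ with hw
          set s := infDist w X with hsdef
          have hkN : (k:ℝ) ≤ (N:ℝ) - 1 := by
            have : (k:ℝ) + 1 ≤ (N:ℝ) := by exact_mod_cast hk1
            linarith
          have hs_lb : ρ ≤ s := by
            have t : 0 ≤ (k:ℝ) * (h - h * q) := mul_nonneg (Nat.cast_nonneg k) hdef
            linarith only [i3, t]
          have hs_pos : 0 < s := lt_of_lt_of_le hρ0 hs_lb
          have hNh1 : ((N:ℝ) - 1) * h = β - ρ - h := by
            rw [sub_mul, one_mul, hNh]
          have hkh : (k:ℝ) * h ≤ ((N:ℝ) - 1) * h := mul_le_mul_of_nonneg_right hkN hh0.le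
          have hs_ub : s ≤ β - h := by linarith only [i2, hkh, hNh1]
          have hwa : dist w a ≤ ρ + k * h := by
            calc dist w a ≤ dist w z₀ + dist z₀ a := dist_triangle _ _ _
              _ ≤ k * h + ρ := by rw [hda]; linarith only [i1]
              _ = ρ + k * h := by ring
          have hwC' : w ∈ C' := by
            constructor
            · show dist w a ≤ β
              linarith only [hwa, hkh, hNh1, hh0]
            · show infDist w X ≤ β
              linarith only [hs_ub, hh0]
          -- the new point
          have hit : F^[k+1] z₀ = F w := by
            rw [Function.iterate_succ_apply']
          have hFw : F w = w + (h / s) • (w - π w) := by rw [hF]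
          have hsnorm : ‖w - π w‖ = s := by rw [← dist_eq_norm, hπd]
          have hstep : dist (F w) w = h := by
            rw [hFw, dist_eq_norm]
            have : w + (h / s) • (w - π w) - w = (h / s) • (w - π w) := by abel
            rw [this, norm_smul, Real.norm_eq_abs, abs_of_nonneg (by positivity), hsnorm]
            field_simp
          have hs'ub : infDist (F w) X ≤ s + h := by
            calc infDist (F w) X ≤ infDist w X + dist (F w) w := infDist_le_infDist_add_dist
              _ = s + h := by rw [hstep]
          have hFwC' : F w ∈ C' := by
            constructor
            · show dist (F w) a ≤ β
              calc dist (F w) a ≤ dist (F w) w + dist w a := dist_triangle _ _ _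
                _ ≤ h + (ρ + k * h) := by rw [hstep]; linarith only [hwa]
                _ ≤ β := by
                    have t : ((k:ℝ) + 1) * h ≤ (N:ℝ) * h := by
                      apply mul_le_mul_of_nonneg_right _ hh0.le
                      exact_mod_cast hk1
                    linarith only [t, hNh]
            · show infDist (F w) X ≤ β
              linarith only [hs'ub, hs_ub]
          -- modulus bound
          have hmod : dist (π (F w)) (π w) < ω := hδ (F w) hFwC' w hwC' (by rw [hstep]; exact hhδ)
          -- lower bound on the new distance
          set p' := π (F w) with hp'
          have hbq := bineq hπX hπd w p' (hπX (F w))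
          have hlow : s ≤ ‖w - p'‖ := by
            rw [← dist_eq_norm, hsdef]
            exact infDist_le_dist_of_mem (hπX (F w))
          have hdecomp : F w - p' = (w - p') + (h / s) • (w - π w) := by
            rw [hFw]; abel
          have hs'val : infDist (F w) X = ‖F w - p'‖ := by
            rw [← dist_eq_norm, hπd]
          have hip : ⟪w - π w, w - p'⟫ ≥ s ^ 2 - ω ^ 2 / 2 := by
            have hid : w - p' = (w - π w) + (π w - p') := by abel
            have e1 : ⟪w - π w, w - p'⟫
                = ‖w - π w‖ ^ 2 + ⟪w - π w, π w - p'⟫ := by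
              rw [hid, inner_add_right, real_inner_self_eq_norm_sq]
            have e2 : ⟪w - π w, π w - p'⟫ = - ⟪w - π w, p' - π w⟫ := by
              rw [← inner_neg_right]; congr 1; abel
            have e3 : ‖p' - π w‖ ≤ ω := by
              rw [← dist_eq_norm]; exact hmod.le
            have e4 : ⟪w - π w, p' - π w⟫ ≤ ω ^ 2 / 2 := by
              refine le_trans hbq ?_
              have t := pow_le_pow_left₀ (norm_nonneg (p' - π w)) e3 2
              linarith only [t]
            rw [e1, e2, hsnorm]
            linarith only [e4]
          have hexp : ‖F w - p'‖ ^ 2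
              = ‖w - p'‖ ^ 2 + 2 * ((h / s) * ⟪w - π w, w - p'⟫) + (h / s) ^ 2 * s ^ 2 := by
            rw [hdecomp, norm_add_sq_real, real_inner_smul_right, norm_smul, Real.norm_eq_abs,
              hsnorm, mul_pow, sq_abs, real_inner_comm]
          have hfrac : (h / s) ^ 2 * s ^ 2 = h ^ 2 := by
            field_simp
          have hsq : (s + h) ^ 2 - h * ω ^ 2 / s ≤ ‖F w - p'‖ ^ 2 := by
            rw [hexp, hfrac]
            have h1 : (h / s) * (s ^ 2 - ω ^ 2 / 2) ≤ (h / s) * ⟪w - π w, w - p'⟫ :=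
              mul_le_mul_of_nonneg_left hip (by positivity)
            have h2 : (h / s) * (s ^ 2 - ω ^ 2 / 2) = h * s - h * ω ^ 2 / s / 2 := by
              field_simp
            have h3 : s ^ 2 ≤ ‖w - p'‖ ^ 2 := pow_le_pow_left₀ hs_pos.le hlow 2
            nlinarith only [h1, h2, h3]
          have hdivmono : h * ω ^ 2 / s ≤ h * ω ^ 2 / ρ :=
            div_le_div_of_nonneg_left (by positivity) hρ0 hs_lb
          have hsq2 : (s + h) ^ 2 - h * ω ^ 2 / ρ ≤ ‖F w - p'‖ ^ 2 := by
            linarith only [hsq, hdivmono]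
          -- numeric conclusion of the step
          have hqrel : h * ω ^ 2 / ρ = h * q * ρ := by
            rw [hq]
            field_simp
            try ring
          have hAnn : 0 ≤ s + h - h * q := by linarith only [hdef, hs_lb, hρ0]
          have hstep_low : s + h - h * q ≤ ‖F w - p'‖ := by
            have hhq : h * q ≤ ρ := by
              have t := mul_nonneg hh0.le (sub_nonneg.2 hq1)
              linarith only [t, hhρ]
            have key : h * q * ρ ≤ 2 * (s + h) * (h * q) - (h * q) ^ 2 := by
              have t1 := mul_nonneg (mul_nonneg hh0.le hq0) (sub_nonneg.2 hs_lb)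
              have t2 := mul_nonneg (mul_nonneg hh0.le hq0) hh0.le
              have t3 := mul_nonneg (mul_nonneg hh0.le hq0) (sub_nonneg.2 hhq)
              nlinarith only [t1, t2, t3]
            have hgoal2 : (s + h - h * q) ^ 2 ≤ ‖F w - p'‖ ^ 2 := by
              rw [hqrel] at hsq2
              nlinarith only [hsq2, key]
            nlinarith only [hgoal2, norm_nonneg (F w - p'), hAnn]
          refine ⟨?_, ?_, ?_⟩
          · rw [hit]
            calc dist (F w) z₀ ≤ dist (F w) w + dist w z₀ := dist_triangle _ _ _
              _ ≤ h + k * h := by rw [hstep]; linarith only [i1]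
              _ = (k + 1 : ℕ) * h := by push_cast; ring
          · rw [hit]
            calc infDist (F w) X ≤ s + h := hs'ub
              _ ≤ ρ + (k + 1 : ℕ) * h := by push_cast; linarith only [i2]
          · rw [hit, hs'val]
            calc ρ + ((k + 1 : ℕ) : ℝ) * (h - h * q)
                = (ρ + k * (h - h * q)) + (h - h * q) := by push_cast; ring
              _ ≤ s + (h - h * q) := by linarith only [i3]
              _ ≤ ‖F w - p'‖ := by linarith only [hstep_low]
      obtain ⟨j1, j2, j3⟩ := main N (le_refl N)
      refine ⟨F^[N] z₀, ?_, ?_⟩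
      · rw [hNh] at j1; exact j1
      · have e : ρ + (N:ℝ) * (h - h * q) = β - (β - ρ) * q := by
          linear_combination (1 - q) * hNh
        rw [e] at j3
        have e2 : (β - ρ) * q ≤ ε := by
          rw [hq, ← mul_div_assoc]
          exact hω2
        linarith only [j3, e2]
    -- STEP B: compactness
    set Z : ℕ → Set E := fun j => {w : E | dist w z₀ ≤ β - ρ ∧ β - 1 / (j + 1) ≤ infDist w X}
      with hZ
    have hZclosed : ∀ j, IsClosed (Z j) := by
      intro j
      refine IsClosed.inter ?_ ?_
      · exact isClosed_le (continuous_id.dist continuous_const) continuous_const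
      · exact isClosed_le continuous_const (continuous_infDist_pt X)
    have hZne : ∀ j, (Z j).Nonempty := by
      intro j
      obtain ⟨w, hw1, hw2⟩ := stepA (1 / (j + 1)) (by positivity)
      exact ⟨w, hw1, hw2⟩
    have hZnest : ∀ j, Z (j + 1) ⊆ Z j := by
      intro j w hw
      refine ⟨hw.1, le_trans ?_ hw.2⟩
      have h1 : (1:ℝ) / (j + 1 + 1) ≤ 1 / (j + 1) := by
        apply div_le_div_of_nonneg_left one_pos.le (by positivity)
        push_cast; linarith
      push_cast at h1 ⊢
      linarith
    have hZ0cpt : IsCompact (Z 0) := by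
      refine (isCompact_closedBall z₀ (β - ρ)).of_isClosed_subset (hZclosed 0) ?_
      intro w hw
      exact Metric.mem_closedBall.2 hw.1
    obtain ⟨zs, hzs⟩ := IsCompact.nonempty_iInter_of_sequence_nonempty_isCompact_isClosed
      Z hZnest hZne hZ0cpt hZclosed
    simp only [Set.mem_iInter] at hzs
    have hzs1 : dist zs z₀ ≤ β - ρ := (hzs 0).1
    have hzs2 : β ≤ infDist zs X := by
      have htd : Filter.Tendsto (fun j : ℕ => β - 1 / (j + 1)) Filter.atTop (nhds β) := by
        have := tendsto_one_div_add_atTop_nhds_zero_nat (𝕜 := ℝ)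
        have h2 := Filter.Tendsto.sub (tendsto_const_nhds (x := β)) this
        simpa using h2
      exact le_of_tendsto htd (Filter.Eventually.of_forall fun j => (hzs j).2)
    -- STEP C: identify the point
    have hzsa : dist zs a ≤ β := by
      calc dist zs a ≤ dist zs z₀ + dist z₀ a := dist_triangle _ _ _
        _ ≤ (β - ρ) + ρ := by rw [hda]; linarith
        _ = β := by ring
    have hinf_le : infDist zs X ≤ dist zs a := infDist_le_dist_of_mem (hπX z₀)
    have hdza : dist zs a = β := le_antisymm hzsa (le_trans hzs2 hinf_le)
    have hinfzs : infDist zs X = β := le_antisymm (le_trans hinf_le hzsa) hzs2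
    have hdzz : dist zs z₀ = β - ρ := by
      have h1 : β ≤ dist zs z₀ + ρ := by
        calc β = dist zs a := hdza.symm
          _ ≤ dist zs z₀ + dist z₀ a := dist_triangle _ _ _
          _ = dist zs z₀ + ρ := by rw [hda]
      linarith
    have hwbtw : Wbtw ℝ zs z₀ a := by
      rw [← dist_add_dist_eq_iff, hdzz, hda, hdza]
      ring
    -- extract the scalar relation
    obtain ⟨u, v, hu0, hv0, huv, heq⟩ := hwbtw.mem_segment
    have hseg : z₀ - a = u • (zs - a) := by
      have hv : v = 1 - u := by linarith
      rw [← heq, hv]; module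
    have hnormβ : ‖zs - a‖ = β := by rw [← dist_eq_norm, hdza]
    have hρuβ : ρ = u * β := by
      rw [← hnn, hn, hseg, norm_smul, Real.norm_eq_abs, abs_of_nonneg hu0, hnormβ]
    have huval : u = ρ / β := by
      rw [hρuβ]; field_simp
    have hfinal : a + (β / ρ) • n = zs := by
      rw [hn, hseg, smul_smul, huval]
      have : β / ρ * (ρ / β) = 1 := by
        field_simp
      rw [this, one_smul]
      abel
    rw [hfinal, hinfzs]

/-- Federer's tangent-ball property: the open ball of radius `τ` tangent at `π z`
in direction of `z` misses `X`. -/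
theorem tangent_ball {X : Set E} (hXcl : IsClosed X) {τ : ℝ} (hτ : 0 < τ) {π : E → E}
    (hπX : ∀ z, π z ∈ X) (hπd : ∀ z, dist z (π z) = infDist z X)
    (hπcont : ContinuousOn π {z : E | infDist z X < τ})
    (z : E) (hs0 : 0 < infDist z X) (hsτ : infDist z X < τ)
    (p : E) (hp : p ∈ X) :
    τ ≤ ‖p - (π z + (τ / infDist z X) • (z - π z))‖ := by
  set s := infDist z X with hs
  have hβall : ∀ β ∈ Ico s τ, β ≤ ‖p - (π z + (β / s) • (z - π z))‖ := by
    intro β hβ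
    have hne := normal_ext hXcl hτ hπX hπd hπcont z hs0 hsτ β hβ.1 hβ.2
    calc β = infDist (π z + (β / s) • (z - π z)) X := hne.symm
      _ ≤ dist (π z + (β / s) • (z - π z)) p := infDist_le_dist_of_mem hp
      _ = ‖p - (π z + (β / s) • (z - π z))‖ := by rw [dist_eq_norm, norm_sub_rev]
  have hcontf : Continuous fun β : ℝ => ‖p - (π z + (β / s) • (z - π z))‖ - β := by
    refine Continuous.sub ?_ continuous_id
    refine Continuous.norm ?_
    refine Continuous.sub continuous_const ?_
    exact continuous_const.add ((continuous_id.div_const s).smul continuous_const)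
  have htend : Filter.Tendsto (fun β : ℝ => ‖p - (π z + (β / s) • (z - π z))‖ - β)
      (nhdsWithin τ (Iio τ)) (nhds (‖p - (π z + (τ / s) • (z - π z))‖ - τ)) :=
    (hcontf.tendsto τ).mono_left nhdsWithin_le_nhds
  have hev : ∀ᶠ β in nhdsWithin τ (Iio τ),
      0 ≤ ‖p - (π z + (β / s) • (z - π z))‖ - β := by
    filter_upwards [Ioo_mem_nhdsLT_of_mem (⟨hsτ, le_refl τ⟩ : τ ∈ Ioc s τ)] with β hβ
    have := hβall β ⟨hβ.1.le, hβ.2⟩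
    linarith
  have := ge_of_tendsto htend hev
  linarith

/-- KEY1: chord bound from the two tangent-ball inequalities. -/
theorem key1 {X : Set E} (hXcl : IsClosed X) {τ : ℝ} (hτ : 0 < τ) {π : E → E}
    (hπX : ∀ z, π z ∈ X) (hπd : ∀ z, dist z (π z) = infDist z X)
    (hπcont : ContinuousOn π {z : E | infDist z X < τ})
    (y a : E) (hy : y ∈ X) (ha : a ∈ X) (t : ℝ) (ht0 : 0 ≤ t) (ht1 : t ≤ 1)
    (hsτ : infDist (y + t • (a - y)) X < τ) :
    infDist (y + t • (a - y)) X * (2 * τ - infDist (y + t • (a - y)) X)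
      ≤ t * (1 - t) * ‖a - y‖ ^ 2 := by
  set m := y + t • (a - y) with hm
  set s := infDist m X with hs
  have hs0 : 0 ≤ s := infDist_nonneg
  rcases eq_or_lt_of_le hs0 with hseq | hslt
  · rw [← hseq]
    have : 0 ≤ t * (1 - t) * ‖a - y‖ ^ 2 := by
      have := mul_nonneg ht0 (sub_nonneg.2 ht1)
      positivity
    linarith
  · -- s > 0 : use the tangent ball at m
    set n := m - π m with hn
    have hnn : ‖n‖ = s := by
      rw [hn, ← dist_eq_norm, hπd]
    have hTy := tangent_ball hXcl hτ hπX hπd hπcont m hslt hsτ y hy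
    have hTa := tangent_ball hXcl hτ hπX hπd hπcont m hslt hsτ a ha
    have hsne : s ≠ 0 := ne_of_gt hslt
    -- decompositions
    have hyc : y - (π m + (τ / s) • (m - π m)) = (-t) • (a - y) + (1 - τ / s) • n := by
      rw [hn, hm]; module
    have hac : a - (π m + (τ / s) • (m - π m)) = (1 - t) • (a - y) + (1 - τ / s) • n := by
      rw [hn, hm]; module
    set B := ‖a - y‖ ^ 2 with hB
    set G := ⟪a - y, n⟫ with hG
    have hcoef : (1 - τ / s) ^ 2 * s ^ 2 = (s - τ) ^ 2 := by
      field_simp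
    have ey : ‖y - (π m + (τ / s) • (m - π m))‖ ^ 2
        = t ^ 2 * B + 2 * ((-t) * (1 - τ / s) * G) + (s - τ) ^ 2 := by
      rw [hyc, norm_add_sq_real, real_inner_smul_left, real_inner_smul_right, norm_smul,
        norm_smul, Real.norm_eq_abs, Real.norm_eq_abs, hnn, mul_pow, mul_pow, sq_abs,
        sq_abs, hcoef]
      rw [hB, hG]; ring
    have ea : ‖a - (π m + (τ / s) • (m - π m))‖ ^ 2
        = (1 - t) ^ 2 * B + 2 * ((1 - t) * (1 - τ / s) * G) + (s - τ) ^ 2 := by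
      rw [hac, norm_add_sq_real, real_inner_smul_left, real_inner_smul_right, norm_smul,
        norm_smul, Real.norm_eq_abs, Real.norm_eq_abs, hnn, mul_pow, mul_pow, sq_abs,
        sq_abs, hcoef]
      rw [hB, hG]; ring
    have iy : τ ^ 2 ≤ t ^ 2 * B + 2 * ((-t) * (1 - τ / s) * G) + (s - τ) ^ 2 := by
      rw [← ey]; nlinarith [hTy, norm_nonneg (y - (π m + (τ / s) • (m - π m)))]
    have ia : τ ^ 2 ≤ (1 - t) ^ 2 * B + 2 * ((1 - t) * (1 - τ / s) * G) + (s - τ) ^ 2 := by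
      rw [← ea]; nlinarith [hTa, norm_nonneg (a - (π m + (τ / s) • (m - π m)))]
    have comb := add_le_add (mul_le_mul_of_nonneg_left iy (sub_nonneg.2 ht1))
      (mul_le_mul_of_nonneg_left ia ht0)
    ring_nf at comb ⊢
    linarith [comb]

/-- KEY2: convexity identity for the ball constraint. -/
theorem key2 (y a x : E) (t : ℝ) (ht0 : 0 ≤ t) (ht1 : t ≤ 1) {ρ : ℝ}
    (hy : ‖y - x‖ ≤ ρ) (ha : ‖a - x‖ ≤ ρ) :
    t * (1 - t) * ‖a - y‖ ^ 2 + ‖x - (y + t • (a - y))‖ ^ 2 ≤ ρ ^ 2 := by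
  have hρ0 : 0 ≤ ρ := le_trans (norm_nonneg _) hy
  have hy2 : ‖x - y‖ ^ 2 ≤ ρ ^ 2 := by
    rw [← norm_sub_rev]
    nlinarith [norm_nonneg (y - x)]
  have ha2 : ‖(a - y) - (x - y)‖ ^ 2 ≤ ρ ^ 2 := by
    have : (a - y) - (x - y) = a - x := by abel
    rw [this]; nlinarith [norm_nonneg (a - x)]
  have hxm : x - (y + t • (a - y)) = (x - y) - t • (a - y) := by
    abel
  rw [hxm]
  have e1 : ‖(x - y) - t • (a - y)‖ ^ 2
      = ‖x - y‖ ^ 2 - 2 * (t * ⟪x - y, a - y⟫) + t ^ 2 * ‖a - y‖ ^ 2 := by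
    rw [norm_sub_sq_real, real_inner_smul_right, norm_smul]
    simp [mul_pow, sq_abs]
  have e2 : ‖(a - y) - (x - y)‖ ^ 2
      = ‖a - y‖ ^ 2 - 2 * ⟪x - y, a - y⟫ + ‖x - y‖ ^ 2 := by
    rw [norm_sub_sq_real, real_inner_comm]
  nlinarith [mul_nonneg ht0 (sub_nonneg.2 ht1)]

/-- Part 1: the segment between two points of `X ∩ B(x,r)` stays in the tube. -/
theorem part1 {X : Set E} (hXcl : IsClosed X) {τ : ℝ} (hτ : 0 < τ) {π : E → E}
    (hπX : ∀ z, π z ∈ X) (hπd : ∀ z, dist z (π z) = infDist z X)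
    (hπcont : ContinuousOn π {z : E | infDist z X < τ})
    (x : E) (hdx : infDist x X < τ) {rr : ℝ}
    (hr2 : rr ^ 2 ≤ τ ^ 2 + (τ - infDist x X) ^ 2)
    (y a : E) (hy : y ∈ X) (ha : a ∈ X)
    (hyx : dist y x < rr) (hax : dist a x < rr)
    (t : ℝ) (ht0 : 0 ≤ t) (ht1 : t ≤ 1) :
    infDist (y + t • (a - y)) X < τ := by
  by_contra hcon
  push_neg at hcon
  set g : ℝ → ℝ := fun u => infDist (y + u • (a - y)) X with hg
  have hgcont : Continuous g := by
    refine (continuous_infDist_pt X).comp ?_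
    exact continuous_const.add (continuous_id.smul continuous_const)
  set Φ : Set ℝ := {u | u ∈ Icc (0:ℝ) 1 ∧ τ ≤ g u} with hΦ
  have hΦclosed : IsClosed Φ := by
    refine IsClosed.inter isClosed_Icc ?_
    exact isClosed_le continuous_const hgcont
  have hΦne : Φ.Nonempty := ⟨t, ⟨ht0, ht1⟩, hcon⟩
  have hΦbdd : BddBelow Φ := ⟨0, fun u hu => hu.1.1⟩
  set t' := sInf Φ with ht'
  have ht'mem : t' ∈ Φ := hΦclosed.csInf_mem hΦne hΦbdd
  have ht'0 : 0 ≤ t' := ht'mem.1.1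
  have ht'1 : t' ≤ 1 := ht'mem.1.2
  have hg0 : g 0 = 0 := by
    simp only [hg]
    have : y + (0:ℝ) • (a - y) = y := by norm_num
    rw [this]
    exact infDist_zero_of_mem hy
  have ht'pos : 0 < t' := by
    rcases eq_or_lt_of_le ht'0 with h | h
    · exfalso
      have := ht'mem.2
      rw [← h, hg0] at this
      linarith
    · exact h
  have hbelow : ∀ u, 0 < u → u < t' → g u < τ := by
    intro u hu0 hut
    by_contra hcu
    push_neg at hcu
    have : u ∈ Φ := ⟨⟨hu0.le, le_trans hut.le ht'1⟩, hcu⟩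
    exact absurd (csInf_le hΦbdd this) (not_le.2 hut)
  -- key1 below t'
  set B := ‖a - y‖ ^ 2 with hB
  have hkey : ∀ u, u ∈ Ioo (0:ℝ) t' → g u * (2 * τ - g u) - u * (1 - u) * B ≤ 0 := by
    intro u hu
    have h1 := key1 hXcl hτ hπX hπd hπcont y a hy ha u hu.1.le
      (le_trans hu.2.le ht'1) (hbelow u hu.1 hu.2)
    rw [hg, hB]
    simp only at h1 ⊢
    linarith [h1]
  -- pass to the limit at t'
  have hfc : Continuous fun u => g u * (2 * τ - g u) - u * (1 - u) * B :=
    ((hgcont.mul (continuous_const.sub hgcont)).sub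
      ((continuous_id.mul (continuous_const.sub continuous_id)).mul continuous_const))
  have hft' : g t' * (2 * τ - g t') - t' * (1 - t') * B ≤ 0 := by
    have htend : Filter.Tendsto (fun u => g u * (2 * τ - g u) - u * (1 - u) * B)
        (nhdsWithin t' (Iio t')) (nhds (g t' * (2 * τ - g t') - t' * (1 - t') * B)) :=
      (hfc.tendsto t').mono_left nhdsWithin_le_nhds
    refine le_of_tendsto htend ?_
    filter_upwards [Ioo_mem_nhdsLT_of_mem (⟨ht'pos, le_refl t'⟩ : t' ∈ Ioc 0 t')] with u hu
    exact hkey u hu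
  have hgt'le : g t' ≤ τ := by
    have htend : Filter.Tendsto g (nhdsWithin t' (Iio t')) (nhds (g t')) :=
      (hgcont.tendsto t').mono_left nhdsWithin_le_nhds
    refine le_of_tendsto htend ?_
    filter_upwards [Ioo_mem_nhdsLT_of_mem (⟨ht'pos, le_refl t'⟩ : t' ∈ Ioc 0 t')] with u hu
    exact (hbelow u hu.1 hu.2).le
  have hgt' : g t' = τ := le_antisymm hgt'le ht'mem.2
  have hτB : τ ^ 2 ≤ t' * (1 - t') * B := by
    rw [hgt'] at hft'
    nlinarith [hft']
  -- KEY2 at t'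
  have hyρ : ‖y - x‖ ≤ max ‖y - x‖ ‖a - x‖ := le_max_left _ _
  have haρ : ‖a - x‖ ≤ max ‖y - x‖ ‖a - x‖ := le_max_right _ _
  have hk2 := key2 y a x t' ht'0 ht'1 hyρ haρ
  set ρm := max ‖y - x‖ ‖a - x‖ with hρm
  have hρmlt : ρm < rr := by
    rw [hρm]
    refine max_lt ?_ ?_
    · rw [← dist_eq_norm]; exact hyx
    · rw [← dist_eq_norm]; exact hax
  have hρm0 : 0 ≤ ρm := le_trans (norm_nonneg _) hyρ
  have hρ2 : ρm ^ 2 < rr ^ 2 := by nlinarith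
  have hdx0 : 0 ≤ infDist x X := infDist_nonneg
  have hτdx : 0 < τ - infDist x X := by linarith
  have hw2 : ‖x - (y + t' • (a - y))‖ ^ 2 < (τ - infDist x X) ^ 2 := by
    rw [← hB] at hk2
    nlinarith [hk2, hτB]
  have hwlt : ‖x - (y + t' • (a - y))‖ < τ - infDist x X := by
    nlinarith [norm_nonneg (x - (y + t' • (a - y)))]
  have : infDist (y + t' • (a - y)) X < τ := by
    calc infDist (y + t' • (a - y)) X
        ≤ infDist x X + dist (y + t' • (a - y)) x := infDist_le_infDist_add_dist
      _ = infDist x X + ‖x - (y + t' • (a - y))‖ := by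
          rw [dist_eq_norm, norm_sub_rev]
      _ < infDist x X + (τ - infDist x X) := by linarith
      _ = τ := by ring
  have h2 : τ ≤ infDist (y + t' • (a - y)) X := ht'mem.2
  linarith

set_option maxHeartbeats 1000000 in
/-- Main ball lemma: projection of segment point stays in the ball. -/
theorem ball_lemma {X : Set E} (hXcl : IsClosed X) (hXne : X.Nonempty) {τ : ℝ} (hτ : 0 < τ)
    {π : E → E}
    (hπX : ∀ z, π z ∈ X) (hπd : ∀ z, dist z (π z) = infDist z X)
    (huniq : ∀ z, infDist z X < τ → ∀ p ∈ X, dist z p = infDist z X → p = π z)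
    (hπcont : ContinuousOn π {z : E | infDist z X < τ})
    (x : E) (hdx : infDist x X < τ) {rr : ℝ} (hrr : 0 < rr)
    (hr2 : rr ^ 2 ≤ τ ^ 2 + (τ - infDist x X) ^ 2)
    (y a : E) (hy : y ∈ X) (ha : a ∈ X)
    (hyx : dist y x < rr) (hax : dist a x < rr)
    (t : ℝ) (ht0 : 0 ≤ t) (ht1 : t ≤ 1)
    (hsτ : infDist (y + t • (a - y)) X < τ) :
    dist (π (y + t • (a - y))) x < rr := by
  set m := y + t • (a - y) with hm
  set s := infDist m X with hs
  have hyρ : ‖y - x‖ ≤ max ‖y - x‖ ‖a - x‖ := le_max_left _ _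
  have haρ : ‖a - x‖ ≤ max ‖y - x‖ ‖a - x‖ := le_max_right _ _
  set ρm := max ‖y - x‖ ‖a - x‖ with hρm
  have hρmlt : ρm < rr := by
    rw [hρm]
    refine max_lt ?_ ?_
    · rw [← dist_eq_norm]; exact hyx
    · rw [← dist_eq_norm]; exact hax
  have hρm0 : 0 ≤ ρm := le_trans (norm_nonneg _) hyρ
  have hρ2 : ρm ^ 2 < rr ^ 2 := by nlinarith
  have hk2 := key2 y a x t ht0 ht1 hyρ haρ
  rw [← hm] at hk2
  have hs0 : 0 ≤ s := infDist_nonneg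
  rcases eq_or_lt_of_le hs0 with hseq | hslt
  · -- m ∈ X, so π m = m
    have hmX : m ∈ X := (hXcl.mem_iff_infDist_zero hXne).2 hseq.symm
    have hπm : m = π m := huniq m hsτ m hmX (by rw [dist_self, ← hs, ← hseq])
    rw [← hπm]
    have hd : dist m x = ‖x - m‖ := by rw [dist_eq_norm, norm_sub_rev]
    rw [hd]
    have h1 : ‖x - m‖ ^ 2 ≤ ρm ^ 2 := by nlinarith [hk2, mul_nonneg (mul_nonneg ht0 (sub_nonneg.2 ht1)) (sq_nonneg ‖a - y‖)]
    nlinarith [norm_nonneg (x - m), hρm0]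
  · -- main case
    have hK1 := key1 hXcl hτ hπX hπd hπcont y a hy ha t ht0 ht1 hsτ
    rw [← hm, ← hs] at hK1
    set n := m - π m with hn
    have hnn : ‖n‖ = s := by rw [hn, ← dist_eq_norm, hπd]
    set NW := ⟪n, x - m⟫ with hNW
    set B := ‖a - y‖ ^ 2 with hB
    set W := ‖x - m‖ ^ 2 with hW
    have hBnn : 0 ≤ t * (1 - t) * B := by
      have := mul_nonneg ht0 (sub_nonneg.2 ht1); positivity
    rcases le_or_gt NW (s * (τ - s)) with hcase | hcase
    · -- projection stays in the ball
      have hpx : π m - x = -(n + (x - m)) := by rw [hn]; module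
      have hexp : ‖π m - x‖ ^ 2 = s ^ 2 + 2 * NW + W := by
        rw [hpx, norm_neg, norm_add_sq_real, hnn, hNW, hW]
      have hb2 : ‖π m - x‖ ^ 2 < rr ^ 2 := by
        rw [hexp]
        have e : s ^ 2 + 2 * (s * (τ - s)) = s * (2 * τ - s) := by ring
        linarith [hk2, hK1, hρ2, hcase, e]
      rw [dist_eq_norm]
      nlinarith [norm_nonneg (π m - x), hrr, hb2]
    · -- contradiction case
      exfalso
      set c := π m + (τ / s) • n with hc
      have hcx : c - x = (τ / s - 1) • n - (x - m) := by
        rw [hc, hn]; module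
      have hcoef : (τ / s - 1) ^ 2 * s ^ 2 = (τ - s) ^ 2 := by
        field_simp
      have hcoef2 : (τ / s - 1) * (s * (τ - s)) = (τ - s) ^ 2 := by
        field_simp
      have hfrac : 0 < τ / s - 1 := by
        rw [sub_pos, lt_div_iff₀ hslt]
        linarith
      have hexp : ‖c - x‖ ^ 2 = (τ - s) ^ 2 - 2 * ((τ / s - 1) * NW) + W := by
        rw [hcx, norm_sub_sq_real, real_inner_smul_left, norm_smul, Real.norm_eq_abs,
          hnn, mul_pow, sq_abs, hcoef, hNW, hW]
      have hprod : (τ - s) ^ 2 < (τ / s - 1) * NW := by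
        calc (τ - s) ^ 2 = (τ / s - 1) * (s * (τ - s)) := hcoef2.symm
          _ < (τ / s - 1) * NW := by
              exact mul_lt_mul_of_pos_left hcase hfrac
      have hdx0 : 0 ≤ infDist x X := infDist_nonneg
      have hτdx : 0 < τ - infDist x X := by linarith
      have hc2 : ‖c - x‖ ^ 2 < (τ - infDist x X) ^ 2 := by
        rw [hexp]
        have e2 : s * (2 * τ - s) + (τ - s) ^ 2 = τ ^ 2 := by ring
        linarith [hprod, hk2, hK1, hρ2, hr2, e2]
      have hclt : ‖c - x‖ < τ - infDist x X := by
        nlinarith [norm_nonneg (c - x), hc2]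
      have hinf : τ - ‖c - x‖ ≤ infDist x X := by
        by_contra hcon
        push_neg at hcon
        obtain ⟨p, hp, hdp⟩ := (infDist_lt_iff hXne).1 hcon
        have hT := tangent_ball hXcl hτ hπX hπd hπcont m hslt hsτ p hp
        rw [← hs, ← hn, ← hc] at hT
        have : ‖p - c‖ ≤ ‖p - x‖ + ‖x - c‖ := by
          have : p - c = (p - x) + (x - c) := by abel
          rw [this]; exact norm_add_le _ _
        have h1 : ‖p - x‖ = dist x p := by rw [dist_eq_norm, norm_sub_rev]
        have h2 : ‖x - c‖ = ‖c - x‖ := by rw [norm_sub_rev]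
        linarith
      linarith

end Stmt0Aux

theorem stmt0 (d : ℕ) (X : Set (EuclideanSpace ℝ (Fin d))) (hXne : X.Nonempty)
    (hXcl : IsClosed X) (τ : ℝ) (hτ : 0 < τ)
    (hreach : ∀ z : EuclideanSpace ℝ (Fin d), Metric.infDist z X < τ →
      ∃! p, p ∈ X ∧ dist z p = Metric.infDist z X)
    (𝒳 : Set (EuclideanSpace ℝ (Fin d))) (r : EuclideanSpace ℝ (Fin d) → ℝ)
    (hrpos : ∀ x ∈ 𝒳, 0 < r x)
    (hrle : ∀ x ∈ 𝒳, r x ≤ Real.sqrt (τ ^ 2 + (τ - Metric.infDist x X) ^ 2))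
    (I : Set (EuclideanSpace ℝ (Fin d))) (hI : I ⊆ 𝒳) (hIne : I.Nonempty)
    (S : Set (EuclideanSpace ℝ (Fin d)))
    (hS : S = X ∩ ⋂ x ∈ I, {y : EuclideanSpace ℝ (Fin d) | dist y x < r x})
    (hSne : S.Nonempty) :
    ContractibleSpace S := by
  classical
  -- (no type alias)
  -- projection
  choose π hπX hπd' using fun z : EuclideanSpace ℝ (Fin d) => hXcl.exists_infDist_eq_dist hXne z
  have hπd : ∀ z, dist z (π z) = Metric.infDist z X := fun z => (hπd' z).symm
  have huniq : ∀ z, Metric.infDist z X < τ → ∀ p ∈ X, dist z p = Metric.infDist z X → p = π z := by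
    intro z hz p hp hd
    obtain ⟨q, hq, hq2⟩ := hreach z hz
    have e1 := hq2 p ⟨hp, hd⟩
    have e2 := hq2 (π z) ⟨hπX z, hπd z⟩
    rw [e1, e2]
  have hπcont := Stmt0Aux.proj_cont hXcl hπX hπd huniq
  -- membership criterion for S
  have hmem : ∀ w : EuclideanSpace ℝ (Fin d), w ∈ S ↔ w ∈ X ∧ ∀ x ∈ I, dist w x < r x := by
    intro w; simp [hS, Set.mem_iInter]
  obtain ⟨a₀, ha₀⟩ := hSne
  obtain ⟨ha₀X, ha₀b⟩ := (hmem a₀).1 ha₀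
  obtain ⟨x₀, hx₀⟩ := hIne
  -- facts for each center
  have hfacts : ∀ x ∈ I, Metric.infDist x X < τ ∧ 0 < r x ∧
      r x ^ 2 ≤ τ ^ 2 + (τ - Metric.infDist x X) ^ 2 := by
    intro x hx
    have hx𝒳 := hI hx
    have hrp := hrpos x hx𝒳
    have hA : (0:ℝ) ≤ τ ^ 2 + (τ - Metric.infDist x X) ^ 2 := by positivity
    have hr2 : r x ^ 2 ≤ τ ^ 2 + (τ - Metric.infDist x X) ^ 2 := by
      have h := hrle x hx𝒳
      nlinarith [Real.sq_sqrt hA, Real.sqrt_nonneg (τ ^ 2 + (τ - Metric.infDist x X) ^ 2)]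
    have hd : Metric.infDist x X ≤ dist a₀ x := by
      rw [dist_comm]; exact Metric.infDist_le_dist_of_mem ha₀X
    have hdr : Metric.infDist x X < r x := lt_of_le_of_lt hd (ha₀b x hx)
    have hdτ : Metric.infDist x X < τ := by nlinarith [Metric.infDist_nonneg (x := x) (s := X)]
    exact ⟨hdτ, hrp, hr2⟩
  -- the segment stays in the tube
  have htube : ∀ y ∈ S, ∀ t : ℝ, 0 ≤ t → t ≤ 1 →
      Metric.infDist (y + t • (a₀ - y)) X < τ := by
    intro y hyS t ht0 ht1
    obtain ⟨hyX, hyb⟩ := (hmem y).1 hyS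
    obtain ⟨hd0, hr0, hr2⟩ := hfacts x₀ hx₀
    exact Stmt0Aux.part1 hXcl hτ hπX hπd hπcont x₀ hd0 hr2 y a₀ hyX ha₀X
      (hyb x₀ hx₀) (ha₀b x₀ hx₀) t ht0 ht1
  -- the projected segment stays in S
  have hmapS : ∀ y ∈ S, ∀ t : ℝ, 0 ≤ t → t ≤ 1 → π (y + t • (a₀ - y)) ∈ S := by
    intro y hyS t ht0 ht1
    obtain ⟨hyX, hyb⟩ := (hmem y).1 hyS
    refine (hmem _).2 ⟨hπX _, ?_⟩
    intro x hx
    obtain ⟨hd0, hr0, hr2⟩ := hfacts x hx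
    exact Stmt0Aux.ball_lemma hXcl hXne hτ hπX hπd huniq hπcont x hd0 hr0 hr2
      y a₀ hyX ha₀X (hyb x hx) (ha₀b x hx) t ht0 ht1 (htube y hyS t ht0 ht1)
  -- construct the homotopy
  rw [contractible_iff_id_nullhomotopic]
  refine ⟨⟨a₀, ha₀⟩, ?_⟩
  have hF : ∀ p : unitInterval × S, ((p.2 : EuclideanSpace ℝ (Fin d)) + (p.1 : ℝ) • (a₀ - (p.2 : EuclideanSpace ℝ (Fin d)))) ∈
      {z : EuclideanSpace ℝ (Fin d) | Metric.infDist z X < τ} :=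
    fun p => htube _ p.2.2 _ p.1.2.1 p.1.2.2
  have hcont : Continuous fun p : unitInterval × S =>
      (⟨π ((p.2 : EuclideanSpace ℝ (Fin d)) + (p.1 : ℝ) • (a₀ - (p.2 : EuclideanSpace ℝ (Fin d)))), hmapS _ p.2.2 _ p.1.2.1 p.1.2.2⟩ : S) := by
    refine Continuous.subtype_mk ?_ _
    refine hπcont.comp_continuous ?_ hF
    have c2 : Continuous fun p : unitInterval × S => (p.2 : EuclideanSpace ℝ (Fin d)) :=
      continuous_subtype_val.comp continuous_snd
    have c1 : Continuous fun p : unitInterval × S => (p.1 : ℝ) :=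
      continuous_subtype_val.comp continuous_fst
    exact c2.add (c1.smul (continuous_const.sub c2))
  refine ⟨⟨⟨fun p => ⟨π ((p.2 : EuclideanSpace ℝ (Fin d)) + (p.1 : ℝ) • (a₀ - (p.2 : EuclideanSpace ℝ (Fin d)))),
      hmapS _ p.2.2 _ p.1.2.1 p.1.2.2⟩, hcont⟩, ?_, ?_⟩⟩
  · intro y
    apply Subtype.ext
    simp only [ContinuousMap.coe_mk, ContinuousMap.id_apply]
    have h0 : ((y : EuclideanSpace ℝ (Fin d)) + ((0 : unitInterval) : ℝ) • (a₀ - (y : EuclideanSpace ℝ (Fin d)))) = (y : EuclideanSpace ℝ (Fin d)) := by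
      norm_num
    rw [h0]
    have hyX : (y : EuclideanSpace ℝ (Fin d)) ∈ X := ((hmem y).1 y.2).1
    have : Metric.infDist (y : EuclideanSpace ℝ (Fin d)) X = 0 := Metric.infDist_zero_of_mem hyX
    exact ((huniq (y : EuclideanSpace ℝ (Fin d)) (by rw [this]; exact hτ) (y : EuclideanSpace ℝ (Fin d)) hyX (by rw [this]; simp)).symm)
  · intro y
    apply Subtype.ext
    simp only [ContinuousMap.coe_mk, ContinuousMap.const_apply]
    have h1 : ((y : EuclideanSpace ℝ (Fin d)) + ((1 : unitInterval) : ℝ) • (a₀ - (y : EuclideanSpace ℝ (Fin d)))) = a₀ := by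
      norm_num
    rw [h1]
    have : Metric.infDist a₀ X = 0 := Metric.infDist_zero_of_mem ha₀X
    exact ((huniq a₀ (by rw [this]; exact hτ) a₀ ha₀X (by rw [this]; simp)).symm)
end

section
/- Let X ⊆ ℝ^d be a nonempty compact set, let μ ∈ (0, 1], and suppose X has μ-reach at least τ_μ > 0, meaning: for every x ∈ ℝ^d \ X with d_X(x) < τ_μ, one has infDist(x, convexHull ℝ (Γ_X(x))) ≥ μ · d_X(x), where Γ_X(x) := {p ∈ X : ‖x − p‖ = d_X(x)} is the set of nearest points of x in X. Then for every r with 0 < r ≤ τ_μ, the open offset X_r := {y ∈ ℝ^d : d_X(y) < r} deformation retracts onto X: there exists a continuous map H : X_r × [0,1] → X_r such that H(y, 0) = y for all y ∈ X_r, H(y, 1) ∈ X for all y ∈ X_r, and H(p, t) = p for all p ∈ X and all t ∈ [0,1]. In particular, X and X_r (with subspace topologies) are homotopy equivalent. -/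
open Metric Set
open scoped RealInnerProductSpace

variable {d : ℕ}

local notation "E" => EuclideanSpace ℝ (Fin d)

lemma key_dir (X : Set (EuclideanSpace ℝ (Fin d))) (hXne : X.Nonempty) (hXcp : IsCompact X)
    {μ τμ : ℝ} (hμ0 : 0 < μ)
    (hμreach : ∀ x : E, x ∉ X → Metric.infDist x X < τμ →
      μ * Metric.infDist x X ≤
        Metric.infDist x (convexHull ℝ {p | p ∈ X ∧ dist x p = Metric.infDist x X}))
    (x : E) (hx0 : 0 < Metric.infDist x X) (hxτ : Metric.infDist x X < τμ) :
    ∃ u : E, ‖u‖ = 1 ∧ ∀ p ∈ X, dist x p = Metric.infDist x X →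
      μ * Metric.infDist x X ≤ ⟪u, x - p⟫ := by
  classical
  have hxX : x ∉ X := fun h => absurd (Metric.infDist_zero_of_mem h) (by linarith)
  set Γ : Set (EuclideanSpace ℝ (Fin d)) := {p | p ∈ X ∧ dist x p = Metric.infDist x X} with hΓ
  obtain ⟨p0, hp0X, hp0d⟩ := hXcp.exists_infDist_eq_dist hXne x
  have hΓne : Γ.Nonempty := ⟨p0, hp0X, hp0d.symm⟩
  set K : Set (EuclideanSpace ℝ (Fin d)) := closure (convexHull ℝ Γ) with hK
  have hKconv : Convex ℝ K := (convex_convexHull ℝ Γ).closure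
  have hKne : K.Nonempty := (hΓne.mono (subset_convexHull ℝ Γ)).mono subset_closure
  have hKcl : IsClosed K := isClosed_closure
  obtain ⟨θ, hθK, hθd⟩ := hKcl.exists_infDist_eq_dist hKne x
  have hinfK : Metric.infDist x K = Metric.infDist x (convexHull ℝ Γ) :=
    Metric.infDist_closure
  have hμd : μ * Metric.infDist x X ≤ dist x θ := by
    rw [← hθd, hinfK]; exact hμreach x hxX hxτ
  have hxθ : 0 < ‖x - θ‖ := by
    rw [← dist_eq_norm]; exact lt_of_lt_of_le (by positivity) hμd
  -- variational inequality
  have hvar : ∀ w ∈ K, ⟪x - θ, w - θ⟫ ≤ 0 := by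
    have h1 : ‖x - θ‖ = ⨅ w : K, ‖x - w‖ := by
      rw [← dist_eq_norm, ← hθd, Metric.infDist_eq_iInf]
      simp only [dist_eq_norm]
    exact (norm_eq_iInf_iff_real_inner_le_zero hKconv hθK).mp h1
  refine ⟨‖x - θ‖⁻¹ • (x - θ), ?_, ?_⟩
  · rw [norm_smul, norm_inv, norm_norm]
    field_simp
  · intro p hpX hpd
    have hpK : p ∈ K := subset_closure (subset_convexHull ℝ Γ ⟨hpX, hpd⟩)
    have h2 : ⟪x - θ, p - θ⟫ ≤ 0 := hvar p hpK
    have h3 : ⟪x - θ, x - p⟫ = ‖x - θ‖ ^ 2 - ⟪x - θ, p - θ⟫ := by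
      rw [← real_inner_self_eq_norm_sq]
      rw [← inner_sub_right]
      congr 1
      abel
    have h4 : ‖x - θ‖ ^ 2 ≤ ⟪x - θ, x - p⟫ := by rw [h3]; linarith
    rw [real_inner_smul_left]
    have h5 : μ * Metric.infDist x X ≤ ‖x - θ‖ := by rw [← dist_eq_norm]; exact hμd
    calc μ * Metric.infDist x X ≤ ‖x - θ‖ := h5
      _ = ‖x - θ‖⁻¹ * ‖x - θ‖ ^ 2 := by field_simp [pow_two]
      _ ≤ ‖x - θ‖⁻¹ * ⟪x - θ, x - p⟫ := by
          apply mul_le_mul_of_nonneg_left h4 (by positivity)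

lemma key_nbhd (X : Set (EuclideanSpace ℝ (Fin d))) (hXne : X.Nonempty) (hXcp : IsCompact X)
    {μ τμ : ℝ} (hμ0 : 0 < μ)
    (hμreach : ∀ x : E, x ∉ X → Metric.infDist x X < τμ →
      μ * Metric.infDist x X ≤
        Metric.infDist x (convexHull ℝ {p | p ∈ X ∧ dist x p = Metric.infDist x X}))
    (x : E) (hx0 : 0 < Metric.infDist x X) (hxτ : Metric.infDist x X < τμ) :
    ∃ u : E, ‖u‖ ≤ 1 ∧ ∃ δ : ℝ, 0 < δ ∧ δ ≤ 1 ∧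
      ∀ y : E, dist y x < δ → ∀ p ∈ X, dist y p = Metric.infDist y X →
        μ * Metric.infDist y X / 3 ≤ ⟪u, y - p⟫ := by
  classical
  obtain ⟨u, hu1, hu⟩ := key_dir X hXne hXcp hμ0 hμreach x hx0 hxτ
  set D := Metric.infDist x X with hD
  -- first: find δ₀ giving the bound μ*D/2 for all nearby y and all their nearest points
  by_contra hcon
  push_neg at hcon
  -- It suffices to show the claimed property for some δ.
  have main : ∃ δ : ℝ, 0 < δ ∧ δ ≤ 1 ∧
      ∀ y : E, dist y x < δ → ∀ p ∈ X, dist y p = Metric.infDist y X →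
        μ * Metric.infDist y X / 3 ≤ ⟪u, y - p⟫ := by
    -- enough: bound with μ*D/2 on a ball of radius ≤ min 1 (D/2)
    have enough : ∃ δ : ℝ, 0 < δ ∧ δ ≤ min 1 (D / 2) ∧
        ∀ y : E, dist y x < δ → ∀ p ∈ X, dist y p = Metric.infDist y X →
          μ * D / 2 ≤ ⟪u, y - p⟫ := by
      by_contra h2
      push_neg at h2
      -- extract sequences
      have hseq : ∀ n : ℕ, ∃ y : E, dist y x < min 1 (D / 2) / (n + 1) ∧
          ∃ p ∈ X, dist y p = Metric.infDist y X ∧ ⟪u, y - p⟫ < μ * D / 2 := by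
        intro n
        have hpos : 0 < min 1 (D / 2) / (n + 1) := by positivity
        have hle : min 1 (D / 2) / (n + 1) ≤ min 1 (D / 2) := by
          apply div_le_self (le_min zero_le_one (by linarith)) (by push_cast; linarith)
        obtain ⟨y, hy1, p, hp1, hp2, hp3⟩ := h2 _ hpos hle
        exact ⟨y, hy1, p, hp1, hp2, hp3⟩
      choose y hy p hpX hpd hpineq using hseq
      -- y n → x
      have hyx : Filter.Tendsto y Filter.atTop (nhds x) := by
        rw [tendsto_iff_dist_tendsto_zero]
        apply squeeze_zero (fun n => dist_nonneg)
          (fun n => (hy n).le)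
        have h0 := (tendsto_const_div_atTop_nhds_zero_nat (min 1 (D / 2))).comp
          (Filter.tendsto_add_atTop_nat 1)
        simpa [Function.comp_def] using h0
      -- extract convergent subsequence of p
      obtain ⟨q, hqX, φ, hφ, hpq⟩ := hXcp.tendsto_subseq hpX
      have hyφ : Filter.Tendsto (y ∘ φ) Filter.atTop (nhds x) :=
        hyx.comp hφ.tendsto_atTop
      -- dist x q = D
      have hdist : Filter.Tendsto (fun n => dist (y (φ n)) (p (φ n))) Filter.atTop
          (nhds (dist x q)) := (Filter.Tendsto.dist hyφ hpq)
      have hdist2 : Filter.Tendsto (fun n => Metric.infDist (y (φ n)) X) Filter.atTop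
          (nhds D) := by
        have : Filter.Tendsto (fun z : E => Metric.infDist z X) (nhds x) (nhds D) := by
          exact (Metric.continuous_infDist_pt X).continuousAt
        exact this.comp hyφ
      have hxq : dist x q = D := by
        apply tendsto_nhds_unique hdist
        have : (fun n => dist (y (φ n)) (p (φ n))) = fun n => Metric.infDist (y (φ n)) X := by
          funext n; exact hpd (φ n)
        rw [this]; exact hdist2
      -- so q is a nearest point of x, apply hu
      have hkey : μ * D ≤ ⟪u, x - q⟫ := hu q hqX hxq
      -- but inner products converge to something ≤ μ D/2
      have hconv : Filter.Tendsto (fun n => ⟪u, y (φ n) - p (φ n)⟫) Filter.atTop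
          (nhds ⟪u, x - q⟫) := by
        apply Filter.Tendsto.inner tendsto_const_nhds
        exact hyφ.sub hpq
      have hle2 : ⟪u, x - q⟫ ≤ μ * D / 2 :=
        le_of_tendsto hconv (Filter.Eventually.of_forall (fun n => (hpineq (φ n)).le))
      have : 0 < μ * D := by positivity
      linarith
    obtain ⟨δ, hδ0, hδle, hδ⟩ := enough
    refine ⟨δ, hδ0, le_trans hδle (min_le_left _ _), ?_⟩
    intro z hz p hp1 hp2
    have hDz : Metric.infDist z X ≤ (3 / 2) * D := by
      have h1 : Metric.infDist z X ≤ Metric.infDist x X + dist z x :=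
        Metric.infDist_le_infDist_add_dist
      have : dist z x < D / 2 := lt_of_lt_of_le hz (hδle.trans (min_le_right _ _))
      linarith
    have := hδ z hz p hp1 hp2
    calc μ * Metric.infDist z X / 3 ≤ μ * ((3 / 2) * D) / 3 := by nlinarith [hμ0.le, hDz]
      _ = μ * D / 2 := by ring
      _ ≤ ⟪u, z - p⟫ := this
  obtain ⟨δ, h1, h2, h3⟩ := main
  obtain ⟨y0, hy0, p0, hp0, hpd0, hlt⟩ := hcon u hu1.le δ h1 h2
  exact absurd (h3 y0 hy0 p0 hp0 hpd0) (not_le.mpr hlt)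

lemma exists_data (X : Set (EuclideanSpace ℝ (Fin d))) (hXne : X.Nonempty) (hXcp : IsCompact X)
    {μ τμ : ℝ} (hμ0 : 0 < μ)
    (hμreach : ∀ x : E, x ∉ X → Metric.infDist x X < τμ →
      μ * Metric.infDist x X ≤
        Metric.infDist x (convexHull ℝ {p | p ∈ X ∧ dist x p = Metric.infDist x X}))
    {r : ℝ} (hrτ : r ≤ τμ) :
    ∃ (c : ℕ → E) (ρ : ℕ → ℝ) (u : ℕ → E),
      (∀ n, 0 ≤ ρ n ∧ ρ n ≤ 1 ∧ ‖u n‖ ≤ 1) ∧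
      (∀ n, ∀ y : E, dist y (c n) < ρ n → ∀ p ∈ X, dist y p = Metric.infDist y X →
        μ * Metric.infDist y X / 3 ≤ ⟪u n, y - p⟫) ∧
      (∀ y : E, 0 < Metric.infDist y X → Metric.infDist y X < r →
        ∃ n, dist y (c n) < ρ n) := by
  classical
  set V : Set (EuclideanSpace ℝ (Fin d)) :=
    {y | 0 < Metric.infDist y X ∧ Metric.infDist y X < r} with hV
  by_cases hVne : V.Nonempty
  · -- choose data for each point of V
    have hchoice : ∀ x : V, ∃ u : E, ‖u‖ ≤ 1 ∧ ∃ δ : ℝ, 0 < δ ∧ δ ≤ 1 ∧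
        ∀ y : E, dist y (x : E) < δ → ∀ p ∈ X, dist y p = Metric.infDist y X →
          μ * Metric.infDist y X / 3 ≤ ⟪u, y - p⟫ := by
      intro x
      exact key_nbhd X hXne hXcp hμ0 hμreach x x.2.1 (lt_of_lt_of_le x.2.2 hrτ)
    choose uu hu1 δδ hδ0 hδ1 hest using hchoice
    -- countable subcover
    obtain ⟨T, hTc, hTU⟩ := TopologicalSpace.isOpen_iUnion_countable
      (fun x : V => Metric.ball (x : E) (δδ x)) (fun x => Metric.isOpen_ball)
    have hTne : T.Nonempty := by
      obtain ⟨y, hy⟩ := hVne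
      have : (y : E) ∈ ⋃ x : V, Metric.ball (x : E) (δδ x) := by
        exact Set.mem_iUnion.mpr ⟨⟨y, hy⟩, by simpa using hδ0 ⟨y, hy⟩⟩
      rw [← hTU] at this
      obtain ⟨i, hi, -⟩ := Set.mem_iUnion₂.mp this
      exact ⟨i, hi⟩
    obtain ⟨f, hf⟩ := hTc.exists_eq_range hTne
    refine ⟨fun n => (f n : E), fun n => δδ (f n), fun n => uu (f n), ?_, ?_, ?_⟩
    · exact fun n => ⟨(hδ0 (f n)).le, hδ1 (f n), hu1 (f n)⟩
    · exact fun n y hy => hest (f n) y hy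
    · intro y hy1 hy2
      have : y ∈ ⋃ x : V, Metric.ball (x : E) (δδ x) :=
        Set.mem_iUnion.mpr ⟨⟨y, hy1, hy2⟩, by simpa using hδ0 ⟨y, ⟨hy1, hy2⟩⟩⟩
      rw [← hTU] at this
      obtain ⟨i, hi, hyi⟩ := Set.mem_iUnion₂.mp this
      rw [hf] at hi
      obtain ⟨n, rfl⟩ := hi
      exact ⟨n, by simpa [Metric.mem_ball] using hyi⟩
  · refine ⟨fun _ => 0, fun _ => 0, fun _ => 0, ?_, ?_, ?_⟩
    · exact fun n => ⟨le_refl _, zero_le_one, by simp⟩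
    · intro n y hy
      exact absurd hy (by simpa using dist_nonneg)
    · intro y hy1 hy2
      exact absurd ⟨hy1, hy2⟩ (fun h => hVne ⟨y, h⟩)

lemma exists_W (X : Set (EuclideanSpace ℝ (Fin d))) (hXne : X.Nonempty) (hXcp : IsCompact X)
    {μ τμ : ℝ} (hμ0 : 0 < μ)
    (hμreach : ∀ x : E, x ∉ X → Metric.infDist x X < τμ →
      μ * Metric.infDist x X ≤
        Metric.infDist x (convexHull ℝ {p | p ∈ X ∧ dist x p = Metric.infDist x X}))
    {r : ℝ} (hrτ : r ≤ τμ) :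
    ∃ W : E → E,
      (∀ y : E, ‖W y‖ ≤ Metric.infDist y X) ∧
      ContinuousOn W {y : E | Metric.infDist y X < r} ∧
      (∀ y : E, 0 < Metric.infDist y X → Metric.infDist y X < r →
        ∀ p ∈ X, dist y p = Metric.infDist y X →
          μ * (Metric.infDist y X) ^ 2 / 3 ≤ ⟪y - p, W y⟫) := by
  classical
  obtain ⟨c, ρ, u, hbnd, hest, hcov⟩ := exists_data X hXne hXcp hμ0 hμreach hrτ
  set dX : E → ℝ := fun y => Metric.infDist y X with hdX
  set b : ℕ → E → ℝ := fun n y => max (ρ n - dist y (c n)) 0 with hb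
  set φ : ℕ → E → ℝ := fun n y => (1 / 2 : ℝ) ^ n * b n y with hφ
  have hb0 : ∀ n y, 0 ≤ b n y := fun n y => le_max_right _ _
  have hb1 : ∀ n y, b n y ≤ 1 := by
    intro n y
    apply max_le _ zero_le_one
    have := (hbnd n).2.1
    have := dist_nonneg (x := y) (y := c n)
    linarith
  have hφ0 : ∀ n y, 0 ≤ φ n y := fun n y => by positivity
  have hφle : ∀ n y, φ n y ≤ (1 / 2 : ℝ) ^ n := by
    intro n y
    calc φ n y ≤ (1 / 2 : ℝ) ^ n * 1 := by
          apply mul_le_mul_of_nonneg_left (hb1 n y) (by positivity)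
      _ = (1 / 2 : ℝ) ^ n := mul_one _
  have hgeo : Summable (fun n : ℕ => (1 / 2 : ℝ) ^ n) :=
    summable_geometric_of_lt_one (by norm_num) (by norm_num)
  have hφsum : ∀ y, Summable (fun n => φ n y) := by
    intro y
    exact Summable.of_nonneg_of_le (fun n => hφ0 n y) (fun n => hφle n y) hgeo
  have hbcont : ∀ n, Continuous (b n) := by
    intro n
    exact (continuous_const.sub (continuous_id.dist continuous_const)).max continuous_const
  have hφcont : ∀ n, Continuous (φ n) := fun n => continuous_const.mul (hbcont n)
  set Φ : E → ℝ := fun y => ∑' n, φ n y with hΦ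
  have hΦcont : Continuous Φ := by
    apply continuous_tsum hφcont hgeo
    intro n y
    rw [Real.norm_eq_abs, abs_of_nonneg (hφ0 n y)]
    exact hφle n y
  have hΦ0 : ∀ y, 0 ≤ Φ y := fun y => tsum_nonneg (fun n => hφ0 n y)
  have hsmulsum : ∀ y, Summable (fun n => φ n y • u n) := by
    intro y
    apply Summable.of_norm_bounded hgeo
    intro n
    rw [norm_smul, Real.norm_eq_abs, abs_of_nonneg (hφ0 n y)]
    calc φ n y * ‖u n‖ ≤ (1 / 2 : ℝ) ^ n * 1 := by
          apply mul_le_mul (hφle n y) (hbnd n).2.2 (norm_nonneg _) (by positivity)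
      _ = _ := mul_one _
  set S : E → EuclideanSpace ℝ (Fin d) := fun y => ∑' n, φ n y • u n with hS
  have hScont : Continuous S := by
    apply continuous_tsum (fun n => ((hφcont n).smul continuous_const)) hgeo
    intro n y
    show ‖φ n y • u n‖ ≤ (1 / 2 : ℝ) ^ n
    rw [norm_smul, Real.norm_eq_abs, abs_of_nonneg (hφ0 n y)]
    calc φ n y * ‖u n‖ ≤ (1 / 2 : ℝ) ^ n * 1 :=
          mul_le_mul (hφle n y) (hbnd n).2.2 (norm_nonneg _) (by positivity)
      _ = _ := mul_one _
  have hSnorm : ∀ y, ‖S y‖ ≤ Φ y := by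
    intro y
    calc ‖S y‖ ≤ ∑' n, ‖φ n y • u n‖ := norm_tsum_le_tsum_norm ((hsmulsum y).norm)
      _ ≤ ∑' n, φ n y := by
          apply Summable.tsum_le_tsum _ ((hsmulsum y).norm) (hφsum y)
          intro n
          rw [norm_smul, Real.norm_eq_abs, abs_of_nonneg (hφ0 n y)]
          calc φ n y * ‖u n‖ ≤ φ n y * 1 :=
                mul_le_mul_of_nonneg_left (hbnd n).2.2 (hφ0 n y)
            _ = φ n y := mul_one _
  -- positivity of Φ on V
  have hΦpos : ∀ y : E, 0 < dX y → dX y < r → 0 < Φ y := by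
    intro y h1 h2
    obtain ⟨n, hn⟩ := hcov y h1 h2
    have hbn : 0 < b n y := by
      simp only [hb, lt_max_iff]
      left; linarith
    have : 0 < φ n y := by positivity
    apply lt_of_lt_of_le this
    exact Summable.le_tsum (hφsum y) n (fun m _ => hφ0 m y)
  -- the inner product estimate for S
  have hSinner : ∀ y : E, 0 < dX y → dX y < r → ∀ p ∈ X, dist y p = Metric.infDist y X →
      μ * dX y / 3 * Φ y ≤ ⟪y - p, S y⟫ := by
    intro y h1 h2 p hpX hpd
    have hmap : ⟪y - p, S y⟫ = ∑' n, φ n y * ⟪u n, y - p⟫ := by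
      have h := ContinuousLinearMap.map_tsum (innerSL ℝ (y - p)) (hsmulsum y)
      simp only [innerSL_apply_apply] at h
      simp only [hS]
      rw [h]
      congr 1
      funext n
      rw [real_inner_smul_right, real_inner_comm]
    rw [hmap]
    have hsum1 : Summable (fun n => φ n y * ⟪u n, y - p⟫) := by
      apply Summable.of_norm_bounded (hgeo.mul_right ‖y - p‖)
      intro n
      rw [Real.norm_eq_abs, abs_mul, abs_of_nonneg (hφ0 n y)]
      calc φ n y * |⟪u n, y - p⟫| ≤ (1 / 2 : ℝ) ^ n * (1 * ‖y - p‖) := by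
            apply mul_le_mul (hφle n y) _ (abs_nonneg _) (by positivity)
            calc |⟪u n, y - p⟫| ≤ ‖u n‖ * ‖y - p‖ := abs_real_inner_le_norm _ _
              _ ≤ 1 * ‖y - p‖ :=
                  mul_le_mul_of_nonneg_right (hbnd n).2.2 (norm_nonneg _)
        _ = (1 / 2 : ℝ) ^ n * ‖y - p‖ := by ring
    have : μ * dX y / 3 * Φ y = ∑' n, μ * dX y / 3 * φ n y := by
      rw [← tsum_mul_left]
    rw [this]
    apply Summable.tsum_le_tsum _ ((hφsum y).mul_left _) hsum1
    intro n
    rcases eq_or_lt_of_le (hb0 n y) with hz | hpos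
    · have : φ n y = 0 := by simp [hφ, ← hz]
      simp [this]
    · have hball : dist y (c n) < ρ n := by
        by_contra hcon
        push_neg at hcon
        have : b n y = 0 := by
          simp only [hb, max_eq_right_iff]
          linarith
        rw [this] at hpos; exact absurd hpos (lt_irrefl 0)
      have := hest n y hball p hpX hpd
      calc μ * dX y / 3 * φ n y ≤ ⟪u n, y - p⟫ * φ n y := by
            apply mul_le_mul_of_nonneg_right this (hφ0 n y)
        _ = φ n y * ⟪u n, y - p⟫ := by ring
  -- define W
  set V : Set (EuclideanSpace ℝ (Fin d)) := {y | 0 < dX y ∧ dX y < r} with hV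
  have hVopen : IsOpen V := by
    have h1 : Continuous dX := Metric.continuous_infDist_pt X
    exact (isOpen_lt continuous_const h1).inter (isOpen_lt h1 continuous_const)
  set W : E → EuclideanSpace ℝ (Fin d) :=
    fun y => if y ∈ V then dX y • ((Φ y)⁻¹ • S y) else 0 with hW
  have hWnorm : ∀ y, ‖W y‖ ≤ dX y := by
    intro y
    by_cases hy : y ∈ V
    · simp only [hW, if_pos hy]
      rw [norm_smul, norm_smul, Real.norm_eq_abs, Real.norm_eq_abs,
        abs_of_nonneg Metric.infDist_nonneg, abs_of_nonneg (inv_nonneg.mpr (hΦ0 y))]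
      have hpos := hΦpos y hy.1 hy.2
      calc dX y * ((Φ y)⁻¹ * ‖S y‖) ≤ dX y * ((Φ y)⁻¹ * Φ y) := by
            apply mul_le_mul_of_nonneg_left _ Metric.infDist_nonneg
            exact mul_le_mul_of_nonneg_left (hSnorm y) (inv_nonneg.mpr (hΦ0 y))
        _ = dX y * 1 := by rw [inv_mul_cancel₀ (ne_of_gt hpos)]
        _ = dX y := mul_one _
    · simp only [hW, if_neg hy, norm_zero]
      exact Metric.infDist_nonneg
  refine ⟨W, hWnorm, ?_, ?_⟩
  · -- continuity on {dX < r}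
    intro y hy
    rcases eq_or_lt_of_le (Metric.infDist_nonneg : 0 ≤ dX y) with h0 | h0
    · -- dX y = 0 : squeeze
      have hW0 : W y = 0 := by
        simp only [hW, hV]
        rw [if_neg]
        simp only [Set.mem_setOf_eq, not_and_or]
        left; linarith
      rw [ContinuousWithinAt, hW0]
      apply squeeze_zero_norm hWnorm
      have : Filter.Tendsto dX (nhdsWithin y {y : E | Metric.infDist y X < r}) (nhds (dX y)) :=
        ((Metric.continuous_infDist_pt X).continuousAt).continuousWithinAt
      rw [show dX y = 0 from h0.symm] at this
      exact this
    · -- dX y > 0 : locally the formula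
      have hyV : y ∈ V := ⟨h0, hy⟩
      apply ContinuousAt.continuousWithinAt
      have hloc : ∀ᶠ z in nhds y, W z = dX z • ((Φ z)⁻¹ • S z) := by
        filter_upwards [hVopen.mem_nhds hyV] with z hz
        simp only [hW, if_pos hz]
      rw [continuousAt_congr hloc]
      apply ContinuousAt.fun_smul
      · exact ((Metric.continuous_infDist_pt X).continuousAt)
      · apply ContinuousAt.fun_smul
        · exact (hΦcont.continuousAt).inv₀ (ne_of_gt (hΦpos y hyV.1 hyV.2))
        · exact hScont.continuousAt
  · -- inner product bound
    intro y h1 h2 p hpX hpd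
    have hyV : y ∈ V := ⟨h1, h2⟩
    simp only [hW, if_pos hyV]
    rw [real_inner_smul_right, real_inner_smul_right]
    have hΦp := hΦpos y h1 h2
    have := hSinner y h1 h2 p hpX hpd
    calc μ * dX y ^ 2 / 3 = dX y * ((Φ y)⁻¹ * (μ * dX y / 3 * Φ y)) := by
          field_simp
      _ ≤ dX y * ((Φ y)⁻¹ * ⟪y - p, S y⟫) := by
          apply mul_le_mul_of_nonneg_left _ Metric.infDist_nonneg
          exact mul_le_mul_of_nonneg_left this (inv_nonneg.mpr (hΦ0 y))

lemma step_est (X : Set (EuclideanSpace ℝ (Fin d))) (hXne : X.Nonempty) (hXcp : IsCompact X)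
    {μ r : ℝ} (hμ0 : 0 < μ) (hμ1 : μ ≤ 1)
    (W : E → E) (hWnorm : ∀ y : E, ‖W y‖ ≤ Metric.infDist y X)
    (hWinner : ∀ y : E, 0 < Metric.infDist y X → Metric.infDist y X < r →
      ∀ p ∈ X, dist y p = Metric.infDist y X →
        μ * (Metric.infDist y X) ^ 2 / 3 ≤ ⟪y - p, W y⟫)
    (y : E) (hy : Metric.infDist y X < r) {l : ℝ} (hl0 : 0 ≤ l) (hl1 : l ≤ μ / 3) :
    (Metric.infDist (y - l • W y) X) ^ 2 ≤ (1 - μ * l / 3) * (Metric.infDist y X) ^ 2 := by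
  rcases eq_or_lt_of_le (Metric.infDist_nonneg : 0 ≤ Metric.infDist y X) with h0 | h0
  · -- W y = 0
    have hW0 : W y = 0 := by
      have := hWnorm y
      rw [← h0] at this
      simpa using norm_le_zero_iff.mp this
    rw [hW0, smul_zero, sub_zero, ← h0]
    norm_num
  · obtain ⟨p, hpX, hpd⟩ := hXcp.exists_infDist_eq_dist hXne y
    have hpd' : dist y p = Metric.infDist y X := hpd.symm
    have hest := hWinner y h0 hy p hpX hpd'
    have hWle := hWnorm y
    set D := Metric.infDist y X with hD
    have h1 : Metric.infDist (y - l • W y) X ≤ ‖(y - p) - l • W y‖ := by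
      have := Metric.infDist_le_dist_of_mem (x := y - l • W y) hpX
      rw [dist_eq_norm] at this
      calc Metric.infDist (y - l • W y) X ≤ ‖y - l • W y - p‖ := this
        _ = ‖(y - p) - l • W y‖ := by congr 1; abel
    have h2 : ‖(y - p) - l • W y‖ ^ 2 =
        ‖y - p‖ ^ 2 - 2 * (l * ⟪y - p, W y⟫) + l ^ 2 * ‖W y‖ ^ 2 := by
      rw [norm_sub_sq_real, real_inner_smul_right, norm_smul, Real.norm_eq_abs,
        abs_of_nonneg hl0, mul_pow]
    have h3 : ‖y - p‖ = D := by rw [← dist_eq_norm, hpd']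
    have h4 : (Metric.infDist (y - l • W y) X) ^ 2 ≤ ‖(y - p) - l • W y‖ ^ 2 :=
      pow_le_pow_left₀ Metric.infDist_nonneg h1 2
    rw [h2, h3] at h4
    have h5 : ‖W y‖ ^ 2 ≤ D ^ 2 := pow_le_pow_left₀ (norm_nonneg _) hWle 2
    have hA : l * (μ * D ^ 2 / 3) ≤ l * ⟪y - p, W y⟫ :=
      mul_le_mul_of_nonneg_left hest hl0
    have hB : l ^ 2 * ‖W y‖ ^ 2 ≤ l ^ 2 * D ^ 2 :=
      mul_le_mul_of_nonneg_left h5 (sq_nonneg l)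
    have hC : l ^ 2 * D ^ 2 ≤ (μ / 3 * l) * D ^ 2 := by
      apply mul_le_mul_of_nonneg_right _ (sq_nonneg D)
      calc l ^ 2 = l * l := sq l
        _ ≤ (μ / 3) * l := mul_le_mul_of_nonneg_right hl1 hl0
    nlinarith [hA, hB, hC]

lemma dynamics (X : Set (EuclideanSpace ℝ (Fin d))) (hXne : X.Nonempty) (hXcp : IsCompact X)
    {μ r : ℝ} (hμ0 : 0 < μ) (hμ1 : μ ≤ 1) (hr : 0 < r)
    (W : E → E) (hWnorm : ∀ y : E, ‖W y‖ ≤ Metric.infDist y X)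
    (hWcont : ContinuousOn W {y : E | Metric.infDist y X < r})
    (hWinner : ∀ y : E, 0 < Metric.infDist y X → Metric.infDist y X < r →
      ∀ p ∈ X, dist y p = Metric.infDist y X →
        μ * (Metric.infDist y X) ^ 2 / 3 ≤ ⟪y - p, W y⟫) :
    (∃ H : {y : E | Metric.infDist y X < r} × unitInterval →
        {y : E | Metric.infDist y X < r}, Continuous H ∧
      (∀ y : {y : E | Metric.infDist y X < r}, H (y, 0) = y) ∧
      (∀ y : {y : E | Metric.infDist y X < r}, (H (y, 1) : E) ∈ X) ∧
      (∀ (y : {y : E | Metric.infDist y X < r}) (t : unitInterval),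
        (y : E) ∈ X → H (y, t) = y)) ∧
    Nonempty (ContinuousMap.HomotopyEquiv X {y : E | Metric.infDist y X < r}) := by
  classical
  have hXcl : IsClosed X := hXcp.isClosed
  set S : Set (EuclideanSpace ℝ (Fin d)) := {y : E | Metric.infDist y X < r} with hSdef
  have sq_mono : ∀ a b : ℝ, 0 ≤ a → 0 ≤ b → a ^ 2 ≤ b ^ 2 → a ≤ b := by
    intro a b ha hb h; nlinarith
  set θ : ℝ := Real.sqrt (1 - μ ^ 2 / 9) with hθdef
  have hμ9 : 0 ≤ 1 - μ ^ 2 / 9 := by nlinarith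
  have hθ0 : 0 ≤ θ := Real.sqrt_nonneg _
  have hθsq : θ ^ 2 = 1 - μ ^ 2 / 9 := Real.sq_sqrt hμ9
  have hθ1 : θ < 1 := by
    calc θ = Real.sqrt (1 - μ ^ 2 / 9) := hθdef
      _ < Real.sqrt 1 := Real.sqrt_lt_sqrt hμ9 (by nlinarith)
      _ = 1 := Real.sqrt_one
  set T : E → E := fun y => y - (μ / 3) • W y with hTdef
  -- basic step facts
  have hstep : ∀ y : E, Metric.infDist y X < r → ∀ l : ℝ, 0 ≤ l → l ≤ μ / 3 →
      Metric.infDist (y - l • W y) X ≤ Metric.infDist y X := by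
    intro y hy l hl0 hl1
    apply sq_mono _ _ Metric.infDist_nonneg Metric.infDist_nonneg
    calc (Metric.infDist (y - l • W y) X) ^ 2
        ≤ (1 - μ * l / 3) * (Metric.infDist y X) ^ 2 :=
          step_est X hXne hXcp hμ0 hμ1 W hWnorm hWinner y hy hl0 hl1
      _ ≤ 1 * (Metric.infDist y X) ^ 2 := by
          apply mul_le_mul_of_nonneg_right _ (sq_nonneg _)
          nlinarith
      _ = _ := one_mul _
  have hstepT : ∀ y : E, Metric.infDist y X < r →
      Metric.infDist (T y) X ≤ θ * Metric.infDist y X := by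
    intro y hy
    apply sq_mono _ _ Metric.infDist_nonneg (mul_nonneg hθ0 Metric.infDist_nonneg)
    have h1 := step_est X hXne hXcp hμ0 hμ1 W hWnorm hWinner y hy
      (le_of_lt (by positivity : (0:ℝ) < μ / 3)) (le_refl (μ / 3))
    calc (Metric.infDist (T y) X) ^ 2
        ≤ (1 - μ * (μ / 3) / 3) * (Metric.infDist y X) ^ 2 := h1
      _ = (θ * Metric.infDist y X) ^ 2 := by
          rw [mul_pow, hθsq]; ring
  -- iterates
  have hiter : ∀ y : E, y ∈ S → ∀ k : ℕ,
      Metric.infDist (T^[k] y) X ≤ θ ^ k * Metric.infDist y X ∧ T^[k] y ∈ S := by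
    intro y hy
    intro k
    induction k with
    | zero => simpa using hy
    | succ k ih =>
      have hmem : T^[k] y ∈ S := ih.2
      constructor
      · rw [Function.iterate_succ_apply']
        calc Metric.infDist (T (T^[k] y)) X ≤ θ * Metric.infDist (T^[k] y) X :=
              hstepT _ hmem
          _ ≤ θ * (θ ^ k * Metric.infDist y X) :=
              mul_le_mul_of_nonneg_left ih.1 hθ0
          _ = θ ^ (k + 1) * Metric.infDist y X := by ring
      · rw [Function.iterate_succ_apply']
        show Metric.infDist (T (T^[k] y)) X < r
        calc Metric.infDist (T (T^[k] y)) X ≤ θ * Metric.infDist (T^[k] y) X :=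
              hstepT _ hmem
          _ ≤ 1 * Metric.infDist (T^[k] y) X :=
              mul_le_mul_of_nonneg_right hθ1.le Metric.infDist_nonneg
          _ = Metric.infDist (T^[k] y) X := one_mul _
          _ < r := hmem
  have hdiff : ∀ y : E, y ∈ S → ∀ k : ℕ,
      T^[k + 1] y - T^[k] y = -((μ / 3) • W (T^[k] y)) := by
    intro y hy k
    rw [Function.iterate_succ_apply']
    show T (T^[k] y) - T^[k] y = _
    simp only [hTdef]
    abel
  have hdiffnorm : ∀ y : E, y ∈ S → ∀ k : ℕ,
      ‖T^[k + 1] y - T^[k] y‖ ≤ μ / 3 * (θ ^ k * Metric.infDist y X) := by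
    intro y hy k
    rw [hdiff y hy k, norm_neg, norm_smul, Real.norm_eq_abs,
      abs_of_nonneg (by positivity : (0:ℝ) ≤ μ / 3)]
    apply mul_le_mul_of_nonneg_left _ (by positivity)
    exact (hWnorm _).trans (hiter y hy k).1
  have hsummable : ∀ y : E, y ∈ S → Summable (fun k => T^[k + 1] y - T^[k] y) := by
    intro y hy
    apply Summable.of_norm_bounded ((summable_geometric_of_lt_one hθ0 hθ1).mul_left
      (μ / 3 * Metric.infDist y X))
    intro k
    calc ‖T^[k + 1] y - T^[k] y‖ ≤ μ / 3 * (θ ^ k * Metric.infDist y X) :=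
          hdiffnorm y hy k
      _ = μ / 3 * Metric.infDist y X * θ ^ k := by ring
  -- limit map
  set L : E → E := fun y => y + ∑' k, (T^[k + 1] y - T^[k] y) with hLdef
  have htendL : ∀ y : E, y ∈ S →
      Filter.Tendsto (fun n => T^[n] y) Filter.atTop (nhds (L y)) := by
    intro y hy
    have hs := hsummable y hy
    have hhs := hs.hasSum
    rw [hs.hasSum_iff_tendsto_nat] at hhs
    have : ∀ n : ℕ, T^[n] y = y + ∑ k ∈ Finset.range n, (T^[k + 1] y - T^[k] y) := by
      intro n
      rw [Finset.sum_range_sub (fun k => T^[k] y)]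
      simp
    exact (tendsto_const_nhds.add hhs).congr (fun n => (this n).symm)
  have hLX : ∀ y : E, y ∈ S → L y ∈ X := by
    intro y hy
    rw [(hXcl.mem_iff_infDist_zero hXne)]
    have h1 : Filter.Tendsto (fun n => Metric.infDist (T^[n] y) X) Filter.atTop
        (nhds (Metric.infDist (L y) X)) :=
      ((Metric.continuous_infDist_pt X).continuousAt).tendsto.comp (htendL y hy)
    have h2 : Filter.Tendsto (fun n : ℕ => θ ^ n * Metric.infDist y X) Filter.atTop
        (nhds 0) := by
      rw [show (0:ℝ) = 0 * Metric.infDist y X by ring]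
      exact (tendsto_pow_atTop_nhds_zero_of_lt_one hθ0 hθ1).mul_const _
    have h3 : Metric.infDist (L y) X ≤ 0 :=
      le_of_tendsto_of_tendsto' h1 h2 (fun n => (hiter y hy n).1)
    exact le_antisymm h3 Metric.infDist_nonneg
  -- subtype level step map
  have hTmem : ∀ y : E, y ∈ S → T y ∈ S := by
    intro y hy
    have h := (hiter y hy 1).2
    rwa [Function.iterate_one] at h
  set Tmap : S → S := fun y => ⟨T y.val, hTmem y.val y.2⟩ with hTmapdef
  have hWrest : Continuous (fun y : S => W y.val) := hWcont.restrict
  have hTmapcont : Continuous Tmap := by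
    apply Continuous.subtype_mk
    exact continuous_subtype_val.sub (hWrest.fun_const_smul _)
  have hTiter : ∀ (k : ℕ) (y : S), T^[k] y.val = (Tmap^[k] y).val := by
    intro k
    induction k with
    | zero => intro y; simp
    | succ k ih =>
      intro y
      rw [Function.iterate_succ_apply, Function.iterate_succ_apply, ← ih (Tmap y)]
  have hTkcont : ∀ k : ℕ, Continuous (fun y : S => T^[k] y.val) := by
    intro k
    have : (fun y : S => T^[k] y.val) = fun y : S => (Tmap^[k] y).val := by
      funext y; exact hTiter k y
    rw [this]
    exact continuous_subtype_val.comp (hTmapcont.iterate k)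
  -- clamp functions
  set c : ℕ → unitInterval → ℝ :=
    fun k t => min 1 (max 0 ((2:ℝ) ^ (k + 1) * (t.val - (1 - (1/2:ℝ) ^ k)))) with hcdef
  have hc0 : ∀ k t, 0 ≤ c k t := fun k t => le_min zero_le_one (le_max_left 0 _)
  have hc1 : ∀ k t, c k t ≤ 1 := fun k t => min_le_left _ _
  have hccont : ∀ k, Continuous (c k) := by
    intro k
    apply Continuous.min continuous_const
    apply Continuous.max continuous_const
    exact (continuous_const.mul ((continuous_subtype_val).sub continuous_const))
  have hczero : ∀ (k : ℕ) (t : unitInterval), t.val ≤ 1 - (1/2:ℝ) ^ k → c k t = 0 := by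
    intro k t ht
    have harg : (2:ℝ) ^ (k + 1) * (t.val - (1 - (1/2:ℝ) ^ k)) ≤ 0 := by
      apply mul_nonpos_of_nonneg_of_nonpos (by positivity)
      linarith
    simp only [hcdef]
    rw [max_eq_left harg, min_eq_right zero_le_one]
  have hcone : ∀ (k : ℕ) (t : unitInterval), 1 - (1/2:ℝ) ^ (k + 1) ≤ t.val → c k t = 1 := by
    intro k t ht
    have hpow : (2:ℝ) ^ (k + 1) * (1/2:ℝ) ^ (k + 1) = 1 := by
      rw [← mul_pow]; norm_num
    have harg : 1 ≤ (2:ℝ) ^ (k + 1) * (t.val - (1 - (1/2:ℝ) ^ k)) := by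
      have h2 : (1/2:ℝ) ^ k - (1/2:ℝ) ^ (k + 1) = (1/2:ℝ) ^ (k + 1) := by
        rw [pow_succ]; ring
      have h3 : (1/2:ℝ) ^ (k + 1) ≤ t.val - (1 - (1/2:ℝ) ^ k) := by linarith
      calc (1:ℝ) = (2:ℝ) ^ (k + 1) * (1/2:ℝ) ^ (k + 1) := hpow.symm
        _ ≤ _ := mul_le_mul_of_nonneg_left h3 (by positivity)
    simp only [hcdef]
    rw [min_eq_left]
    exact le_max_of_le_right harg
  -- the homotopy at the level of E
  set H0 : S × unitInterval → E :=
    fun z => (z.1 : E) + ∑' k, c k z.2 • (T^[k + 1] (z.1 : E) - T^[k] (z.1 : E)) with hH0def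
  have htermsummable : ∀ (y : S) (t : unitInterval),
      Summable (fun k => c k t • (T^[k + 1] (y : E) - T^[k] (y : E))) := by
    intro y t
    apply Summable.of_norm_bounded ((summable_geometric_of_lt_one hθ0 hθ1).mul_left
      (μ / 3 * Metric.infDist (y : E) X))
    intro k
    rw [norm_smul, Real.norm_eq_abs, abs_of_nonneg (hc0 k t)]
    calc c k t * ‖T^[k + 1] (y : E) - T^[k] (y : E)‖
        ≤ 1 * (μ / 3 * (θ ^ k * Metric.infDist (y : E) X)) := by
          apply mul_le_mul (hc1 k t) (hdiffnorm (y : E) y.2 k) (norm_nonneg _) zero_le_one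
      _ = μ / 3 * Metric.infDist (y : E) X * θ ^ k := by ring
  have hH0cont : Continuous H0 := by
    apply Continuous.add (continuous_subtype_val.comp continuous_fst)
    apply continuous_tsum
    · intro k
      apply Continuous.smul ((hccont k).comp continuous_snd)
      exact ((hTkcont (k + 1)).comp continuous_fst).sub ((hTkcont k).comp continuous_fst)
    · exact (summable_geometric_of_lt_one hθ0 hθ1).mul_left (μ / 3 * r)
    · intro k z
      rw [norm_smul, Real.norm_eq_abs, abs_of_nonneg (hc0 k z.2)]
      calc c k z.2 * ‖T^[k + 1] (z.1 : E) - T^[k] (z.1 : E)‖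
          ≤ 1 * (μ / 3 * (θ ^ k * Metric.infDist (z.1 : E) X)) :=
            mul_le_mul (hc1 k z.2) (hdiffnorm (z.1 : E) z.1.2 k) (norm_nonneg _) zero_le_one
        _ ≤ 1 * (μ / 3 * (θ ^ k * r)) := by
            have h1 : Metric.infDist (z.1 : E) X ≤ r := le_of_lt z.1.2
            gcongr
        _ = μ / 3 * r * θ ^ k := by ring
  -- value at t = 0
  have hH0zero : ∀ y : S, H0 (y, 0) = (y : E) := by
    intro y
    have hz : ∀ k, c k (0 : unitInterval) = 0 := by
      intro k
      apply hczero
      simp only [Set.Icc.coe_zero]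
      have : (1/2:ℝ) ^ k ≤ 1 := pow_le_one₀ (by norm_num) (by norm_num)
      linarith
    simp only [hH0def, hz, zero_smul, tsum_zero, add_zero]
  -- value at t = 1
  have hH0one : ∀ y : S, H0 (y, 1) = L (y : E) := by
    intro y
    have ho : ∀ k, c k (1 : unitInterval) = 1 := by
      intro k
      apply hcone
      simp only [Set.Icc.coe_one]
      have : (0:ℝ) < (1/2:ℝ) ^ (k + 1) := by positivity
      linarith
    simp only [hH0def, ho, one_smul, hLdef]
  -- fixed on X
  have hH0fix : ∀ (y : S) (t : unitInterval), (y : E) ∈ X → H0 (y, t) = (y : E) := by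
    intro y t hyX
    have hd0 : Metric.infDist (y : E) X = 0 := Metric.infDist_zero_of_mem hyX
    have hW0 : W (y : E) = 0 := by
      have := hWnorm (y : E)
      rw [hd0] at this
      simpa using norm_le_zero_iff.mp this
    have hTfix : T (y : E) = (y : E) := by simp only [hTdef, hW0, smul_zero, sub_zero]
    have hTk : ∀ k, T^[k] (y : E) = (y : E) := fun k => Function.iterate_fixed hTfix k
    simp only [hH0def, hTk, sub_self, smul_zero, tsum_zero, add_zero]
  -- membership of values
  have hH0mem : ∀ z : S × unitInterval, H0 z ∈ S := by
    rintro ⟨y, t⟩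
    rcases eq_or_lt_of_le t.2.2 with h1 | h1
    · -- t = 1
      have : t = 1 := Subtype.ext h1
      rw [this, hH0one y]
      show Metric.infDist (L (y : E)) X < r
      rw [Metric.infDist_zero_of_mem (hLX (y : E) y.2)]
      exact hr
    · -- t < 1
      have hex : ∃ k : ℕ, t.val ≤ 1 - (1/2:ℝ) ^ (k + 1) := by
        obtain ⟨n, hn⟩ := exists_pow_lt_of_lt_one (by linarith : (0:ℝ) < 1 - t.val)
          (by norm_num : (1/2:ℝ) < 1)
        refine ⟨n, ?_⟩
        have : (1/2:ℝ) ^ (n + 1) ≤ (1/2:ℝ) ^ n :=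
          pow_le_pow_of_le_one (by norm_num) (by norm_num) (Nat.le_succ n)
        linarith
      set K := Nat.find hex with hKdef
      have hK1 : t.val ≤ 1 - (1/2:ℝ) ^ (K + 1) := Nat.find_spec hex
      have hK2 : ∀ m : ℕ, m < K → 1 - (1/2:ℝ) ^ (m + 1) < t.val := by
        intro m hm
        have := Nat.find_min hex hm
        push_neg at this
        linarith
      -- terms vanish beyond K
      have hvanish : ∀ k, k ∉ Finset.range (K + 1) →
          c k t • (T^[k + 1] (y : E) - T^[k] (y : E)) = 0 := by
        intro k hk
        rw [Finset.mem_range, not_lt] at hk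
        have hk' : K + 1 ≤ k := hk
        have : t.val ≤ 1 - (1/2:ℝ) ^ k := by
          have : (1/2:ℝ) ^ k ≤ (1/2:ℝ) ^ (K + 1) :=
            pow_le_pow_of_le_one (by norm_num) (by norm_num) hk'
          linarith
        rw [hczero k t this, zero_smul]
      have hsum : H0 (y, t) = (y : E) + (∑ k ∈ Finset.range (K + 1),
          c k t • (T^[k + 1] (y : E) - T^[k] (y : E))) := by
        simp only [hH0def]
        rw [tsum_eq_sum hvanish]
      have hones : ∀ k ∈ Finset.range K, c k t • (T^[k + 1] (y : E) - T^[k] (y : E)) =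
          T^[k + 1] (y : E) - T^[k] (y : E) := by
        intro k hk
        rw [Finset.mem_range] at hk
        rw [hcone k t (hK2 k hk).le, one_smul]
      have hcollapse : H0 (y, t) = T^[K] (y : E) +
          c K t • (T^[K + 1] (y : E) - T^[K] (y : E)) := by
        rw [hsum, Finset.sum_range_succ, Finset.sum_congr rfl hones,
          Finset.sum_range_sub (fun k => T^[k] (y : E))]
        simp only [Function.iterate_zero_apply]
        abel
      rw [hcollapse]
      have hdiffK : T^[K + 1] (y : E) - T^[K] (y : E) = -((μ / 3) • W (T^[K] (y : E))) :=
        hdiff (y : E) y.2 K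
      rw [hdiffK]
      have hrewrite : T^[K] (y : E) + c K t • -((μ / 3) • W (T^[K] (y : E))) =
          T^[K] (y : E) - (c K t * (μ / 3)) • W (T^[K] (y : E)) := by
        rw [smul_neg, smul_smul]
        abel
      rw [hrewrite]
      show Metric.infDist _ X < r
      have hmemK : T^[K] (y : E) ∈ S := (hiter (y : E) y.2 K).2
      have hl0 : 0 ≤ c K t * (μ / 3) := mul_nonneg (hc0 K t) (by positivity)
      have hl1 : c K t * (μ / 3) ≤ μ / 3 := by
        have := hc1 K t
        nlinarith [hc0 K t]
      calc Metric.infDist (T^[K] (y : E) - (c K t * (μ / 3)) • W (T^[K] (y : E))) X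
          ≤ Metric.infDist (T^[K] (y : E)) X := hstep _ hmemK _ hl0 hl1
        _ < r := hmemK
  -- bundle
  set H : S × unitInterval → S := fun z => ⟨H0 z, hH0mem z⟩ with hHdef
  have hHcont : Continuous H := hH0cont.subtype_mk _
  have hXsubS : ∀ p : X, (p : E) ∈ S := by
    intro p
    show Metric.infDist (p : E) X < r
    rw [Metric.infDist_zero_of_mem p.2]
    exact hr
  set ι : C(X, S) := ⟨fun p => ⟨(p : E), hXsubS p⟩, continuous_subtype_val.subtype_mk _⟩
    with hιdef
  have hρmem : ∀ y : S, H0 (y, 1) ∈ X := by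
    intro y
    rw [hH0one]
    exact hLX _ y.2
  set ρm : C(S, X) := ⟨fun y => ⟨H0 (y, 1), hρmem y⟩,
    (hH0cont.comp (continuous_id.prodMk continuous_const)).subtype_mk _⟩ with hρdef
  refine ⟨⟨H, hHcont, ?_, ?_, ?_⟩, ?_⟩
  · intro y
    exact Subtype.ext (hH0zero y)
  · intro y
    exact hρmem y
  · intro y t hy
    exact Subtype.ext (hH0fix y t hy)
  · -- homotopy equivalence
    have hcomp : ρm.comp ι = ContinuousMap.id X := by
      apply ContinuousMap.ext
      intro p
      apply Subtype.ext
      show H0 (ι p, 1) = (p : E)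
      exact hH0fix (ι p) 1 p.2
    have F : (ι.comp ρm).Homotopy (ContinuousMap.id S) :=
      { toFun := fun q => H (q.2, unitInterval.symm q.1)
        continuous_toFun := by
          apply hHcont.comp
          exact continuous_snd.prodMk (unitInterval.continuous_symm.comp continuous_fst)
        map_zero_left := by
          intro y
          simp only [unitInterval.symm_zero]
          apply Subtype.ext
          rfl
        map_one_left := by
          intro y
          simp only [unitInterval.symm_one]
          exact Subtype.ext (hH0zero y) }
    exact ⟨⟨ι, ρm, hcomp ▸ ContinuousMap.Homotopic.refl (ContinuousMap.id X), ⟨F⟩⟩⟩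

/-- A nonempty compact set `X ⊆ ℝ^d` with `μ`-reach at least `τμ > 0`
deformation retracts from its open `r`-offset for `0 < r ≤ τμ`; in particular `X`
and the offset are homotopy equivalent. -/
theorem stmt1 (d : ℕ) (X : Set (EuclideanSpace ℝ (Fin d))) (hXne : X.Nonempty)
    (hXcp : IsCompact X) (μ : ℝ) (hμ : μ ∈ Set.Ioc (0 : ℝ) 1) (τμ : ℝ) (hτμ : 0 < τμ)
    (hμreach : ∀ x : EuclideanSpace ℝ (Fin d), x ∉ X → Metric.infDist x X < τμ →
      μ * Metric.infDist x X ≤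
        Metric.infDist x (convexHull ℝ {p | p ∈ X ∧ dist x p = Metric.infDist x X}))
    (r : ℝ) (hr : 0 < r) (hrτ : r ≤ τμ)
    (Xr : Set (EuclideanSpace ℝ (Fin d)))
    (hXr : Xr = {y : EuclideanSpace ℝ (Fin d) | Metric.infDist y X < r}) :
    (∃ H : Xr × unitInterval → Xr, Continuous H ∧
      (∀ y : Xr, H (y, 0) = y) ∧
      (∀ y : Xr, (H (y, 1) : EuclideanSpace ℝ (Fin d)) ∈ X) ∧
      (∀ (y : Xr) (t : unitInterval), (y : EuclideanSpace ℝ (Fin d)) ∈ X → H (y, t) = y)) ∧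
    Nonempty (ContinuousMap.HomotopyEquiv X Xr) := by
  subst hXr
  obtain ⟨W, hWnorm, hWcont, hWinner⟩ := exists_W X hXne hXcp hμ.1 hμreach hrτ
  exact dynamics X hXne hXcp hμ.1 hμ.2 hr W hWnorm hWcont hWinner
end

section
/- Let X ⊆ ℝ^d be a nonempty closed set with reach at least τ > 0 (every z with infDist(z, X) < τ has a unique nearest point in X). Let 0 < r ≤ τ and let X^r := {y ∈ ℝ^d : d_X(y) < r} be the open r-offset. Then the complement ℝ^d \ X deformation retracts onto ℝ^d \ X^r: there exists a continuous map H : (ℝ^d \ X) × [0,1] → ℝ^d \ X such that H(x, 0) = x for all x, H(x, 1) ∈ ℝ^d \ X^r for all x, and H(x, t) = x for all x ∈ ℝ^d \ X^r and all t. In particular, ℝ^d \ X and ℝ^d \ X^r (with subspace topologies) are homotopy equivalent. -/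
open Metric Filter Set
open scoped RealInnerProductSpace Topology unitInterval

set_option linter.unusedVariables false
set_option linter.unusedSectionVars false

open Metric Filter Set
open scoped RealInnerProductSpace Topology unitInterval

section Aux

variable {E : Type*} [NormedAddCommGroup E] [InnerProductSpace ℝ E] [ProperSpace E]

/-- Sequential continuity of the nearest-point projection where it is unique. -/
lemma aux_pi_tendsto {X : Set E} {τ : ℝ} {π : E → E}
    (hXcl : IsClosed X) (hπX : ∀ z, π z ∈ X)
    (hπd : ∀ z, Metric.infDist z X = dist z (π z))
    (huniq : ∀ z, Metric.infDist z X < τ → ∀ q ∈ X, dist z q = Metric.infDist z X → q = π z)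
    {z : E} (hz : Metric.infDist z X < τ) {f : ℕ → E} (hf : Tendsto f atTop (𝓝 z)) :
    Tendsto (fun n => π (f n)) atTop (𝓝 (π z)) := by
  obtain ⟨R, hR⟩ : ∃ R, ∀ n, dist (f n) z ≤ R := by
    obtain ⟨R, hR⟩ := hf.isCompact_insert_range.isBounded.subset_closedBall z
    exact ⟨R, fun n => hR (Or.inr ⟨n, rfl⟩)⟩
  have hmem : ∀ n, π (f n) ∈ X ∩ closedBall z (Metric.infDist z X + 2 * R + 1) := by
    intro n
    refine ⟨hπX _, mem_closedBall.mpr ?_⟩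
    have h1 : dist (π (f n)) (f n) = Metric.infDist (f n) X := by
      rw [dist_comm]; exact (hπd (f n)).symm
    have h2 : Metric.infDist (f n) X ≤ Metric.infDist z X + dist (f n) z :=
      Metric.infDist_le_infDist_add_dist
    have h3 : dist (π (f n)) z ≤ dist (π (f n)) (f n) + dist (f n) z := dist_triangle _ _ _
    have h4 := hR n
    have h5 : (0:ℝ) ≤ dist (f n) z := dist_nonneg
    linarith
  apply tendsto_of_subseq_tendsto
  intro ns hns
  obtain ⟨q, hqmem, φ, hφ, hφt⟩ :=
    ((isCompact_closedBall z _).inter_left hXcl).tendsto_subseq (fun n => hmem (ns n))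
  refine ⟨φ, ?_⟩
  have hfn : Tendsto (fun n => f (ns (φ n))) atTop (𝓝 z) :=
    hf.comp (hns.comp hφ.tendsto_atTop)
  have hφt' : Tendsto (fun n => π (f (ns (φ n)))) atTop (𝓝 q) := hφt
  have hd1 : Tendsto (fun n => dist (f (ns (φ n))) (π (f (ns (φ n))))) atTop (𝓝 (dist z q)) :=
    hfn.dist hφt'
  have hd2 : Tendsto (fun n => dist (f (ns (φ n))) (π (f (ns (φ n))))) atTop
      (𝓝 (Metric.infDist z X)) := by
    have h := ((continuous_infDist_pt X).tendsto z).comp hfn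
    simpa only [Function.comp_def, hπd] using h
  have hq : dist z q = Metric.infDist z X := tendsto_nhds_unique hd1 hd2
  have hqz : q = π z := huniq z hz q hqmem.1 hq
  rw [← hqz]
  exact hφt'

lemma aux_pi_continuousAt {X : Set E} {τ : ℝ} {π : E → E}
    (hXcl : IsClosed X) (hπX : ∀ z, π z ∈ X)
    (hπd : ∀ z, Metric.infDist z X = dist z (π z))
    (huniq : ∀ z, Metric.infDist z X < τ → ∀ q ∈ X, dist z q = Metric.infDist z X → q = π z)
    {z : E} (hz : Metric.infDist z X < τ) : ContinuousAt π z :=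
  tendsto_iff_seq_tendsto.mpr fun u hu => aux_pi_tendsto hXcl hπX hπd huniq hz hu

end Aux

section Aux2

set_option linter.unusedSectionVars false
set_option maxHeartbeats 1000000

variable {E : Type*} [NormedAddCommGroup E] [InnerProductSpace ℝ E] [ProperSpace E]

/-- Key growth lemma. -/
lemma aux_far_point {X : Set E} {τ : ℝ} {π : E → E}
    (hXcl : IsClosed X) (hπX : ∀ z, π z ∈ X)
    (hπd : ∀ z, Metric.infDist z X = dist z (π z))
    (huniq : ∀ z, Metric.infDist z X < τ → ∀ q ∈ X, dist z q = Metric.infDist z X → q = π z)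
    {x : E} (hx0 : 0 < Metric.infDist x X) {ρ : ℝ} (hρ : 0 < ρ)
    (hxρ : Metric.infDist x X + ρ < τ) :
    ∃ w, dist w x ≤ ρ ∧ Metric.infDist w X = Metric.infDist x X + ρ := by
  set c := Metric.infDist x X with hc
  set K : Set E := closedBall x ρ ∩ {w | Metric.infDist w X ≤ c + ρ} with hK
  have hKcomp : IsCompact K :=
    (isCompact_closedBall x ρ).inter_right
      (isClosed_le (continuous_infDist_pt X) continuous_const)
  have hKV : ∀ w ∈ K, Metric.infDist w X < τ := fun w hw => lt_of_le_of_lt hw.2 hxρ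
  have hπK : ContinuousOn π K := fun w hw =>
    (aux_pi_continuousAt hXcl hπX hπd huniq (hKV w hw)).continuousWithinAt
  have hunif := Metric.uniformContinuousOn_iff.mp
    (hKcomp.uniformContinuousOn_of_continuous hπK)
  obtain ⟨w₀, hw₀b, hw₀max⟩ := (isCompact_closedBall x ρ).exists_isMaxOn
    ⟨x, mem_closedBall_self hρ.le⟩ (continuous_infDist_pt X).continuousOn
  have hw₀ρ : dist w₀ x ≤ ρ := mem_closedBall.mp hw₀b
  have hub : Metric.infDist w₀ X ≤ c + ρ := by
    have h := Metric.infDist_le_infDist_add_dist (x := w₀) (y := x) (s := X)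
    rw [← hc] at h
    linarith only [h, hw₀ρ]
  have hlb : ∀ ξ, 0 < ξ → ξ ≤ min c ρ → c + ρ - ξ ≤ Metric.infDist w₀ X := by
    intro ξ hξ hξm
    have hξc : ξ ≤ c := hξm.trans (min_le_left _ _)
    have hξρ : ξ ≤ ρ := hξm.trans (min_le_right _ _)
    set ω := ξ * c / (8 * ρ) with hω
    have hωpos : 0 < ω := by positivity
    obtain ⟨δ, hδpos, hδ⟩ := hunif ω hωpos
    obtain ⟨n, hn⟩ := exists_nat_gt (max (ρ / δ) (4 * ρ ^ 2 / (ξ * c)))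
    have hnpos : (0:ℝ) < (n:ℝ) := by
      have h1 : (0:ℝ) < ρ / δ := by positivity
      exact lt_of_lt_of_le h1 ((le_max_left _ _).trans hn.le)
    set ε := ρ / n with hε
    have hεpos : 0 < ε := by positivity
    have hεδ : ε < δ := by
      have h1 : ρ / δ < (n:ℝ) := lt_of_le_of_lt (le_max_left _ _) hn
      have h2 : ρ < (n:ℝ) * δ := by
        have := (div_lt_iff₀ hδpos).mp h1
        linarith only [this]
      rw [hε, div_lt_iff₀ hnpos]
      linarith only [h2]
    have hεξ : ε ≤ ξ * c / (4 * ρ) := by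
      have h1 : 4 * ρ ^ 2 / (ξ * c) < (n:ℝ) := lt_of_le_of_lt (le_max_right _ _) hn
      have h2 : 4 * ρ ^ 2 < (n:ℝ) * (ξ * c) := by
        have := (div_lt_iff₀ (by positivity : (0:ℝ) < ξ * c)).mp h1
        linarith only [this]
      rw [hε, div_le_div_iff₀ hnpos (by positivity : (0:ℝ) < 4 * ρ)]
      nlinarith only [h2, hρ]
    have hnε : (n:ℝ) * ε = ρ := by
      rw [hε]; field_simp
    have h2ω : 2 * ω = ξ * c / (4 * ρ) := by rw [hω]; ring
    have hsum : ε + 2 * ω ≤ ξ * c / (2 * ρ) := by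
      rw [h2ω] at *
      have h3 : ξ * c / (4 * ρ) + ξ * c / (4 * ρ) = ξ * c / (2 * ρ) := by ring
      linarith only [h3, hεξ]
    set β := ε * (ε + 2 * ω) / c with hβ
    have hβnn : 0 ≤ β := by positivity
    have hβcEq : β * c = ε * (ε + 2 * ω) := by
      rw [hβ]; field_simp
    have hsumc : ξ * c / (2 * ρ) ≤ c := by
      rw [div_le_iff₀ (by positivity : (0:ℝ) < 2 * ρ)]
      nlinarith only [hξρ, hx0, hρ, hξ]
    have hβε : β ≤ ε := by
      have h1 : ε * (ε + 2 * ω) ≤ ε * c := by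
        have h4 := hsum.trans hsumc
        nlinarith only [h4, hεpos]
      rw [hβ, div_le_iff₀ hx0]
      linarith only [h1]
    have hnβ : (n:ℝ) * β ≤ ξ / 2 := by
      have e1 : (n:ℝ) * β = ρ * (ε + 2 * ω) / c := by
        rw [hβ, ← hnε]; ring
      rw [e1, div_le_iff₀ hx0]
      have h1 : ρ * (ε + 2 * ω) ≤ ρ * (ξ * c / (2 * ρ)) :=
        mul_le_mul_of_nonneg_left hsum hρ.le
      have h2 : ρ * (ξ * c / (2 * ρ)) = ξ / 2 * c := by field_simp
      linarith only [h1, h2]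
    -- the discrete scheme
    set w : ℕ → E := fun k =>
      Nat.rec x (fun _ W => W + (ε / Metric.infDist W X) • (W - π W)) k with hwdef
    have wzero : w 0 = x := rfl
    have wsucc : ∀ k, w (k+1) = w k + (ε / Metric.infDist (w k) X) • (w k - π (w k)) :=
      fun _ => rfl
    have main : ∀ k, k ≤ n → dist (w k) x ≤ k * ε ∧ Metric.infDist (w k) X ≤ c + k * ε ∧
        c + k * ε - k * β ≤ Metric.infDist (w k) X := by
      intro k
      induction k with
      | zero =>
        intro _
        refine ⟨by simp [wzero], ?_, ?_⟩
        · simp only [wzero, Nat.cast_zero, zero_mul, add_zero, ← hc]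
          exact le_rfl
        · simp only [wzero, Nat.cast_zero, zero_mul, add_zero, sub_zero, ← hc]
          exact le_rfl
      | succ k ih =>
        intro hk
        obtain ⟨ih1, ih2, ih3⟩ := ih (Nat.le_of_succ_le hk)
        have hkn : (k:ℝ) ≤ (n:ℝ) := by exact_mod_cast Nat.le_of_succ_le hk
        have hk1n : ((k:ℝ) + 1) ≤ (n:ℝ) := by exact_mod_cast hk
        have hkε : (k:ℝ) * ε ≤ ρ := by
          have h4 := mul_le_mul_of_nonneg_right hkn hεpos.le
          linarith only [h4, hnε]
        have hk1ε : ((k:ℝ) + 1) * ε ≤ ρ := by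
          have h4 := mul_le_mul_of_nonneg_right hk1n hεpos.le
          linarith only [h4, hnε]
        have hknn : (0:ℝ) ≤ (k:ℝ) := Nat.cast_nonneg k
        have hkβ : (k:ℝ) * β ≤ ξ / 2 := by
          have h4 := mul_le_mul_of_nonneg_right hkn hβnn
          linarith only [h4, hnβ]
        have hkεnn : (0:ℝ) ≤ (k:ℝ) * ε := by positivity
        have hDlow : c / 2 ≤ Metric.infDist (w k) X := by linarith only [ih3, hkεnn, hkβ, hξc]
        have hDpos : 0 < Metric.infDist (w k) X := by linarith only [hDlow, hx0]
        have hDτ : Metric.infDist (w k) X < τ := by linarith only [ih2, hkε, hxρ]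
        have hWK : w k ∈ K := by
          refine ⟨mem_closedBall.mpr (le_trans ih1 hkε), ?_⟩
          simp only [mem_setOf_eq]
          linarith only [ih2, hkε]
        have hPn : ‖w k - π (w k)‖ = Metric.infDist (w k) X := by
          rw [← dist_eq_norm]; exact (hπd (w k)).symm
        have hyW : dist (w (k+1)) (w k) = ε := by
          rw [wsucc k, dist_self_add_left, norm_smul, hPn, Real.norm_eq_abs,
            abs_of_pos (by positivity)]
          field_simp
        have h1 : dist (w (k+1)) x ≤ ((k:ℝ) + 1) * ε := by
          have := dist_triangle (w (k+1)) (w k) x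
          rw [hyW] at this
          linarith only [this, ih1]
        have h2 : Metric.infDist (w (k+1)) X ≤ Metric.infDist (w k) X + ε := by
          have h := Metric.infDist_le_infDist_add_dist (x := w (k+1)) (y := w k) (s := X)
          rw [hyW] at h
          exact h
        have h2' : Metric.infDist (w (k+1)) X ≤ c + ((k:ℝ) + 1) * ε := by linarith only [h2, ih2]
        have hyK : w (k+1) ∈ K := by
          refine ⟨mem_closedBall.mpr (le_trans h1 hk1ε), ?_⟩
          simp only [mem_setOf_eq]
          linarith only [h2', hk1ε]
        have hPq : dist (π (w k)) (π (w (k+1))) < ω := by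
          refine hδ (w k) hWK (w (k+1)) hyK ?_
          rw [dist_comm, hyW]; exact hεδ
        -- inner product estimates
        have hsplit : w (k+1) - π (w (k+1)) =
            (w k - π (w (k+1))) + (ε / Metric.infDist (w k) X) • (w k - π (w k)) := by
          rw [wsucc k]; abel
        have hexp : ‖w (k+1) - π (w (k+1))‖ ^ 2 =
            ‖w k - π (w (k+1))‖ ^ 2 +
              2 * ((ε / Metric.infDist (w k) X) * ⟪w k - π (w (k+1)), w k - π (w k)⟫) +
              (ε / Metric.infDist (w k) X) ^ 2 * (Metric.infDist (w k) X) ^ 2 := by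
          rw [hsplit, norm_add_sq_real, real_inner_smul_right, norm_smul, Real.norm_eq_abs,
            abs_of_pos (by positivity : (0:ℝ) < ε / Metric.infDist (w k) X), mul_pow, hPn]
        have hinner : (Metric.infDist (w k) X) ^ 2 - ω * Metric.infDist (w k) X ≤
            ⟪w k - π (w (k+1)), w k - π (w k)⟫ := by
          have hsp : w k - π (w (k+1)) = (w k - π (w k)) + (π (w k) - π (w (k+1))) := by abel
          rw [hsp, inner_add_left, real_inner_self_eq_norm_sq, hPn]
          have hb1 : |⟪π (w k) - π (w (k+1)), w k - π (w k)⟫| ≤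
              ‖π (w k) - π (w (k+1))‖ * ‖w k - π (w k)‖ := abs_real_inner_le_norm _ _
          have hb2 : ‖π (w k) - π (w (k+1))‖ ≤ ω := by
            rw [← dist_eq_norm]; exact hPq.le
          rw [hPn] at hb1
          have hb3 : ‖π (w k) - π (w (k+1))‖ * Metric.infDist (w k) X ≤
              ω * Metric.infDist (w k) X := mul_le_mul_of_nonneg_right hb2 hDpos.le
          have hb4 := (abs_le.mp (hb1.trans hb3)).1
          linarith only [hb4]
        have hWq : Metric.infDist (w k) X ≤ ‖w k - π (w (k+1))‖ := by
          rw [← dist_eq_norm]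
          exact Metric.infDist_le_dist_of_mem (hπX (w (k+1)))
        have hlow : (Metric.infDist (w k) X) ^ 2 + 2 * ε * Metric.infDist (w k) X
            - 2 * ε * ω + ε ^ 2 ≤ ‖w (k+1) - π (w (k+1))‖ ^ 2 := by
          have e2 : (ε / Metric.infDist (w k) X) *
              ((Metric.infDist (w k) X) ^ 2 - ω * Metric.infDist (w k) X) =
              ε * Metric.infDist (w k) X - ε * ω := by
            field_simp
          have e3 : (ε / Metric.infDist (w k) X) ^ 2 * (Metric.infDist (w k) X) ^ 2 = ε ^ 2 := by
            field_simp
          have e4 : (Metric.infDist (w k) X) ^ 2 ≤ ‖w k - π (w (k+1))‖ ^ 2 :=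
            pow_le_pow_left₀ hDpos.le hWq 2
          have e5 : (ε / Metric.infDist (w k) X) *
                ((Metric.infDist (w k) X) ^ 2 - ω * Metric.infDist (w k) X) ≤
              (ε / Metric.infDist (w k) X) * ⟪w k - π (w (k+1)), w k - π (w k)⟫ :=
            mul_le_mul_of_nonneg_left hinner (by positivity)
          rw [hexp, e3]
          rw [e2] at e5
          linarith only [e4, e5]
        have hT2 : (Metric.infDist (w k) X + ε - β) ^ 2 ≤ ‖w (k+1) - π (w (k+1))‖ ^ 2 := by
          have hp1 : c / 2 * β ≤ Metric.infDist (w k) X * β :=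
            mul_le_mul_of_nonneg_right hDlow hβnn
          have hp2 : β * β ≤ ε * β := mul_le_mul_of_nonneg_right hβε hβnn
          have hp3 : 0 ≤ ε * β := mul_nonneg hεpos.le hβnn
          nlinarith only [hlow, hp1, hp2, hp3, hβcEq]
        have hTnn : 0 ≤ Metric.infDist (w k) X + ε - β := by linarith only [hDlow, hβε, hεpos, hx0]
        have h3 : Metric.infDist (w k) X + ε - β ≤ Metric.infDist (w (k+1)) X := by
          have hyq : Metric.infDist (w (k+1)) X = ‖w (k+1) - π (w (k+1))‖ := by
            rw [hπd (w (k+1)), dist_eq_norm]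
          rw [hyq]
          exact le_of_pow_le_pow_left₀ two_ne_zero (norm_nonneg _) hT2
        refine ⟨?_, ?_, ?_⟩
        · push_cast
          exact h1
        · push_cast
          exact h2'
        · push_cast
          linarith only [h3, ih3]
    obtain ⟨g1, g2, g3⟩ := main n le_rfl
    have hwnball : w n ∈ closedBall x ρ := mem_closedBall.mpr (by linarith only [hnε, g1])
    have hmax := hw₀max hwnball
    simp only [mem_setOf_eq] at hmax
    linarith only [g3, hnβ, hnε, hmax, hξ]
  -- conclude
  have hge : c + ρ ≤ Metric.infDist w₀ X := by
    by_contra hcon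
    push_neg at hcon
    have hξpos : 0 < min (min c ρ) ((c + ρ - Metric.infDist w₀ X) / 2) :=
      lt_min (lt_min hx0 hρ) (by linarith)
    have h1 := hlb _ hξpos (min_le_left _ _)
    have h2 : min (min c ρ) ((c + ρ - Metric.infDist w₀ X) / 2) ≤
        (c + ρ - Metric.infDist w₀ X) / 2 := min_le_right _ _
    linarith
  exact ⟨w₀, hw₀ρ, le_antisymm hub hge⟩

end Aux2

section Aux3

set_option linter.unusedSectionVars false

variable {E : Type*} [NormedAddCommGroup E] [InnerProductSpace ℝ E] [ProperSpace E]

/-- Rigidity: a point at distance `≤ ρ` from `x` whose distance to `X` is exactly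
`infDist x X + ρ` must lie on the normal ray through `x`. -/
lemma aux_rigid {X : Set E} {π : E → E}
    (hπX : ∀ z, π z ∈ X) (hπd : ∀ z, Metric.infDist z X = dist z (π z))
    {x w : E} (hx0 : 0 < Metric.infDist x X) {ρ : ℝ} (hρ : 0 < ρ)
    (hw1 : dist w x ≤ ρ) (hw2 : Metric.infDist w X = Metric.infDist x X + ρ) :
    w = x + (ρ / Metric.infDist x X) • (x - π x) := by
  set c := Metric.infDist x X with hc
  have hxp : ‖x - π x‖ = c := by
    rw [← dist_eq_norm, hc]; exact (hπd x).symm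
  have hwx : ‖w - x‖ = ρ := by
    have h1 : Metric.infDist w X ≤ Metric.infDist x X + dist w x :=
      Metric.infDist_le_infDist_add_dist
    rw [hw2, ← hc] at h1
    have h2 : ρ ≤ dist w x := by linarith only [h1]
    rw [← dist_eq_norm]
    exact le_antisymm hw1 h2
  have hwp_ge : c + ρ ≤ ‖w - π x‖ := by
    rw [← dist_eq_norm, ← hw2]
    exact Metric.infDist_le_dist_of_mem (hπX x)
  have hadd : ‖(w - x) + (x - π x)‖ = ‖w - x‖ + ‖x - π x‖ := by
    have he : (w - x) + (x - π x) = w - π x := by abel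
    rw [he, hwx, hxp]
    refine le_antisymm ?_ (by linarith only [hwp_ge])
    calc ‖w - π x‖ ≤ ‖w - x‖ + ‖x - π x‖ := by
          have := norm_add_le (w - x) (x - π x)
          rw [he] at this; exact this
    _ = ρ + c := by rw [hwx, hxp]
  have hray : SameRay ℝ (w - x) (x - π x) := sameRay_iff_norm_add.mpr hadd
  have hwx0 : w - x ≠ 0 := by
    intro h
    rw [h, norm_zero] at hwx
    exact hρ.ne hwx
  have hxp0 : x - π x ≠ 0 := by
    intro h
    rw [h, norm_zero] at hxp
    exact hx0.ne hxp
  obtain ⟨a, ha, haeq⟩ := hray.exists_pos_left hwx0 hxp0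
  have hnorm : a * ρ = c := by
    have h := congrArg norm haeq
    rw [norm_smul, Real.norm_eq_abs, abs_of_pos ha, hwx, hxp] at h
    exact h
  have hkey : w - x = (ρ / c) • (x - π x) := by
    have h1 : (ρ / c) • (x - π x) = (ρ / c) • (a • (w - x)) := by rw [haeq]
    rw [smul_smul] at h1
    have h2 : ρ / c * a = 1 := by
      field_simp
      linarith only [hnorm]
    rw [h2, one_smul] at h1
    exact h1.symm
  have := hkey
  rw [sub_eq_iff_eq_add] at this
  rw [this]
  abel

/-- Distance along the outward normal ray, below `τ`. -/
lemma aux_ray_dist_lt {X : Set E} {τ : ℝ} {π : E → E}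
    (hXcl : IsClosed X) (hπX : ∀ z, π z ∈ X)
    (hπd : ∀ z, Metric.infDist z X = dist z (π z))
    (huniq : ∀ z, Metric.infDist z X < τ → ∀ q ∈ X, dist z q = Metric.infDist z X → q = π z)
    {x : E} (hx0 : 0 < Metric.infDist x X)
    {s : ℝ} (hs1 : Metric.infDist x X ≤ s) (hs2 : s < τ) :
    Metric.infDist (x + ((s - Metric.infDist x X) / Metric.infDist x X) • (x - π x)) X = s := by
  rcases eq_or_lt_of_le hs1 with heq | hlt
  · rw [← heq]
    simp
  · obtain ⟨w, hw1, hw2⟩ := aux_far_point hXcl hπX hπd huniq hx0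
      (by linarith only [hlt] : (0:ℝ) < s - Metric.infDist x X) (by linarith only [hs2])
    have hrig := aux_rigid hπX hπd hx0 (by linarith only [hlt] : (0:ℝ) < s - Metric.infDist x X)
      hw1 hw2
    rw [← hrig, hw2]
    ring

/-- Distance along the outward normal ray, up to and including `τ`. -/
lemma aux_ray_dist {X : Set E} {τ : ℝ} {π : E → E}
    (hXcl : IsClosed X) (hπX : ∀ z, π z ∈ X)
    (hπd : ∀ z, Metric.infDist z X = dist z (π z))
    (huniq : ∀ z, Metric.infDist z X < τ → ∀ q ∈ X, dist z q = Metric.infDist z X → q = π z)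
    {x : E} (hx0 : 0 < Metric.infDist x X)
    {s : ℝ} (hs1 : Metric.infDist x X ≤ s) (hs2 : s ≤ τ) :
    Metric.infDist (x + ((s - Metric.infDist x X) / Metric.infDist x X) • (x - π x)) X = s := by
  rcases lt_or_eq_of_le hs2 with hsτ | hsτ
  · exact aux_ray_dist_lt hXcl hπX hπd huniq hx0 hs1 hsτ
  -- s = τ
  subst hsτ
  set c := Metric.infDist x X with hc
  have hxp : ‖x - π x‖ = c := by
    rw [← dist_eq_norm, hc]; exact (hπd x).symm
  rcases eq_or_lt_of_le hs1 with heq | hlt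
  · rw [← heq]
    simp
    exact hc.symm
  · have key : ∀ s', c ≤ s' → s' < s →
        |Metric.infDist (x + ((s - c) / c) • (x - π x)) X - s| ≤ 2 * (s - s') := by
      intro s' h1 h2
      have hs' : Metric.infDist (x + ((s' - c) / c) • (x - π x)) X = s' :=
        aux_ray_dist_lt hXcl hπX hπd huniq hx0 (by rw [← hc]; exact h1) h2
      have hdd : dist (x + ((s - c) / c) • (x - π x)) (x + ((s' - c) / c) • (x - π x))
          = s - s' := by
        rw [dist_eq_norm]
        have he : (x + ((s - c) / c) • (x - π x)) - (x + ((s' - c) / c) • (x - π x)) =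
            (((s - c) / c) - ((s' - c) / c)) • (x - π x) := by
          rw [sub_smul]; abel
        have hcc : ((s - c) / c) - ((s' - c) / c) = (s - s') / c := by ring
        rw [he, hcc, norm_smul, Real.norm_eq_abs, hxp,
          abs_of_nonneg (div_nonneg (by linarith only [h2]) hx0.le)]
        field_simp
      have hL1 : Metric.infDist (x + ((s - c) / c) • (x - π x)) X ≤ s' + (s - s') := by
        have h := Metric.infDist_le_infDist_add_dist
          (x := x + ((s - c) / c) • (x - π x)) (y := x + ((s' - c) / c) • (x - π x)) (s := X)
        rw [hs', hdd] at h
        exact h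
      have hL2 : s' ≤ Metric.infDist (x + ((s - c) / c) • (x - π x)) X + (s - s') := by
        have h := Metric.infDist_le_infDist_add_dist
          (x := x + ((s' - c) / c) • (x - π x)) (y := x + ((s - c) / c) • (x - π x)) (s := X)
        rw [hs', dist_comm, hdd] at h
        exact h
      rw [abs_le]
      constructor <;> linarith only [hL1, hL2, h2]
    have habs : ∀ ε, 0 < ε → |Metric.infDist (x + ((s - c) / c) • (x - π x)) X - s| ≤ ε := by
      intro ε hε
      have h1 : c ≤ max c (s - ε/2) := le_max_left _ _
      have h2 : max c (s - ε/2) < s := max_lt hlt (by linarith only [hε])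
      have h3 : s - max c (s - ε/2) ≤ ε/2 := by
        have h4 := le_max_right c (s - ε/2)
        linarith only [h4]
      have h5 := key _ h1 h2
      linarith only [h3, h5]
    have h0 : |Metric.infDist (x + ((s - c) / c) • (x - π x)) X - s| ≤ 0 := by
      by_contra hcon
      push_neg at hcon
      have h6 := habs _ (half_pos hcon)
      linarith only [h6, hcon]
    have h7 : Metric.infDist (x + ((s - c) / c) • (x - π x)) X - s = 0 := by
      have := le_antisymm h0 (abs_nonneg _)
      rwa [abs_eq_zero] at this
    linarith only [h7]

end Aux3

/-- If `X ⊆ ℝ^d` is a nonempty closed set with reach at least `τ > 0` and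
`0 < r ≤ τ`, then the complement of `X` deformation retracts onto the complement of the
open `r`-offset `X^r`; in particular they are homotopy equivalent. -/
theorem stmt2 (d : ℕ) (X : Set (EuclideanSpace ℝ (Fin d))) (hXne : X.Nonempty)
    (hXcl : IsClosed X) (τ : ℝ) (hτ : 0 < τ)
    (hreach : ∀ z : EuclideanSpace ℝ (Fin d), Metric.infDist z X < τ →
      ∃! p, p ∈ X ∧ dist z p = Metric.infDist z X)
    (r : ℝ) (hr : 0 < r) (hrτ : r ≤ τ)
    (Xr : Set (EuclideanSpace ℝ (Fin d)))
    (hXr : Xr = {y : EuclideanSpace ℝ (Fin d) | Metric.infDist y X < r}) :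
    (∃ H : ↥Xᶜ × unitInterval → ↥Xᶜ, Continuous H ∧
      (∀ y : ↥Xᶜ, H (y, 0) = y) ∧
      (∀ y : ↥Xᶜ, (H (y, 1) : EuclideanSpace ℝ (Fin d)) ∈ Xrᶜ) ∧
      (∀ (y : ↥Xᶜ) (t : unitInterval), (y : EuclideanSpace ℝ (Fin d)) ∈ Xrᶜ → H (y, t) = y)) ∧
    Nonempty (ContinuousMap.HomotopyEquiv ↥Xᶜ ↥Xrᶜ) := by
  classical
  subst hXr
  set Xr : Set (EuclideanSpace ℝ (Fin d)) := {y | Metric.infDist y X < r} with hXrdef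
  -- choose a nearest-point projection
  choose π hπX hπd using fun z : EuclideanSpace ℝ (Fin d) => hXcl.exists_infDist_eq_dist hXne z
  have huniq : ∀ z : EuclideanSpace ℝ (Fin d), Metric.infDist z X < τ → ∀ q ∈ X,
      dist z q = Metric.infDist z X → q = π z := by
    intro z hz q hq hdq
    obtain ⟨p, hp, hup⟩ := hreach z hz
    rw [hup q ⟨hq, hdq⟩, hup (π z) ⟨hπX z, (hπd z).symm⟩]
  -- positivity of distance off X
  have hpos : ∀ y : EuclideanSpace ℝ (Fin d), y ∈ Xᶜ → 0 < Metric.infDist y X := by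
    intro y hy
    rcases (Metric.infDist_nonneg : 0 ≤ Metric.infDist y X).lt_or_eq with h | h
    · exact h
    · exfalso
      exact hy (((hXcl.mem_iff_infDist_zero hXne).mpr h.symm))
  -- the displacement field
  set G : EuclideanSpace ℝ (Fin d) → EuclideanSpace ℝ (Fin d) := fun y => ((max 0 (r - Metric.infDist y X)) / Metric.infDist y X) • (y - π y)
    with hG
  -- key distance formula
  have keyG : ∀ y : EuclideanSpace ℝ (Fin d), y ∈ Xᶜ → ∀ t : ℝ, 0 ≤ t → t ≤ 1 →
      Metric.infDist (y + t • G y) X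
        = Metric.infDist y X + t * max 0 (r - Metric.infDist y X) := by
    intro y hy t ht0 ht1
    have hc := hpos y hy
    by_cases hcr : Metric.infDist y X < r
    · have hmax : max 0 (r - Metric.infDist y X) = r - Metric.infDist y X :=
        max_eq_right (by linarith only [hcr])
      rw [hmax]
      have hco : t • G y = (((Metric.infDist y X + t * (r - Metric.infDist y X))
          - Metric.infDist y X) / Metric.infDist y X) • (y - π y) := by
        rw [hG]
        simp only [hmax]
        rw [smul_smul]
        congr 1
        ring
      rw [hco]
      exact aux_ray_dist hXcl hπX hπd huniq hc
        (by nlinarith only [ht0, hcr] :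
          Metric.infDist y X ≤ Metric.infDist y X + t * (r - Metric.infDist y X))
        (by nlinarith only [ht1, hcr, hrτ, ht0] :
          Metric.infDist y X + t * (r - Metric.infDist y X) ≤ τ)
    · have hmax : max 0 (r - Metric.infDist y X) = 0 :=
        max_eq_left (by linarith only [hcr])
      rw [hmax]
      rw [hG]
      simp only [hmax]
      simp
  -- membership facts
  have hmemC : ∀ y : EuclideanSpace ℝ (Fin d), y ∈ Xᶜ → ∀ t : ℝ, 0 ≤ t → t ≤ 1 →
      (y + t • G y) ∈ Xᶜ := by
    intro y hy t ht0 ht1 hmem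
    have h1 := keyG y hy t ht0 ht1
    rw [Metric.infDist_zero_of_mem hmem] at h1
    have hc := hpos y hy
    have h2 : 0 ≤ t * max 0 (r - Metric.infDist y X) := mul_nonneg ht0 (le_max_left _ _)
    linarith only [h1, hc, h2]
  have hmemR : ∀ y : EuclideanSpace ℝ (Fin d), y ∈ Xᶜ →
      r ≤ Metric.infDist (y + (1:ℝ) • G y) X := by
    intro y hy
    have h1 := keyG y hy 1 zero_le_one le_rfl
    rw [h1, one_mul]
    rcases le_total r (Metric.infDist y X) with h | h
    · have hm : max 0 (r - Metric.infDist y X) = 0 := max_eq_left (by linarith only [h])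
      rw [hm]
      linarith only [h]
    · have hm : max 0 (r - Metric.infDist y X) = r - Metric.infDist y X :=
        max_eq_right (by linarith only [h])
      rw [hm]
      linarith only []
  have hfix : ∀ y : EuclideanSpace ℝ (Fin d), r ≤ Metric.infDist y X → G y = 0 := by
    intro y h
    rw [hG]
    have hm : max 0 (r - Metric.infDist y X) = 0 := max_eq_left (by linarith only [h])
    simp only [hm, zero_div, zero_smul]
  have hsub : Xrᶜ ⊆ Xᶜ := by
    intro y hy hyX
    refine hy ?_
    rw [hXrdef]
    simp only [mem_setOf_eq, Metric.infDist_zero_of_mem hyX]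
    exact hr
  have hRc : ∀ y : EuclideanSpace ℝ (Fin d), y ∈ Xrᶜ ↔ r ≤ Metric.infDist y X := by
    intro y
    rw [hXrdef]
    simp only [mem_compl_iff, mem_setOf_eq, not_lt]
  -- continuity of the displacement field
  have hGcont : ContinuousOn G Xᶜ := by
    intro y hy
    by_cases hyτ : Metric.infDist y X < τ
    · apply ContinuousAt.continuousWithinAt
      have hd : ContinuousAt (fun z : EuclideanSpace ℝ (Fin d) => Metric.infDist z X) y :=
        (continuous_infDist_pt X).continuousAt
      have hπc : ContinuousAt π y := aux_pi_continuousAt hXcl hπX hπd huniq hyτ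
      have hne : Metric.infDist y X ≠ 0 := (hpos y hy).ne'
      rw [hG]
      exact ((continuousAt_const.max (continuousAt_const.sub hd)).div hd hne).smul
        (continuousAt_id.sub hπc)
    · have hge : r ≤ Metric.infDist y X := hrτ.trans (not_lt.mp hyτ)
      have hGy : G y = 0 := hfix y hge
      show Tendsto G (nhdsWithin y Xᶜ) (nhds (G y))
      rw [hGy]
      apply squeeze_zero_norm'
        (a := fun z : EuclideanSpace ℝ (Fin d) => max 0 (r - Metric.infDist z X))
      · filter_upwards [self_mem_nhdsWithin] with z hz
        have hc := hpos z hz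
        have hn : ‖z - π z‖ = Metric.infDist z X := by
          rw [← dist_eq_norm]; exact (hπd z).symm
        rw [hG]
        simp only
        rw [norm_smul, Real.norm_eq_abs,
          abs_of_nonneg (div_nonneg (le_max_left _ _) hc.le), hn,
          div_mul_eq_mul_div, mul_div_assoc, div_self hc.ne', mul_one]
      · have hcm : Continuous fun z : EuclideanSpace ℝ (Fin d) =>
            max 0 (r - Metric.infDist z X) :=
          continuous_const.max (continuous_const.sub (continuous_infDist_pt X))
        have h0 : max 0 (r - Metric.infDist y X) = 0 := max_eq_left (by linarith only [hge])
        have := (hcm.tendsto y).mono_left (nhdsWithin_le_nhds (s := Xᶜ))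
        rwa [h0] at this
  have hΦcont : ContinuousOn (fun p : (EuclideanSpace ℝ (Fin d)) × ℝ => p.1 + p.2 • G p.1)
      (Xᶜ ×ˢ (univ : Set ℝ)) := by
    refine ContinuousOn.add continuousOn_fst ?_
    exact ContinuousOn.smul continuousOn_snd (hGcont.comp continuousOn_fst fun p hp => hp.1)
  -- the homotopy
  have hmem' : ∀ (y : ↥Xᶜ) (t : unitInterval), (y.1 + (t : ℝ) • G y.1) ∈ Xᶜ :=
    fun y t => hmemC y.1 y.2 t.1 t.2.1 t.2.2
  set HH : ↥Xᶜ × unitInterval → ↥Xᶜ :=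
    fun yt => ⟨yt.1.1 + (yt.2 : ℝ) • G yt.1.1, hmem' yt.1 yt.2⟩ with hHH
  have hHcont : Continuous HH := by
    apply Continuous.subtype_mk
    have hg : Continuous (fun yt : ↥Xᶜ × unitInterval =>
        ((yt.1.1, (yt.2 : ℝ)) : (EuclideanSpace ℝ (Fin d)) × ℝ)) :=
      (continuous_subtype_val.comp continuous_fst).prodMk
        (continuous_subtype_val.comp continuous_snd)
    exact hΦcont.comp_continuous hg fun yt => ⟨yt.1.2, mem_univ _⟩
  have map0 : ∀ y : ↥Xᶜ, HH (y, 0) = y := by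
    intro y
    apply Subtype.ext
    show y.1 + ((0 : unitInterval) : ℝ) • G y.1 = y.1
    norm_num
  have map1 : ∀ y : ↥Xᶜ, (HH (y, 1) : EuclideanSpace ℝ (Fin d)) ∈ Xrᶜ := by
    intro y
    rw [hRc]
    show r ≤ Metric.infDist (y.1 + ((1 : unitInterval) : ℝ) • G y.1) X
    have h1 := hmemR y.1 y.2
    norm_num
    norm_num at h1
    exact h1
  have mapfix : ∀ (y : ↥Xᶜ) (t : unitInterval),
      (y : EuclideanSpace ℝ (Fin d)) ∈ Xrᶜ → HH (y, t) = y := by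
    intro y t hy
    apply Subtype.ext
    show y.1 + (t : ℝ) • G y.1 = y.1
    rw [hfix y.1 ((hRc y.1).mp hy)]
    simp
  -- the homotopy equivalence
  have hmapR' : ∀ y : ↥Xᶜ, (y.1 + (1:ℝ) • G y.1) ∈ Xrᶜ := by
    intro y
    rw [hRc]
    exact hmemR y.1 y.2
  set ρc : C(↥Xᶜ, ↥Xrᶜ) := ⟨fun y => ⟨y.1 + (1:ℝ) • G y.1, hmapR' y⟩, by
    apply Continuous.subtype_mk
    have hg : Continuous (fun y : ↥Xᶜ =>
        ((y.1, (1:ℝ)) : (EuclideanSpace ℝ (Fin d)) × ℝ)) :=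
      continuous_subtype_val.prodMk continuous_const
    exact hΦcont.comp_continuous hg fun y => ⟨y.2, mem_univ _⟩⟩ with hρcdef
  set ι : C(↥Xrᶜ, ↥Xᶜ) := ⟨fun y => ⟨y.1, hsub y.2⟩,
    continuous_subtype_val.subtype_mk _⟩ with hιdef
  have hhomot : (ι.comp ρc).Homotopic (ContinuousMap.id ↥Xᶜ) := by
    refine ⟨ContinuousMap.Homotopy.symm ?_⟩
    refine ContinuousMap.Homotopy.mk ⟨fun ty => HH (ty.2, ty.1), ?_⟩ ?_ ?_
    · exact hHcont.comp (continuous_snd.prodMk continuous_fst)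
    · intro y
      exact map0 y
    · intro y
      apply Subtype.ext
      rfl
  have hcompeq : ρc.comp ι = ContinuousMap.id ↥Xrᶜ := by
    apply ContinuousMap.ext
    intro y
    apply Subtype.ext
    show y.1 + (1:ℝ) • G y.1 = y.1
    rw [hfix y.1 ((hRc y.1).mp y.2)]
    simp
  have hhomot2 : (ρc.comp ι).Homotopic (ContinuousMap.id ↥Xrᶜ) := by
    rw [hcompeq]
  exact ⟨⟨HH, hHcont, map0, map1, mapfix⟩, ⟨⟨ρc, ι, hhomot, hhomot2⟩⟩⟩
end

section
/- Let d ≥ 1, let x_0, …, x_k ∈ ℝ^d, and let r_0, …, r_k > 0 be radii such that ‖x_i − x_j‖ < r_i + r_j for all 0 ≤ i, j ≤ k. Then there exists a point y ∈ ℝ^d such that ‖x_i − y‖ < √(2d/(d+1)) · r_i for all 0 ≤ i ≤ k. (Equivalently: every simplex of the weighted Vietoris–Rips complex Rips(𝒳, r) belongs to the weighted ambient Čech complex Čech_{ℝ^d}(𝒳, √(2d/(d+1)) r).) -/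
set_option maxHeartbeats 1000000
open Finset
open scoped RealInnerProductSpace

lemma jung_tangent (c lam l0 : ℝ) (hc : 0 ≤ c) (hl : 0 ≤ lam) (h0 : 0 < l0) :
    lam / (c + 2 * lam) ≤ (l0 * (c + 2 * l0) + c * (lam - l0)) / (c + 2 * l0) ^ 2 := by
  rcases eq_or_lt_of_le (by positivity : (0:ℝ) ≤ c + 2 * lam) with h | h
  · rw [← h, div_zero]
    have hc0 : c = 0 := by nlinarith
    have hl0 : lam = 0 := by nlinarith
    subst hc0; subst hl0
    ring_nf
    positivity
  · rw [div_le_div_iff₀ h (by positivity)]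
    nlinarith [sq_nonneg (lam - l0), mul_nonneg hc (sq_nonneg (lam - l0))]

lemma jung_sum_div {ι : Type*} [Fintype ι] [Nonempty ι] (c : ℝ) (hc : 0 ≤ c)
    (w : ι → ℝ) (hw : ∀ i, 0 ≤ w i) (hw1 : ∑ i, w i = 1)
    (hm : (Fintype.card ι : ℝ) * (1 - c) ≤ 2) :
    ∑ i, w i / (c + 2 * w i) ≤ 1 := by
  set m : ℝ := (Fintype.card ι : ℝ) with hm_def
  have hm1 : (1:ℝ) ≤ m := by
    rw [hm_def]
    exact_mod_cast Fintype.card_pos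
  have hmpos : 0 < m := by linarith
  set l0 : ℝ := 1 / m with hl0_def
  have hl0pos : 0 < l0 := by positivity
  have step : ∑ i, w i / (c + 2 * w i)
      ≤ ∑ i, (l0 * (c + 2 * l0) + c * (w i - l0)) / (c + 2 * l0) ^ 2 :=
    Finset.sum_le_sum fun i _ => jung_tangent c (w i) l0 hc (hw i) hl0pos
  have hnum : ∑ i, (l0 * (c + 2 * l0) + c * (w i - l0))
      = m * (l0 * (c + 2 * l0)) + c * (1 - m * l0) := by
    have h2 : ∑ i, c * (w i - l0) = c * (1 - m * l0) := by
      rw [← Finset.mul_sum, Finset.sum_sub_distrib, hw1, Finset.sum_const, card_univ,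
        nsmul_eq_mul, ← hm_def]
    rw [Finset.sum_add_distrib, h2, Finset.sum_const, card_univ, nsmul_eq_mul, ← hm_def]
  have hsum : ∑ i, (l0 * (c + 2 * l0) + c * (w i - l0)) / (c + 2 * l0) ^ 2
      = (m * (l0 * (c + 2 * l0)) + c * (1 - m * l0)) / (c + 2 * l0) ^ 2 := by
    rw [← Finset.sum_div, hnum]
  have hml0 : m * l0 = 1 := by
    rw [hl0_def]; field_simp
  refine step.trans ?_
  rw [hsum, hml0]
  have hden : 0 < c + 2 * l0 := by positivity
  rw [div_le_one (by positivity)]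
  -- m * (l0 * (c+2l0)) + c * 0 ≤ (c+2l0)^2
  have key : m * l0 * (c + 2 * l0) ≤ (c + 2 * l0) ^ 2 := by
    rw [hml0, one_mul, sq]
    have h4 : 1 ≤ c + 2 * l0 := by
      rw [hl0_def]
      have h5 : m * (2 * (1 / m)) = 2 := by field_simp
      have h3 : m * 1 ≤ m * (c + 2 * (1 / m)) := by nlinarith [hm]
      exact le_of_mul_le_mul_left h3 hmpos
    nlinarith
  nlinarith [key]

-- helper: removing the diagonal from a double sum
lemma double_sum_offdiag {ι : Type*} [Fintype ι] [DecidableEq ι] (g : ι → ι → ℝ) :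
    ∑ i, ∑ j, (if i = j then 0 else g i j) = (∑ i, ∑ j, g i j) - ∑ i, g i i := by
  rw [← Finset.sum_sub_distrib]
  apply Finset.sum_congr rfl
  intro i _
  have h1 : ∀ j : ι, (if i = j then 0 else g i j)
      = g i j - (if i = j then g i j else 0) := by
    intro j; split <;> simp_all
  rw [Finset.sum_congr rfl fun j _ => h1 j, Finset.sum_sub_distrib,
    Finset.sum_ite_eq Finset.univ i (fun j => g i j) ]
  simp

variable {F : Type*} [NormedAddCommGroup F] [InnerProductSpace ℝ F]

lemma double_inner_zero {ι : Type*} [Fintype ι] (w : ι → ℝ) (v : ι → F)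
    (hzero : ∑ i, w i • v i = 0) :
    ∑ i, ∑ j, w i * w j * ⟪v i, v j⟫ = 0 := by
  have key : ∑ i, ∑ j, w i * w j * ⟪v i, v j⟫
      = ⟪∑ i, w i • v i, ∑ j, w j • v j⟫ := by
    rw [sum_inner]
    apply Finset.sum_congr rfl
    intro i _
    rw [real_inner_smul_left, inner_sum, Finset.mul_sum]
    apply Finset.sum_congr rfl
    intro j _
    rw [real_inner_smul_right]
    ring
  rw [key, hzero, inner_zero_left]

-- the key double-sum identity
lemma jung_identity {ι : Type*} [Fintype ι] (w : ι → ℝ) (z : ι → F) (y : F)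
    (hw1 : ∑ i, w i = 1) (hy : ∑ i, w i • z i = y) :
    ∑ i, ∑ j, w i * w j * ‖z i - z j‖ ^ 2 = 2 * ∑ i, w i * ‖z i - y‖ ^ 2 := by
  have hzero : ∑ i, w i • (z i - y) = 0 := by
    simp only [smul_sub]
    rw [Finset.sum_sub_distrib, ← Finset.sum_smul, hw1, hy, one_smul, sub_self]
  have hinner : ∑ i, ∑ j, w i * w j * ⟪z i - y, z j - y⟫ = 0 :=
    double_inner_zero w (fun i => z i - y) hzero
  have n1 : ∀ i j : ι, ‖z i - z j‖ ^ 2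
      = ‖z i - y‖ ^ 2 + ‖z j - y‖ ^ 2 - 2 * ⟪z i - y, z j - y⟫ := by
    intro i j
    have h := norm_sub_sq_real (z i - y) (z j - y)
    have h2 : z i - y - (z j - y) = z i - z j := by abel
    rw [h2] at h
    linarith
  set T := ∑ j, w j * ‖z j - y‖ ^ 2 with hT
  have inner_eq : ∀ i : ι, ∑ j, ((w i * ‖z i - y‖ ^ 2) * w j + w i * (w j * ‖z j - y‖ ^ 2)
      - 2 * (w i * w j * ⟪z i - y, z j - y⟫))
      = w i * ‖z i - y‖ ^ 2 + w i * T - 2 * ∑ j, w i * w j * ⟪z i - y, z j - y⟫ := by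
    intro i
    rw [Finset.sum_sub_distrib, Finset.sum_add_distrib, ← Finset.mul_sum, ← Finset.mul_sum,
      ← Finset.mul_sum, hw1, mul_one, ← hT]
  calc ∑ i, ∑ j, w i * w j * ‖z i - z j‖ ^ 2
      = ∑ i, ∑ j, ((w i * ‖z i - y‖ ^ 2) * w j + w i * (w j * ‖z j - y‖ ^ 2)
          - 2 * (w i * w j * ⟪z i - y, z j - y⟫)) := by
        apply Finset.sum_congr rfl; intro i _
        apply Finset.sum_congr rfl; intro j _
        rw [n1 i j]; ring
    _ = ∑ i, (w i * ‖z i - y‖ ^ 2 + w i * T - 2 * ∑ j, w i * w j * ⟪z i - y, z j - y⟫) :=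
        Finset.sum_congr rfl fun i _ => inner_eq i
    _ = T + (∑ i, w i) * T - 2 * ∑ i, ∑ j, w i * w j * ⟪z i - y, z j - y⟫ := by
        rw [Finset.sum_sub_distrib, Finset.sum_add_distrib, ← Finset.sum_mul, ← Finset.mul_sum,
          ← hT]
    _ = 2 * T := by rw [hw1, hinner]; ring

lemma jung_core {d : ℕ} (hd : 1 ≤ d) {F : Type*} [NormedAddCommGroup F]
    [InnerProductSpace ℝ F] {ι : Type*} [Fintype ι] [Nonempty ι] [DecidableEq ι]
    (hcard : Fintype.card ι ≤ d + 1)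
    (z : ι → F) (ρ : ι → ℝ) (hρ : ∀ i, 0 < ρ i)
    (w : ι → ℝ) (hw : ∀ i, 0 ≤ w i) (hw1 : ∑ i, w i = 1)
    (y : F) (hy : ∑ i, w i • z i = y)
    (t : ℝ) (ht : 0 < t) (hdist : ∀ i, ‖z i - y‖ = t * ρ i)
    (hpair : ∀ i j, ‖z i - z j‖ < ρ i + ρ j) :
    t ^ 2 < 2 * d / (d + 1) := by
  have hd1 : (1:ℝ) ≤ (d:ℝ) := by exact_mod_cast hd
  have hD : (0:ℝ) < (d:ℝ) + 1 := by linarith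
  set c : ℝ := ((d:ℝ) - 1) / ((d:ℝ) + 1) with hc_def
  have hc : 0 ≤ c := by
    rw [hc_def]; apply div_nonneg <;> linarith
  have hc1 : 1 + c = 2 * (d:ℝ) / ((d:ℝ) + 1) := by
    rw [hc_def]; field_simp; ring
  set S : ℝ := ∑ i, w i * ρ i ^ 2 with hS_def
  set R : ℝ := ∑ i, w i * ρ i with hR_def
  set Q : ℝ := ∑ i, w i ^ 2 * ρ i ^ 2 with hQ_def
  have hQ0 : 0 ≤ Q := Finset.sum_nonneg fun i _ => by positivity
  obtain ⟨i0, -, hwi0⟩ : ∃ i ∈ Finset.univ, 0 < w i := by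
    by_contra hcon
    push_neg at hcon
    have : ∑ i, w i = 0 := Finset.sum_eq_zero fun i hi =>
      le_antisymm (hcon i hi) (hw i)
    rw [hw1] at this; norm_num at this
  have hS : 0 < S := Finset.sum_pos' (fun i _ => mul_nonneg (hw i) (sq_nonneg _))
    ⟨i0, Finset.mem_univ i0, mul_pos hwi0 (pow_pos (hρ i0) 2)⟩
  -- there must be two distinct indices with positive weight
  by_cases hpair2 : ∃ p : ι × ι, p.1 ≠ p.2 ∧ 0 < w p.1 ∧ 0 < w p.2
  swap
  · exfalso
    push_neg at hpair2
    have hzero : ∀ j, j ≠ i0 → w j = 0 := by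
      intro j hj
      by_contra hj0
      have hwj : 0 < w j := lt_of_le_of_ne (hw j) (Ne.symm hj0)
      have := hpair2 (i0, j) (Ne.symm hj) hwi0
      simp only at this
      linarith
    have hsum1 : ∑ i, w i = w i0 :=
      Finset.sum_eq_single i0 (fun j _ hj => hzero j hj) (fun h => absurd (mem_univ i0) h)
    have hwi1 : w i0 = 1 := by rw [← hsum1, hw1]
    have hyz : y = z i0 := by
      rw [← hy]
      rw [Finset.sum_eq_single i0 (fun j _ hj => by rw [hzero j hj, zero_smul])
        (fun h => absurd (mem_univ i0) h), hwi1, one_smul]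
    have := hdist i0
    rw [hyz, sub_self, norm_zero] at this
    nlinarith [hρ i0, this]
  obtain ⟨⟨a, b⟩, hab, hwa, hwb⟩ := hpair2
  simp only at hab hwa hwb
  -- double sum identity
  have hid := jung_identity w z y hw1 hy
  have hSid : ∑ i, w i * ‖z i - y‖ ^ 2 = t ^ 2 * S := by
    rw [hS_def, Finset.mul_sum]
    apply Finset.sum_congr rfl
    intro i _
    rw [hdist i]; ring
  -- pointwise bounds
  have hgh : ∀ i j : ι, w i * w j * ‖z i - z j‖ ^ 2 ≤ w i * w j * (ρ i + ρ j) ^ 2 := by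
    intro i j
    apply mul_le_mul_of_nonneg_left _ (mul_nonneg (hw i) (hw j))
    exact le_of_lt (pow_lt_pow_left₀ (hpair i j) (norm_nonneg _) two_ne_zero)
  have hgh_strict : w a * w b * ‖z a - z b‖ ^ 2 < w a * w b * (ρ a + ρ b) ^ 2 :=
    mul_lt_mul_of_pos_left
      (pow_lt_pow_left₀ (hpair a b) (norm_nonneg _) two_ne_zero) (mul_pos hwa hwb)
  -- strict inequality between off-diagonal sums
  have hlt : ∑ i, ∑ j, (if i = j then 0 else w i * w j * ‖z i - z j‖ ^ 2)
      < ∑ i, ∑ j, (if i = j then 0 else w i * w j * (ρ i + ρ j) ^ 2) := by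
    apply Finset.sum_lt_sum
    · intro i _
      apply Finset.sum_le_sum
      intro j _
      split
      · exact le_refl _
      · exact hgh i j
    · refine ⟨a, Finset.mem_univ a, ?_⟩
      apply Finset.sum_lt_sum
      · intro j _
        split
        · exact le_refl _
        · exact hgh a j
      · refine ⟨b, Finset.mem_univ b, ?_⟩
        rw [if_neg hab, if_neg hab]
        exact hgh_strict
  -- rewrite both off-diagonal sums
  have hG := double_sum_offdiag (fun i j => w i * w j * ‖z i - z j‖ ^ 2)
  have hH := double_sum_offdiag (fun i j => w i * w j * (ρ i + ρ j) ^ 2)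
  have hGdiag : ∑ i, w i * w i * ‖z i - z i‖ ^ 2 = 0 :=
    Finset.sum_eq_zero fun i _ => by rw [sub_self, norm_zero]; ring
  have hHdiag : ∑ i, w i * w i * (ρ i + ρ i) ^ 2 = 4 * Q := by
    rw [hQ_def, Finset.mul_sum]
    apply Finset.sum_congr rfl
    intro i _; ring
  -- full sum of h
  have hinner_h : ∀ i : ι, ∑ j, w i * w j * (ρ i + ρ j) ^ 2
      = w i * ρ i ^ 2 + (2 * (w i * ρ i)) * R + w i * S := by
    intro i
    have e : ∀ j, w i * w j * (ρ i + ρ j) ^ 2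
        = (w i * ρ i ^ 2) * w j + (2 * (w i * ρ i)) * (w j * ρ j) + w i * (w j * ρ j ^ 2) := by
      intro j; ring
    rw [Finset.sum_congr rfl fun j _ => e j, Finset.sum_add_distrib, Finset.sum_add_distrib,
      ← Finset.mul_sum, ← Finset.mul_sum, ← Finset.mul_sum, hw1, mul_one, ← hR_def, ← hS_def]
  have hsum_h : ∑ i, ∑ j, w i * w j * (ρ i + ρ j) ^ 2 = 2 * S + 2 * R ^ 2 := by
    rw [Finset.sum_congr rfl fun i _ => hinner_h i, Finset.sum_add_distrib,
      Finset.sum_add_distrib, ← Finset.sum_mul, ← Finset.mul_sum, ← Finset.sum_mul,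
      ← hS_def, ← hR_def, hw1]
    ring
  -- Cauchy-Schwarz step
  have hCS : R ^ 2 ≤ c * S + 2 * Q := by
    set f : ι → ℝ := fun i => Real.sqrt (w i / (c + 2 * w i)) with hf_def
    set g : ι → ℝ := fun i => Real.sqrt (w i * (c + 2 * w i)) * ρ i with hg_def
    have hfg : ∀ i, f i * g i = w i * ρ i := by
      intro i
      rcases eq_or_lt_of_le (by nlinarith [hc, hw i] : (0:ℝ) ≤ c + 2 * w i) with h | h
      · have hwi : w i = 0 := by nlinarith [hw i, hc]
        simp [hf_def, hg_def, hwi]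
      · rw [hf_def, hg_def, ← mul_assoc, ← Real.sqrt_mul (div_nonneg (hw i) h.le)]
        have : w i / (c + 2 * w i) * (w i * (c + 2 * w i)) = w i ^ 2 := by
          rw [div_mul_eq_mul_div, div_eq_iff h.ne']; ring
        rw [this, Real.sqrt_sq (hw i)]
    have hf2 : ∀ i, f i ^ 2 = w i / (c + 2 * w i) := by
      intro i; rw [hf_def, Real.sq_sqrt (div_nonneg (hw i) (by nlinarith [hc, hw i]))]
    have hg2 : ∀ i, g i ^ 2 = c * (w i * ρ i ^ 2) + 2 * (w i ^ 2 * ρ i ^ 2) := by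
      intro i
      rw [hg_def, mul_pow, Real.sq_sqrt (mul_nonneg (hw i) (by nlinarith [hc, hw i]))]
      ring
    have hCS0 := Finset.sum_mul_sq_le_sq_mul_sq Finset.univ f g
    have hR' : ∑ i, f i * g i = R := by
      rw [hR_def]; exact Finset.sum_congr rfl fun i _ => hfg i
    have hf2' : ∑ i, f i ^ 2 ≤ 1 := by
      rw [Finset.sum_congr rfl fun i _ => hf2 i]
      apply jung_sum_div c hc w hw hw1
      have hm' : (Fintype.card ι : ℝ) ≤ (d:ℝ) + 1 := by exact_mod_cast hcard
      have h1c : 1 - c = 2 / ((d:ℝ) + 1) := by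
        rw [hc_def]; field_simp; ring
      rw [h1c, ← mul_div_assoc, div_le_iff₀ hD]
      nlinarith [hm']
    have hg2' : ∑ i, g i ^ 2 = c * S + 2 * Q := by
      rw [Finset.sum_congr rfl fun i _ => hg2 i, Finset.sum_add_distrib,
        ← Finset.mul_sum, ← Finset.mul_sum, ← hS_def, ← hQ_def]
    have hg2nonneg : 0 ≤ c * S + 2 * Q := by positivity
    rw [hR', hg2'] at hCS0
    calc R ^ 2 ≤ (∑ i, f i ^ 2) * (c * S + 2 * Q) := hCS0
      _ ≤ 1 * (c * S + 2 * Q) := mul_le_mul_of_nonneg_right hf2' hg2nonneg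
      _ = c * S + 2 * Q := one_mul _
  -- put everything together
  rw [hG, hH, hGdiag, hHdiag, hsum_h, hid, hSid] at hlt
  have hfinal : t ^ 2 < 1 + c := by nlinarith [hlt, hCS, hS, hQ0]
  linarith [hc1 ▸ hfinal]

/-- If pairwise `‖x_i − x_j‖ < r_i + r_j`, then the balls of radii
`√(2d/(d+1)) r_i` around the `x_i` have a common point (Rips–Čech interleaving). -/
theorem stmt4 (d k : ℕ) (hd : 1 ≤ d) (x : Fin (k + 1) → EuclideanSpace ℝ (Fin d))
    (r : Fin (k + 1) → ℝ) (hr : ∀ i, 0 < r i)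
    (hrips : ∀ i j, dist (x i) (x j) < r i + r j) :
    ∃ y : EuclideanSpace ℝ (Fin d),
      ∀ i, dist (x i) y < Real.sqrt (2 * d / (d + 1)) * r i := by
  classical
  have hd1 : (1:ℝ) ≤ (d:ℝ) := by exact_mod_cast hd
  have hsqrt_pos : 0 < Real.sqrt (2 * d / (d + 1)) :=
    Real.sqrt_pos.2 (div_pos (by linarith) (by linarith))
  have hU : (Finset.univ : Finset (Fin (k + 1))).Nonempty := Finset.univ_nonempty
  set g : EuclideanSpace ℝ (Fin d) → ℝ :=
    fun p => Finset.univ.sup' hU fun i => dist (x i) p / r i with hg_def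
  have hg_cont : Continuous g := by
    rw [continuous_iff_continuousAt]
    intro p
    exact ContinuousAt.finset_sup'_apply hU fun i _ =>
      ((continuous_const.dist continuous_id).div_const (r i)).continuousAt
  set R0 : ℝ := Finset.univ.sup' hU fun i => dist (x 0) (x i) with hR0_def
  set D : Set (EuclideanSpace ℝ (Fin d)) := Metric.closedBall (x 0) R0 with hD_def
  have hxD : ∀ i, x i ∈ D := by
    intro i
    rw [hD_def, Metric.mem_closedBall, dist_comm]
    exact Finset.le_sup' (fun j => dist (x 0) (x j)) (Finset.mem_univ i)
  obtain ⟨y0, hy0D, hmin⟩ := (isCompact_closedBall (x 0) R0).exists_isMinOn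
    ⟨x 0, hxD 0⟩ hg_cont.continuousOn
  set t : ℝ := g y0 with ht_def
  have hle : ∀ i, dist (x i) y0 ≤ t * r i := by
    intro i
    have h1 : dist (x i) y0 / r i ≤ t :=
      Finset.le_sup' (fun j => dist (x j) y0 / r j) (Finset.mem_univ i)
    exact (div_le_iff₀ (hr i)).1 h1
  by_cases ht : t ≤ 0
  · refine ⟨y0, fun i => ?_⟩
    have h1 := hle i
    nlinarith [hr i, mul_pos hsqrt_pos (hr i), dist_nonneg (x := x i) (y := y0)]
  push_neg at ht
  set A : Finset (Fin (k + 1)) := Finset.univ.filter fun i => t * r i ≤ dist (x i) y0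
    with hA_def
  have hA_eq : ∀ i ∈ A, dist (x i) y0 = t * r i := by
    intro i hi
    rw [hA_def, Finset.mem_filter] at hi
    exact le_antisymm (hle i) hi.2
  obtain ⟨i1, -, hi1⟩ := Finset.exists_mem_eq_sup' hU fun i => dist (x i) y0 / r i
  have hi1A : i1 ∈ A := by
    rw [hA_def, Finset.mem_filter]
    refine ⟨Finset.mem_univ i1, ?_⟩
    have : t = dist (x i1) y0 / r i1 := by rw [ht_def, hg_def]; exact hi1
    rw [this, div_mul_cancel₀ _ (ne_of_gt (hr i1))]
  -- the minimizer lies in the convex hull of the active points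
  have hyK : y0 ∈ convexHull ℝ (x '' ↑A) := by
    by_contra hyK
    have hKne : (x '' (↑A : Set (Fin (k+1)))).Nonempty := ⟨x i1, Set.mem_image_of_mem x hi1A⟩
    have hK_compact : IsCompact (convexHull ℝ (x '' ↑A)) :=
      ((A.finite_toSet).image x).isCompact_convexHull ℝ
    have hK_conv : Convex ℝ (convexHull ℝ (x '' ↑A)) := convex_convexHull ℝ _
    obtain ⟨p, hpK, hp⟩ := exists_norm_eq_iInf_of_complete_convex
      (hKne.mono (subset_convexHull ℝ _)) hK_compact.isClosed.isComplete hK_conv y0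
    have hproj := (norm_eq_iInf_iff_real_inner_le_zero hK_conv hpK).1 hp
    have hpy : p ≠ y0 := fun h => hyK (h ▸ hpK)
    have hv : 0 < ‖p - y0‖ := by
      rw [norm_sub_pos_iff]; exact hpy
    have hkey : ∀ i ∈ A, ‖p - y0‖ ^ 2 ≤ ⟪x i - y0, p - y0⟫ := by
      intro i hi
      have h1 : ⟪y0 - p, x i - p⟫ ≤ 0 :=
        hproj _ (subset_convexHull ℝ _ (Set.mem_image_of_mem x (Finset.mem_coe.2 hi)))
      have h2 : ⟪x i - y0, p - y0⟫ = ⟪x i - p, p - y0⟫ + ⟪p - y0, p - y0⟫ := by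
        rw [← inner_add_left]
        congr 1
        abel
      have h3 : ⟪x i - p, p - y0⟫ = -⟪y0 - p, x i - p⟫ := by
        rw [real_inner_comm, ← inner_neg_left, neg_sub]
      rw [h2, h3, real_inner_self_eq_norm_sq]
      linarith
    set s0 : ℝ := Finset.univ.inf' hU fun i =>
      if t * r i ≤ dist (x i) y0 then 1/2
      else (t * r i - dist (x i) y0) / (2 * ‖p - y0‖) with hs0_def
    have hs0_pos : 0 < s0 := by
      rw [hs0_def, Finset.lt_inf'_iff]
      intro i _
      split_ifs with h
      · norm_num
      · push_neg at h
        exact div_pos (by linarith) (by positivity)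
    have hs0_half : s0 ≤ 1/2 := by
      have h1 : s0 ≤ _ := Finset.inf'_le (fun j =>
        if t * r j ≤ dist (x j) y0 then 1/2
        else (t * r j - dist (x j) y0) / (2 * ‖p - y0‖)) (Finset.mem_univ i1)
      rwa [if_pos ((Finset.mem_filter.1 hi1A).2 : t * r i1 ≤ dist (x i1) y0)] at h1
    set y1 := y0 + s0 • (p - y0) with hy1_def
    have hpD : p ∈ D := by
      have hKD : convexHull ℝ (x '' ↑A) ⊆ D := by
        apply convexHull_min
        · rintro _ ⟨i, -, rfl⟩
          exact hxD i
        · exact convex_closedBall _ _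
      exact hKD hpK
    have hy1D : y1 ∈ D := by
      have he : y1 = (1 - s0) • y0 + s0 • p := by
        rw [hy1_def]; module
      rw [he]
      exact convex_closedBall _ _ hy0D hpD (by linarith) (le_of_lt hs0_pos) (by ring)
    have hall : ∀ i, dist (x i) y1 < t * r i := by
      intro i
      by_cases hi : i ∈ A
      · have hd2 : ‖x i - y1‖ ^ 2 = ‖x i - y0‖ ^ 2
            - 2 * (s0 * ⟪x i - y0, p - y0⟫) + s0 ^ 2 * ‖p - y0‖ ^ 2 := by
          have he : x i - y1 = (x i - y0) - s0 • (p - y0) := by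
            rw [hy1_def]; module
          rw [he, norm_sub_sq_real, real_inner_smul_right, norm_smul, mul_pow,
            Real.norm_eq_abs, sq_abs]
        have hb := hkey i hi
        have hne : ‖x i - y0‖ = t * r i := by
          rw [← dist_eq_norm]; exact hA_eq i hi
        have h3 : ‖x i - y1‖ ^ 2 < (t * r i) ^ 2 := by
          rw [hd2, hne]
          nlinarith [mul_le_mul_of_nonneg_left hb (le_of_lt hs0_pos),
            mul_pos hs0_pos (pow_pos hv 2), hs0_half]
        have := lt_of_pow_lt_pow_left₀ 2 (le_of_lt (mul_pos ht (hr i))) h3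
        rwa [dist_eq_norm]
      · have hlt0 : dist (x i) y0 < t * r i := by
          rw [hA_def, Finset.mem_filter] at hi
          push_neg at hi
          exact hi (Finset.mem_univ i)
        have h4 : dist (x i) y1 ≤ dist (x i) y0 + s0 * ‖p - y0‖ := by
          have h5 : dist y0 y1 = s0 * ‖p - y0‖ := by
            rw [dist_eq_norm, hy1_def]
            have : y0 - (y0 + s0 • (p - y0)) = -(s0 • (p - y0)) := by abel
            rw [this, norm_neg, norm_smul, Real.norm_eq_abs, abs_of_pos hs0_pos]
          calc dist (x i) y1 ≤ dist (x i) y0 + dist y0 y1 := dist_triangle _ _ _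
            _ = dist (x i) y0 + s0 * ‖p - y0‖ := by rw [h5]
        have h6 : s0 ≤ (t * r i - dist (x i) y0) / (2 * ‖p - y0‖) := by
          have h7 : s0 ≤ _ := Finset.inf'_le (fun j =>
            if t * r j ≤ dist (x j) y0 then 1/2
            else (t * r j - dist (x j) y0) / (2 * ‖p - y0‖)) (Finset.mem_univ i)
          rwa [if_neg (not_le.2 hlt0)] at h7
        have h8 : s0 * (2 * ‖p - y0‖) ≤ t * r i - dist (x i) y0 :=
          (le_div_iff₀ (by positivity)).1 h6
        nlinarith [h4, h8, hs0_pos, hv]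
    have hge : g y0 ≤ g y1 := isMinOn_iff.1 hmin y1 hy1D
    have hlt : g y1 < t := by
      show Finset.univ.sup' hU (fun i => dist (x i) y1 / r i) < t
      exact (Finset.sup'_lt_iff hU).2 fun i _ => (div_lt_iff₀ (hr i)).2 (hall i)
    rw [← ht_def] at hge
    linarith
  -- Carathéodory
  rw [convexHull_eq_union] at hyK
  simp only [Set.mem_iUnion] at hyK
  obtain ⟨T, hT_sub, hT_ai, hyT⟩ := hyK
  have hT_ne : T.Nonempty := by
    rcases T.eq_empty_or_nonempty with h | h
    · rw [h] at hyT; simp at hyT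
    · exact h
  have hT_card : T.card ≤ d + 1 := by
    have h1 := hT_ai.card_le_finrank_succ
    rw [Fintype.card_coe] at h1
    have h2 : Module.finrank ℝ (vectorSpan ℝ (Set.range ((↑) : ↥T → EuclideanSpace ℝ (Fin d))))
        ≤ Module.finrank ℝ (EuclideanSpace ℝ (Fin d)) :=
      Submodule.finrank_le _
    have h3 : Module.finrank ℝ (EuclideanSpace ℝ (Fin d)) = d := finrank_euclideanSpace_fin
    omega
  rw [Finset.convexHull_eq] at hyT
  obtain ⟨wf, hw0, hw1, hwy⟩ := hyT
  rw [Finset.centerMass_eq_of_sum_1 _ _ hw1] at hwy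
  have hchoice : ∀ z : ↥T, ∃ i : Fin (k + 1), i ∈ A ∧ x i = ↑z := by
    intro z
    obtain ⟨i, hi, hxi⟩ := hT_sub z.2
    exact ⟨i, Finset.mem_coe.1 hi, hxi⟩
  choose idx hidxA hidxx using hchoice
  haveI : Nonempty ↥T := ⟨⟨hT_ne.choose, hT_ne.choose_spec⟩⟩
  have hcore : t ^ 2 < 2 * d / (d + 1) := by
    refine jung_core hd (by rw [Fintype.card_coe]; exact hT_card)
      (fun z : ↥T => (z : EuclideanSpace ℝ (Fin d))) (fun z => r (idx z))
      (fun z => hr _) (fun z => wf ↑z) (fun z => hw0 _ z.2) ?_ y0 ?_ t ht ?_ ?_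
    · rw [Finset.sum_coe_sort T (fun e => wf e)]; exact hw1
    · rw [Finset.sum_coe_sort T (fun e => wf e • e)]
      simpa using hwy
    · intro z
      show ‖(z : EuclideanSpace ℝ (Fin d)) - y0‖ = t * r (idx z)
      rw [← hidxx z, ← dist_eq_norm]
      exact hA_eq _ (hidxA z)
    · intro z z'
      show ‖(z : EuclideanSpace ℝ (Fin d)) - (z' : EuclideanSpace ℝ (Fin d))‖ < r (idx z) + r (idx z')
      rw [← hidxx z, ← hidxx z', ← dist_eq_norm]
      exact hrips _ _
  refine ⟨y0, fun i => ?_⟩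
  have hts : t < Real.sqrt (2 * d / (d + 1)) := (Real.lt_sqrt (le_of_lt ht)).2 hcore
  calc dist (x i) y0 ≤ t * r i := hle i
    _ < Real.sqrt (2 * d / (d + 1)) * r i := mul_lt_mul_of_pos_right hts (hr i)
end

section
/- Let X ⊆ ℝ^d be a nonempty closed set with reach at least τ > 0 (every z with infDist(z, X) < τ has a unique nearest point in X). Let x_1, …, x_k ∈ ℝ^d with radii r_1, …, r_k > 0 satisfying r_i ≤ τ − d_X(x_i) for each i, and suppose there exists u ∈ ℝ^d with ‖u − x_i‖ < r_i for all i. Then the nearest point p := π_X(u) of u in X exists (is unique) and satisfies ‖x_i − p‖ < √(2 r_i² + d_X(x_i)(2τ − d_X(x_i))) for all i. (Equivalently: every simplex of the ambient Čech complex Čech_{ℝ^d}(𝒳, r) with such radii belongs to the restricted Čech complex Čech_X(𝒳, r') with r'_x = √(2 r_x² + d_X(x)(2τ − d_X(x))).) -/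
open Metric RealInnerProductSpace

variable {E : Type*} [NormedAddCommGroup E] [InnerProductSpace ℝ E] [ProperSpace E]

/-- Continuity of the metric projection at a point with a unique nearest point. -/
lemma proj_cont (X : Set E) (hXcl : IsClosed X) (τ : ℝ)
    (hreach : ∀ z : E, Metric.infDist z X < τ →
      ∃! p, p ∈ X ∧ dist z p = Metric.infDist z X)
    (z : E) (hzτ : infDist z X < τ) (q : E) (hq : q ∈ X) (hqd : dist z q = infDist z X)
    (ε : ℝ) (hε : 0 < ε) :
    ∃ ρ > 0, ∀ y q', dist y z ≤ ρ → q' ∈ X → dist y q' = infDist y X → dist q' q ≤ ε := by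
  by_contra hcon
  push_neg at hcon
  have H : ∀ n : ℕ, ∃ y q', dist y z ≤ ((n : ℝ) + 1)⁻¹ ∧ q' ∈ X ∧
      dist y q' = infDist y X ∧ ε < dist q' q := by
    intro n
    obtain ⟨y, q', h1, h2, h3, h4⟩ := hcon (((n : ℝ) + 1)⁻¹) (by positivity)
    exact ⟨y, q', h1, h2, h3, h4⟩
  choose y q' h1 h2 h3 h4 using H
  -- the q' are in a compact set
  have hb : ∀ n, q' n ∈ X ∩ closedBall z (infDist z X + 2) := by
    intro n
    refine ⟨h2 n, ?_⟩
    have hn0 : (0:ℝ) ≤ (n:ℝ) := Nat.cast_nonneg n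
    have hn1 : ((n : ℝ) + 1)⁻¹ ≤ 1 := by
      rw [inv_le_one_iff₀]; right; linarith
    have : dist (q' n) z ≤ dist (y n) (q' n) + dist (y n) z := by
      rw [dist_comm (y n) (q' n)]; exact dist_triangle _ _ _
    have h5 : infDist (y n) X ≤ infDist z X + dist (y n) z :=
      infDist_le_infDist_add_dist
    simp only [mem_closedBall]
    have := h3 n
    nlinarith [h1 n, dist_nonneg (x := y n) (y := z)]
  have hcpt : IsCompact (X ∩ closedBall z (infDist z X + 2)) :=
    (isCompact_closedBall z _).inter_left hXcl
  obtain ⟨a, ha, φ, hφ, hlim⟩ := hcpt.tendsto_subseq hb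
  -- y n → z
  have hy : Filter.Tendsto y Filter.atTop (nhds z) := by
    rw [tendsto_iff_dist_tendsto_zero]
    refine squeeze_zero (fun n => dist_nonneg) h1 ?_
    exact tendsto_one_div_add_atTop_nhds_zero_nat.congr (by intro n; rw [one_div])
  have hyφ : Filter.Tendsto (y ∘ φ) Filter.atTop (nhds z) :=
    hy.comp hφ.tendsto_atTop
  -- dist z a = infDist z X
  have hda : dist z a = infDist z X := by
    have l1 : Filter.Tendsto (fun n => dist (y (φ n)) (q' (φ n))) Filter.atTop
        (nhds (dist z a)) := hyφ.dist hlim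
    have l2 : Filter.Tendsto (fun n => dist (y (φ n)) (q' (φ n))) Filter.atTop
        (nhds (infDist z X)) := by
      have : Filter.Tendsto (fun n => infDist (y (φ n)) X) Filter.atTop
          (nhds (infDist z X)) := ((continuous_infDist_pt X).tendsto z).comp hyφ
      exact this.congr (by intro n; rw [h3 (φ n)])
    exact tendsto_nhds_unique l1 l2
  obtain ⟨w, -, hwu⟩ := hreach z hzτ
  have haq : a = q := by
    rw [hwu a ⟨ha.1, hda⟩, hwu q ⟨hq, hqd⟩]
  have : Filter.Tendsto (fun n => dist (q' (φ n)) q) Filter.atTop (nhds 0) := by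
    have := hlim.dist (tendsto_const_nhds (x := q))
    rwa [haq, dist_self] at this
  have hε' : ε ≤ 0 := ge_of_tendsto this (Filter.Eventually.of_forall fun n => (h4 (φ n)).le)
  linarith

/-- Step lemma: from a point one can move away from `X` along the normal direction,
with distance growing at almost unit rate. -/
lemma step_lemma (X : Set E) (hXcl : IsClosed X) (hXne : X.Nonempty) (τ : ℝ)
    (hreach : ∀ z : E, Metric.infDist z X < τ →
      ∃! p, p ∈ X ∧ dist z p = Metric.infDist z X)
    (z : E) (hm0 : 0 < infDist z X) (hmτ : infDist z X < τ)
    (q : E) (hq : q ∈ X) (hqd : dist z q = infDist z X)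
    (ε : ℝ) (hε : 0 < ε) (hε1 : ε < 1) :
    ∃ h₀ > 0, ∀ h : ℝ, 0 ≤ h → h ≤ h₀ →
      infDist z X + (1 - ε) * h ≤
        infDist (z + h • (((infDist z X)⁻¹ : ℝ) • (z - q))) X := by
  set m := infDist z X with hm
  set ν : E := (m⁻¹ : ℝ) • (z - q) with hν
  have hm' : m ≠ 0 := ne_of_gt hm0
  have hzq : ‖z - q‖ = m := by rw [← dist_eq_norm, hqd]
  have hνn : ‖ν‖ = 1 := by
    rw [hν, norm_smul, hzq, norm_inv, Real.norm_of_nonneg hm0.le, inv_mul_cancel₀ hm']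
  obtain ⟨ρ, hρ0, hρ⟩ := proj_cont X hXcl τ hreach z hmτ q hq hqd (ε * m)
    (by positivity)
  refine ⟨min ρ ((τ - m) / 2), lt_min hρ0 (by linarith), ?_⟩
  intro h hh0 hh1
  set zh : E := z + h • ν with hzh
  have hdzz : dist zh z = h := by
    rw [hzh, dist_eq_norm]
    simp [norm_smul, hνn, abs_of_nonneg hh0]
  have hdzh : infDist zh X < τ := by
    have h5 : infDist zh X ≤ infDist z X + dist zh z := infDist_le_infDist_add_dist
    have h2 : h ≤ (τ - m) / 2 := le_trans hh1 (min_le_right _ _)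
    rw [hdzz, ← hm] at h5; linarith
  obtain ⟨qh, hqh, hqhd⟩ := hXcl.exists_infDist_eq_dist hXne zh
  have hclose : dist qh q ≤ ε * m :=
    hρ zh qh (by rw [hdzz]; exact le_trans hh1 (min_le_left _ _)) hqh hqhd.symm
  have hz' : z - qh = (zh - qh) - h • ν := by rw [hzh]; abel
  have e : dist z qh ^ 2 = dist zh qh ^ 2 - 2 * (h * (inner ℝ (zh - qh) (ν) : ℝ)) + h ^ 2 := by
    rw [dist_eq_norm z qh, dist_eq_norm zh qh, hz', norm_sub_sq_real,
      real_inner_smul_right, norm_smul, Real.norm_of_nonneg hh0, hνn, mul_one]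
  have hle : m ≤ dist z qh := by rw [hm]; exact infDist_le_dist_of_mem hqh
  have key : m ^ 2 ≤ dist zh qh ^ 2 - 2 * (h * (inner ℝ (zh - qh) (ν) : ℝ)) + h ^ 2 := by
    rw [← e]; nlinarith [dist_nonneg (x := z) (y := qh)]
  have hinner : (inner ℝ (zh - qh) (ν) : ℝ) ≥ m + h - ε * m := by
    have hsplit : zh - qh = (z - q) + h • ν + (q - qh) := by rw [hzh]; abel
    have e1 : (inner ℝ (z - q) (ν) : ℝ) = m := by
      rw [hν, real_inner_smul_right, real_inner_self_eq_norm_sq, hzq]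
      field_simp
    have e2 : (inner ℝ (h • ν) (ν) : ℝ) = h := by
      rw [real_inner_smul_left, real_inner_self_eq_norm_sq, hνn]; ring
    have e3 : |(inner ℝ (q - qh) (ν) : ℝ)| ≤ ε * m := by
      calc |(inner ℝ (q - qh) (ν) : ℝ)| ≤ ‖q - qh‖ * ‖ν‖ := abs_real_inner_le_norm _ _
        _ = dist qh q := by rw [hνn, mul_one, ← dist_eq_norm, dist_comm]
        _ ≤ ε * m := hclose
    have e4 : (inner ℝ (zh - qh) (ν) : ℝ) = m + h + (inner ℝ (q - qh) (ν) : ℝ) := by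
      rw [hsplit, inner_add_left, inner_add_left, e1, e2]
    rw [e4]
    linarith [(abs_le.mp e3).1]
  have hq2 : (m + (1 - ε) * h) ^ 2 ≤ dist zh qh ^ 2 := by
    nlinarith [mul_le_mul_of_nonneg_left hinner.le hh0, sq_nonneg h, mul_nonneg hh0 hε.le,
      mul_nonneg (mul_nonneg hh0 hh0) hε.le]
  have h1 : 0 ≤ m + (1 - ε) * h := by nlinarith
  have hfin : m + (1 - ε) * h ≤ dist zh qh := by
    nlinarith [dist_nonneg (x := zh) (y := qh), hq2, h1,
      sq_nonneg (dist zh qh - (m + (1 - ε) * h))]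
  rw [hqhd]; exact hfin

/-- One can escape to distance `b < τ` from `X`, travelling barely more than
`b - infDist u X`. -/
lemma escape (X : Set E) (hXcl : IsClosed X) (hXne : X.Nonempty) (τ : ℝ)
    (hreach : ∀ z : E, Metric.infDist z X < τ →
      ∃! p, p ∈ X ∧ dist z p = Metric.infDist z X)
    (u : E) (hδ0 : 0 < infDist u X) (b S : ℝ) (hb : infDist u X < b) (hbτ : b < τ)
    (hS : b - infDist u X < S) :
    ∃ y : E, dist y u ≤ S ∧ b ≤ infDist y X := by
  set δ := infDist u X with hδ
  have hS0 : 0 < S := by linarith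
  set c : ℝ := (b - δ) / S with hc
  have hc0 : 0 < c := div_pos (by linarith) hS0
  have hc1 : c < 1 := by rw [hc, div_lt_one hS0]; linarith
  have hcS : δ + c * S = b := by rw [hc]; field_simp; ring
  set G : Set ℝ := {s | s ∈ Set.Icc (0 : ℝ) S ∧
    ∃ y : E, dist y u ≤ s ∧ δ + c * s ≤ min b (infDist y X)} with hG
  have h0G : (0 : ℝ) ∈ G := by
    refine ⟨⟨le_refl _, hS0.le⟩, u, by simp, ?_⟩
    simp only [mul_zero, add_zero]
    exact le_min (by linarith) (by rw [← hδ])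
  have hbdd : BddAbove G := ⟨S, fun s hs => hs.1.2⟩
  have hclosed : IsClosed G := by
    apply IsSeqClosed.isClosed
    intro sn s hmem hlim
    choose yy hy1 hy2 using fun n => (hmem n).2
    have hyball : ∀ n, yy n ∈ closedBall u S := by
      intro n
      simp only [mem_closedBall]
      exact le_trans (hy1 n) (hmem n).1.2
    obtain ⟨ybar, hybarmem, φ, hφ, hylim⟩ := (isCompact_closedBall u S).tendsto_subseq hyball
    have hsφ : Filter.Tendsto (fun n => sn (φ n)) Filter.atTop (nhds s) :=
      hlim.comp hφ.tendsto_atTop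
    refine ⟨isClosed_Icc.mem_of_tendsto hlim
      (Filter.Eventually.of_forall fun n => (hmem n).1), ybar, ?_, ?_⟩
    · exact le_of_tendsto_of_tendsto' (hylim.dist tendsto_const_nhds) hsφ
        (fun n => hy1 (φ n))
    · have l1 : Filter.Tendsto (fun n => δ + c * sn (φ n)) Filter.atTop
        (nhds (δ + c * s)) := by
        exact (tendsto_const_nhds.add (tendsto_const_nhds.mul hsφ))
      have l2 : Filter.Tendsto (fun n => min b (infDist (yy (φ n)) X)) Filter.atTop
          (nhds (min b (infDist ybar X))) :=
        (tendsto_const_nhds.min (((continuous_infDist_pt X).tendsto ybar).comp hylim))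
      exact le_of_tendsto_of_tendsto' l1 l2 (fun n => hy2 (φ n))
  set sbar := sSup G with hsbar
  have hmem : sbar ∈ G := hclosed.csSup_mem ⟨0, h0G⟩ hbdd
  obtain ⟨⟨hsbar0, hsbarS⟩, y, hy1, hy2⟩ := hmem
  by_cases hcase : b ≤ infDist y X
  · exact ⟨y, le_trans hy1 hsbarS, hcase⟩
  push_neg at hcase
  exfalso
  have hyd0 : 0 < infDist y X := by
    have := le_trans hy2 (min_le_right _ _)
    nlinarith
  have hydb : δ + c * sbar ≤ infDist y X := le_trans hy2 (min_le_right _ _)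
  have hsbarS' : sbar < S := by
    rcases lt_or_eq_of_le hsbarS with h | h
    · exact h
    · exfalso; rw [h] at hy2; rw [hcS] at hy2
      exact absurd (le_trans hy2 (min_le_right _ _)) (not_le.mpr hcase)
  obtain ⟨qy, hqy, hqyd⟩ := hXcl.exists_infDist_eq_dist hXne y
  obtain ⟨h₀, hh₀, hstep⟩ := step_lemma X hXcl hXne τ hreach y hyd0
    (lt_trans hcase hbτ) qy hqy hqyd.symm (1 - c) (by linarith) (by linarith)
  set h : ℝ := min h₀ (S - sbar) with hh
  have hhpos : 0 < h := lt_min hh₀ (by linarith)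
  have hkey := hstep h hhpos.le (min_le_left _ _)
  rw [show (1 : ℝ) - (1 - c) = c by ring] at hkey
  set ν : E := (infDist y X)⁻¹ • (y - qy) with hν
  have hνn : ‖ν‖ = 1 := by
    rw [hν, norm_smul, norm_inv, Real.norm_of_nonneg hyd0.le, ← dist_eq_norm, ← hqyd,
      inv_mul_cancel₀ (ne_of_gt hyd0)]
  have hGmem : sbar + h ∈ G := by
    refine ⟨⟨by linarith, by linarith [min_le_right h₀ (S - sbar)]⟩, y + h • ν, ?_, ?_⟩
    · have : dist (y + h • ν) y = h := by
        rw [dist_eq_norm]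
        simp [norm_smul, hνn, abs_of_nonneg hhpos.le]
      calc dist (y + h • ν) u ≤ dist (y + h • ν) y + dist y u := dist_triangle _ _ _
        _ ≤ h + sbar := by rw [this]; linarith
        _ = sbar + h := by ring
    · refine le_min ?_ ?_
      · have : sbar + h ≤ S := by linarith [min_le_right h₀ (S - sbar)]
        nlinarith
      · calc δ + c * (sbar + h) = (δ + c * sbar) + c * h := by ring
          _ ≤ infDist y X + c * h := by linarith
          _ ≤ infDist (y + h • ν) X := hkey
  have : sbar + h ≤ sbar := le_csSup hbdd hGmem
  linarith

set_option maxHeartbeats 1000000 in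
/-- Rolling ball: any point of `X` is at distance at least `b` from the point at
parameter `b` on the normal ray through `u`. -/
lemma rolling (X : Set E) (hXcl : IsClosed X) (hXne : X.Nonempty) (τ : ℝ)
    (hreach : ∀ z : E, Metric.infDist z X < τ →
      ∃! p, p ∈ X ∧ dist z p = Metric.infDist z X)
    (u p : E) (hδ0 : 0 < infDist u X) (hp : p ∈ X) (hpd : dist u p = infDist u X)
    (b : ℝ) (hbδ : infDist u X < b) (hbτ : b < τ) (q : E) (hq : q ∈ X) :
    b ≤ dist (u + (b - infDist u X) • ((infDist u X)⁻¹ • (u - p))) q := by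
  set δ := infDist u X with hδ
  set v : E := (δ⁻¹ : ℝ) • (u - p) with hv
  set β : ℝ := b - δ with hβ
  set cpt : E := u + β • v with hcpt
  have hδ0' : 0 < δ := hδ0
  have hbδ' : δ < b := hbδ
  clear_value δ v β cpt
  have hβ0 : 0 < β := by rw [hβ]; linarith
  have hb0 : 0 < b := by linarith
  have hup : ‖u - p‖ = δ := by rw [← dist_eq_norm, hpd]
  have hvn : ‖v‖ = 1 := by
    rw [hv, norm_smul, norm_inv, Real.norm_of_nonneg hδ0.le, hup,
      inv_mul_cancel₀ (ne_of_gt hδ0)]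
  have hδv : (δ : ℝ) • v = u - p := by
    rw [hv, smul_smul, mul_inv_cancel₀ (ne_of_gt hδ0), one_smul]
  apply le_of_forall_pos_le_add
  intro η hη
  set ζ : ℝ := min β (δ * η ^ 2 / (3 * b * β + 1)) with hζ
  have hζ0 : 0 < ζ := by
    apply lt_min hβ0
    positivity
  have hζβ : ζ ≤ β := min_le_left _ _
  have hζη : ζ ≤ δ * η ^ 2 / (3 * b * β + 1) := min_le_right _ _
  have hζ' : 0 < ζ := hζ0
  clear_value ζ
  obtain ⟨y, hyS, hyb⟩ := escape X hXcl hXne τ hreach u (hδ ▸ hδ0') b (β + ζ)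
    (hδ ▸ hbδ') hbτ (by rw [← hδ, ← hβ]; linarith)

  set A := dist y u with hA
  set w : ℝ := inner ℝ (y - u) v with hw
  clear_value A w
  have hA0 : 0 ≤ A := by rw [hA]; exact dist_nonneg
  have hbyp : b ≤ dist y p := le_trans hyb (infDist_le_dist_of_mem hp)
  have hyp2 : dist y p ^ 2 = A ^ 2 + 2 * (δ * w) + δ ^ 2 := by
    have : y - p = (y - u) + δ • v := by rw [hδv]; abel
    rw [dist_eq_norm, this, norm_add_sq_real, real_inner_smul_right, norm_smul,
      Real.norm_of_nonneg hδ0.le, hvn, mul_one, hA, dist_eq_norm, ← hw]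
  have hyc2 : dist y cpt ^ 2 = A ^ 2 - 2 * (β * w) + β ^ 2 := by
    have : y - cpt = (y - u) - β • v := by rw [hcpt]; abel
    rw [dist_eq_norm, this, norm_sub_sq_real, real_inner_smul_right, norm_smul,
      Real.norm_of_nonneg hβ0.le, hvn, mul_one, hA, dist_eq_norm, ← hw]
  -- bound dist y cpt ≤ η
  have hEη : dist y cpt ≤ η := by
    have h1 : b ^ 2 ≤ A ^ 2 + 2 * (δ * w) + δ ^ 2 := by
      rw [← hyp2]; nlinarith [hbyp]
    have h2 : δ * dist y cpt ^ 2 ≤ (β + δ) * (A ^ 2 - β ^ 2) := by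
      rw [hyc2]
      have hbb : b = β + δ := by rw [hβ]; ring
      rw [hbb] at h1
      nlinarith [mul_le_mul_of_nonneg_left h1 hβ0.le]
    have h3 : A ^ 2 - β ^ 2 ≤ ζ * (2 * β + ζ) := by
      nlinarith [hyS, hA0]
    have h4 : δ * dist y cpt ^ 2 ≤ δ * η ^ 2 := by
      have hbb : β + δ = b := by rw [hβ]; ring
      have h3' : A ^ 2 - β ^ 2 ≤ ζ * (3 * β) := by nlinarith [hζβ, hζ0.le]
      have l1 : (β + δ) * (A ^ 2 - β ^ 2) ≤ b * (ζ * (3 * β)) := by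
        rw [hbb]
        exact mul_le_mul_of_nonneg_left h3' hb0.le
      have l2 : b * (ζ * (3 * β)) ≤ δ * η ^ 2 := by
        have h5 := hζη
        rw [le_div_iff₀ (by nlinarith)] at h5
        nlinarith [hζ0.le]
      linarith
    nlinarith [dist_nonneg (x := y) (y := cpt), hη, h4, hδ0, mul_pos hδ0 hη,
      mul_nonneg hδ0.le (sq_nonneg (dist y cpt - η))]
  calc b ≤ infDist y X := hyb
    _ ≤ dist y q := infDist_le_dist_of_mem hq
    _ ≤ dist y cpt + dist cpt q := dist_triangle _ _ _
    _ ≤ dist cpt q + η := by linarith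

set_option maxHeartbeats 1000000 in
/-- Ambient Čech to restricted Čech interleaving on a positive reach set:
if the ambient balls of radii `r_i ≤ τ − d_X(x_i)` have a common point `u`, then the
projection of `u` to `X` lies in the restricted balls of radii
`√(2 r_i² + d_X(x_i)(2τ − d_X(x_i)))`. -/
theorem stmt5 (d k : ℕ) (X : Set (EuclideanSpace ℝ (Fin d))) (hXne : X.Nonempty)
    (hXcl : IsClosed X) (τ : ℝ) (hτ : 0 < τ)
    (hreach : ∀ z : EuclideanSpace ℝ (Fin d), Metric.infDist z X < τ →
      ∃! p, p ∈ X ∧ dist z p = Metric.infDist z X)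
    (x : Fin (k + 1) → EuclideanSpace ℝ (Fin d)) (r : Fin (k + 1) → ℝ)
    (hr : ∀ i, 0 < r i) (hrτ : ∀ i, r i ≤ τ - Metric.infDist (x i) X)
    (u : EuclideanSpace ℝ (Fin d)) (hu : ∀ i, dist u (x i) < r i) :
    (∃! p, p ∈ X ∧ dist u p = Metric.infDist u X) ∧
    ∀ p, p ∈ X → dist u p = Metric.infDist u X →
      ∀ i, dist (x i) p < Real.sqrt (2 * r i ^ 2 +
        Metric.infDist (x i) X * (2 * τ - Metric.infDist (x i) X)) := by
  have hδτ : Metric.infDist u X < τ := by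
    have h1 : Metric.infDist u X ≤ Metric.infDist (x 0) X + dist u (x 0) :=
      Metric.infDist_le_infDist_add_dist
    have h2 := hu 0
    have h3 := hrτ 0
    linarith
  refine ⟨hreach u hδτ, ?_⟩
  intro p hp hpd i
  have hΔ0 : 0 ≤ Metric.infDist (x i) X := Metric.infDist_nonneg
  have hΔτ : Metric.infDist (x i) X ≤ τ - r i := by linarith [hrτ i]
  have hai : dist u (x i) < r i := hu i
  have hri : 0 < r i := hr i
  set Δ : ℝ := Metric.infDist (x i) X with hΔ
  set a : ℝ := dist (x i) u with ha
  have ha' : a = dist u (x i) := dist_comm _ _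
  have ha0 : 0 ≤ a := dist_nonneg
  have har : a < r i := by rw [ha']; exact hai
  have hpos : 0 < 2 * r i ^ 2 + Δ * (2 * τ - Δ) := by nlinarith
  rw [show (2 : ℝ) * r i ^ 2 + Δ * (2 * τ - Δ) =
    2 * r i ^ 2 + Δ * (2 * τ - Δ) from rfl]
  rw [Real.lt_sqrt dist_nonneg]
  -- it suffices to bound the square
  rcases eq_or_lt_of_le (Metric.infDist_nonneg (x := u) (s := X)) with hδ0 | hδ0
  · -- δ = 0 : p = u
    have : dist u p = 0 := by rw [hpd, ← hδ0]
    have hup : p = u := by rw [dist_eq_zero] at this; exact this.symm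
    rw [hup, ← ha]
    nlinarith
  · -- main case
    obtain ⟨qt, hqt, hqtd⟩ := hXcl.exists_infDist_eq_dist hXne (x i)
    set δ : ℝ := Metric.infDist u X with hδu
    set b : ℝ := (max δ (Δ + a) + τ) / 2 with hb
    have hmaxτ : max δ (Δ + a) < τ := by
      rw [max_lt_iff]
      constructor
      · exact hδτ
      · linarith
    have hbτ : b < τ := by rw [hb]; linarith [le_max_left δ (Δ + a), hmaxτ]
    have hbδ : δ < b := by
      have := le_max_left δ (Δ + a)
      rw [hb]; linarith [hmaxτ]
    have hbA : Δ + a < b := by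
      have := le_max_right δ (Δ + a)
      rw [hb]; linarith [hmaxτ]
    have hb0 : 0 < b := by linarith
    have hroll := rolling X hXcl hXne τ hreach u p hδ0 hp hpd b hbδ hbτ qt hqt
    set v : EuclideanSpace ℝ (Fin d) := (δ⁻¹ : ℝ) • (u - p) with hv
    set cpt : EuclideanSpace ℝ (Fin d) := u + (b - δ) • v with hcpt
    have h5 : b - Δ ≤ dist (x i) cpt := by
      have t1 : dist cpt qt ≤ dist cpt (x i) + dist (x i) qt := dist_triangle _ _ _
      have t2 : dist (x i) qt = Δ := hqtd.symm
      have t3 : dist cpt (x i) = dist (x i) cpt := dist_comm _ _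
      linarith [hroll]
    -- inner product identities
    have hup : ‖u - p‖ = δ := by rw [← dist_eq_norm, hpd]
    have hvn : ‖v‖ = 1 := by
      rw [hv, norm_smul, norm_inv, Real.norm_of_nonneg hδ0.le, hup,
        inv_mul_cancel₀ (ne_of_gt hδ0)]
    have hδv : (δ : ℝ) • v = u - p := by
      rw [hv, smul_smul, mul_inv_cancel₀ (ne_of_gt hδ0), one_smul]
    set w : ℝ := inner ℝ (x i - u) v with hw
    have exp1 : dist (x i) cpt ^ 2 = a ^ 2 - 2 * ((b - δ) * w) + (b - δ) ^ 2 := by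
      have : x i - cpt = (x i - u) - (b - δ) • v := by rw [hcpt]; abel
      rw [dist_eq_norm, this, norm_sub_sq_real, real_inner_smul_right, norm_smul,
        Real.norm_of_nonneg (by linarith : (0:ℝ) ≤ b - δ), hvn, mul_one, ha,
        dist_eq_norm, ← hw]
    have exp2 : dist (x i) p ^ 2 = a ^ 2 + 2 * (δ * w) + δ ^ 2 := by
      have : x i - p = (x i - u) + δ • v := by rw [hδv]; abel
      rw [dist_eq_norm, this, norm_add_sq_real, real_inner_smul_right, norm_smul,
        Real.norm_of_nonneg hδ0.le, hvn, mul_one, ha, dist_eq_norm, ← hw]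
    have h6 : (b - Δ) ^ 2 ≤ a ^ 2 - 2 * ((b - δ) * w) + (b - δ) ^ 2 := by
      rw [← exp1]
      have hbΔ : 0 ≤ b - Δ := by linarith
      nlinarith [h5]
    have hM : 0 ≤ a ^ 2 + 2 * b * Δ - Δ ^ 2 := by nlinarith
    have hBA : 0 ≤ (b - Δ) ^ 2 - a ^ 2 := by nlinarith
    have hβ0 : (0:ℝ) < b - δ := by linarith
    have hR : δ * (a ^ 2 + (b - δ) ^ 2 - (b - Δ) ^ 2) ≤
        (b - δ) * (a ^ 2 - δ ^ 2 + Δ * (2 * b - Δ)) := by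
      nlinarith [sq_nonneg (b * δ - (a ^ 2 + 2 * b * Δ - Δ ^ 2)), mul_nonneg hM hBA, hb0]
    have h7 : 2 * ((b - δ) * (δ * w)) ≤ δ * (a ^ 2 + (b - δ) ^ 2 - (b - Δ) ^ 2) := by
      nlinarith [mul_le_mul_of_nonneg_left h6 hδ0.le]
    have key : dist (x i) p ^ 2 ≤ 2 * a ^ 2 + Δ * (2 * b - Δ) := by
      rw [exp2]
      nlinarith [h7, hR, hβ0]
    nlinarith [key]
end
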